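/- arXiv:2402.15872 — 13 statements merged into one kernel-verified Lean document; each statement's English description precedes it below -/
import Mathlib

section
/- Proposition 3.1(ii): A two-signal scheme preserves ε-differential privacy (i.e., (ε,0)-differential privacy) if and only if the posterior q_s of each signal s ∈ {s₁,s₂} lies in the closed interval [μ/(e^ε − e^ε μ + μ), μ/(e^{−ε} − e^{−ε} μ + μ)]. -/
/-- The posterior probability of state `θ = 1` induced by signal `s` in a two-signal
scheme `π`, where `π s θ` is the probability of sending signal `s` in state `θ`,
and `μ` is the prior probability of state `1`. -/
noncomputable def posterior (μ : ℝ) (π : Fin 2 → Fin 2 → ℝ) (s : Fin 2) : ℝ :=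
  μ * π s 1 / (μ * π s 1 + (1 - μ) * π s 0)

/-- `(ε,δ)`-differential privacy for a two-signal scheme: for every subset `W` of the
signals and both ordered pairs of distinct states,
`∑_{s∈W} π(s|θ) ≤ e^ε ∑_{s∈W} π(s|θ') + δ`. -/
def TwoSignalDP (π : Fin 2 → Fin 2 → ℝ) (ε δ : ℝ) : Prop :=
  ∀ W : Finset (Fin 2), ∀ θ θ' : Fin 2, θ ≠ θ' →
    (∑ s ∈ W, π s θ) ≤ Real.exp ε * (∑ s ∈ W, π s θ') + δ

/-- Proposition 3.1(ii): a two-signal scheme preserves `ε`-differential privacy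
(i.e. `(ε,0)`-differential privacy) iff the posterior of each signal lies in
`[μ/(e^ε − e^ε μ + μ), μ/(e^{−ε} − e^{−ε} μ + μ)]`. -/
theorem stmt0 (μ ε : ℝ) (hμ : μ ∈ Set.Ioo (0 : ℝ) 1) (hε : 0 ≤ ε)
    (π : Fin 2 → Fin 2 → ℝ)
    (hrange : ∀ s θ, 0 ≤ π s θ ∧ π s θ ≤ 1)
    (hsum : ∀ θ, π 0 θ + π 1 θ = 1)
    (hpos : ∀ s, 0 < μ * π s 1 + (1 - μ) * π s 0) :
    TwoSignalDP π ε 0 ↔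
      ∀ s : Fin 2, posterior μ π s ∈
        Set.Icc (μ / (Real.exp ε - Real.exp ε * μ + μ))
                (μ / (Real.exp (-ε) - Real.exp (-ε) * μ + μ)) := by
  obtain ⟨hμ0, hμ1⟩ := hμ
  have hE : (1:ℝ) ≤ Real.exp ε := Real.one_le_exp hε
  have hE' : 0 < Real.exp (-ε) := Real.exp_pos _
  have hEE' : Real.exp ε * Real.exp (-ε) = 1 := by
    rw [← Real.exp_add]; simp
  have hd1 : 0 < Real.exp ε - Real.exp ε * μ + μ := by nlinarith
  have hd2 : 0 < Real.exp (-ε) - Real.exp (-ε) * μ + μ := by nlinarith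
  constructor
  · intro hDP s
    have h1 : π s 0 ≤ Real.exp ε * π s 1 := by
      have := hDP {s} 0 1 (by decide)
      simpa using this
    have h2 : π s 1 ≤ Real.exp ε * π s 0 := by
      have := hDP {s} 1 0 (by decide)
      simpa using this
    have hps := hpos s
    constructor
    · rw [posterior, div_le_div_iff₀ hd1 (hpos s)]
      nlinarith [mul_le_mul_of_nonneg_left h1 (le_of_lt hμ0)]
    · rw [posterior, div_le_div_iff₀ (hpos s) hd2]
      have h2' : Real.exp (-ε) * π s 1 ≤ π s 0 := by
        have hm := mul_le_mul_of_nonneg_left h2 (le_of_lt hE')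
        have heq : Real.exp (-ε) * (Real.exp ε * π s 0) = π s 0 := by
          rw [← mul_assoc, mul_comm (Real.exp (-ε)) (Real.exp ε), hEE', one_mul]
        linarith [heq ▸ hm]
      nlinarith [mul_le_mul_of_nonneg_left h2' (le_of_lt hμ0)]
  · intro h W θ θ' hne
    have key : ∀ s : Fin 2, π s 0 ≤ Real.exp ε * π s 1 ∧ π s 1 ≤ Real.exp ε * π s 0 := by
      intro s
      obtain ⟨hl, hu⟩ := h s
      rw [posterior, div_le_div_iff₀ hd1 (hpos s)] at hl
      rw [posterior, div_le_div_iff₀ (hpos s) hd2] at hu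
      have hmm : 0 < μ * (1 - μ) := by nlinarith
      constructor
      · have h0 : (μ * (1 - μ)) * π s 0 ≤ (μ * (1 - μ)) * (Real.exp ε * π s 1) := by
          nlinarith
        exact le_of_mul_le_mul_left h0 hmm
      · have h0 : (μ * (1 - μ)) * (Real.exp (-ε) * π s 1) ≤ (μ * (1 - μ)) * π s 0 := by
          nlinarith
        have h3 : Real.exp (-ε) * π s 1 ≤ π s 0 := le_of_mul_le_mul_left h0 hmm
        calc π s 1 = Real.exp ε * (Real.exp (-ε) * π s 1) := by
              rw [← mul_assoc, hEE', one_mul]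
          _ ≤ Real.exp ε * π s 0 :=
              mul_le_mul_of_nonneg_left h3 (le_of_lt (Real.exp_pos ε))
    have hWsum : ∀ f : Fin 2 → ℝ, ∑ s ∈ W, f s =
        (if (0:Fin 2) ∈ W then f 0 else 0) + (if (1:Fin 2) ∈ W then f 1 else 0) := by
      intro f
      rw [show (∑ s ∈ W, f s) = ∑ s ∈ Finset.univ ∩ W, f s by rw [Finset.univ_inter],
        ← Finset.sum_ite_mem, Fin.sum_univ_two]
    rw [hWsum, hWsum]
    have hcases : (θ = 0 ∧ θ' = 1) ∨ (θ = 1 ∧ θ' = 0) := by omega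
    have hfull : ∀ b : Fin 2, Real.exp ε * (π 0 b + π 1 b) = Real.exp ε := by
      intro b; rw [hsum b, mul_one]
    rcases hcases with ⟨h1, h2⟩ | ⟨h1, h2⟩ <;> subst h1 <;> subst h2 <;>
      split_ifs <;>
      first
        | (have := hsum 0; have := hsum 1; nlinarith [hfull 0, hfull 1])
        | (nlinarith [(key 0).1, (key 0).2])
        | (nlinarith [(key 1).1, (key 1).2])
        | (nlinarith [Real.exp_pos ε])
end

section
/- Proposition 3.1(iii): Let ε ≥ 0 and δ > 0, and label the two posteriors of a two-signal scheme so that q_{s₁} ≤ q_{s₂}. The scheme preserves (ε,δ)-differential privacy if and only if 0 ≤ q_{s₁} ≤ μ ≤ q_{s₂} ≤ 1, q_{s₁}(C₁ q_{s₂} − C₂) ≥ C₃ q_{s₂} − μ², and q_{s₁}(C₄ q_{s₂} − C₅) ≥ C₆ q_{s₂} − e^ε μ², where C₁ = e^ε − μe^ε + μ, C₂ = μ(e^ε − μe^ε + μ) + δμ(1−μ), C₃ = μ − δμ(1−μ), C₄ = 1 − μ + e^ε μ, C₅ = e^ε μ + δμ(1−μ), and C₆ = μ(1 − μ + e^ε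 μ) − δμ(1−μ). -/
lemma key_aux1 (μ E δ a b : ℝ) (hD0 : μ * a + (1 - μ) * b ≠ 0)
    (hD1 : μ * (1 - a) + (1 - μ) * (1 - b) ≠ 0) :
    (μ * a / (μ * a + (1 - μ) * b) *
      ((E - μ * E + μ) * (μ * (1 - a) / (μ * (1 - a) + (1 - μ) * (1 - b))) -
        (μ * (E - μ * E + μ) + δ * μ * (1 - μ))) -
      ((μ - δ * μ * (1 - μ)) * (μ * (1 - a) / (μ * (1 - a) + (1 - μ) * (1 - b))) - μ ^ 2)) *
      ((μ * a + (1 - μ) * b) * (μ * (1 - a) + (1 - μ) * (1 - b))) =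
      μ ^ 2 * (1 - μ) ^ 2 * (b - a) * (E * a + δ - b) := by
  field_simp
  ring

lemma key_aux2 (μ E δ a b : ℝ) (hD0 : μ * a + (1 - μ) * b ≠ 0)
    (hD1 : μ * (1 - a) + (1 - μ) * (1 - b) ≠ 0) :
    (μ * a / (μ * a + (1 - μ) * b) *
      ((1 - μ + E * μ) * (μ * (1 - a) / (μ * (1 - a) + (1 - μ) * (1 - b))) -
        (E * μ + δ * μ * (1 - μ))) -
      ((μ * (1 - μ + E * μ) - δ * μ * (1 - μ)) *
        (μ * (1 - a) / (μ * (1 - a) + (1 - μ) * (1 - b))) - E * μ ^ 2)) *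
      ((μ * a + (1 - μ) * b) * (μ * (1 - a) + (1 - μ) * (1 - b))) =
      μ ^ 2 * (1 - μ) ^ 2 * (b - a) * (E * (1 - b) + δ - (1 - a)) := by
  field_simp
  ring


set_option maxHeartbeats 4000000

/-- Proposition 3.1(iii): with the posteriors labelled so that `q_{s₁} ≤ q_{s₂}`
(signal `0` plays the role of `s₁` and signal `1` that of `s₂`), the two-signal scheme
preserves `(ε,δ)`-differential privacy iff
`0 ≤ q_{s₁} ≤ μ ≤ q_{s₂} ≤ 1`, `q_{s₁}(C₁ q_{s₂} − C₂) ≥ C₃ q_{s₂} − μ²` and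
`q_{s₁}(C₄ q_{s₂} − C₅) ≥ C₆ q_{s₂} − e^ε μ²`, where
`C₁ = e^ε − μe^ε + μ`, `C₂ = μ(e^ε − μe^ε + μ) + δμ(1−μ)`, `C₃ = μ − δμ(1−μ)`,
`C₄ = 1 − μ + e^ε μ`, `C₅ = e^ε μ + δμ(1−μ)`, `C₆ = μ(1 − μ + e^ε μ) − δμ(1−μ)`. -/
theorem stmt1 (μ ε δ : ℝ) (hμ : μ ∈ Set.Ioo (0 : ℝ) 1) (hε : 0 ≤ ε) (hδ : 0 < δ)
    (π : Fin 2 → Fin 2 → ℝ)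
    (hrange : ∀ s θ, 0 ≤ π s θ ∧ π s θ ≤ 1)
    (hsum : ∀ θ, π 0 θ + π 1 θ = 1)
    (hpos : ∀ s, 0 < μ * π s 1 + (1 - μ) * π s 0)
    (hle : posterior μ π 0 ≤ posterior μ π 1) :
    TwoSignalDP π ε δ ↔
      (0 ≤ posterior μ π 0 ∧ posterior μ π 0 ≤ μ ∧
        μ ≤ posterior μ π 1 ∧ posterior μ π 1 ≤ 1 ∧
        posterior μ π 0 *
            ((Real.exp ε - μ * Real.exp ε + μ) * posterior μ π 1 -
              (μ * (Real.exp ε - μ * Real.exp ε + μ) + δ * μ * (1 - μ))) ≥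
          (μ - δ * μ * (1 - μ)) * posterior μ π 1 - μ ^ 2 ∧
        posterior μ π 0 *
            ((1 - μ + Real.exp ε * μ) * posterior μ π 1 -
              (Real.exp ε * μ + δ * μ * (1 - μ))) ≥
          (μ * (1 - μ + Real.exp ε * μ) - δ * μ * (1 - μ)) * posterior μ π 1 -
            Real.exp ε * μ ^ 2) := by
  obtain ⟨hμ0, hμ1⟩ := hμ
  set E := Real.exp ε with hE
  have hE1 : (1:ℝ) ≤ E := by
    rw [hE]
    calc (1:ℝ) = Real.exp 0 := (Real.exp_zero).symm
      _ ≤ Real.exp ε := Real.exp_le_exp.mpr hε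
  set a := π 0 1 with ha
  set b := π 0 0 with hb
  have h11 : π 1 1 = 1 - a := by have := hsum 1; linarith
  have h10 : π 1 0 = 1 - b := by have := hsum 0; linarith
  have ha0 : 0 ≤ a := (hrange 0 1).1
  have ha1 : a ≤ 1 := (hrange 0 1).2
  have hb0 : 0 ≤ b := (hrange 0 0).1
  have hb1 : b ≤ 1 := (hrange 0 0).2
  have hD0 : 0 < μ * a + (1 - μ) * b := hpos 0
  have hD1 : 0 < μ * (1 - a) + (1 - μ) * (1 - b) := by
    have := hpos 1; rwa [h11, h10] at this
  have hq0 : posterior μ π 0 = μ * a / (μ * a + (1 - μ) * b) := rfl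
  have hq1 : posterior μ π 1 = μ * (1 - a) / (μ * (1 - a) + (1 - μ) * (1 - b)) := by
    simp only [posterior, h11, h10]
  have hmm : (0:ℝ) < μ * (1 - μ) := mul_pos hμ0 (by linarith)
  have hab : a ≤ b := by
    by_contra h
    push_neg at h
    rw [hq0, hq1, div_le_div_iff₀ hD0 hD1] at hle
    nlinarith [mul_pos hmm (sub_pos.mpr h)]
  have hq0nn : 0 ≤ posterior μ π 0 := by
    rw [hq0]; positivity
  have hq0le : posterior μ π 0 ≤ μ := by
    rw [hq0, div_le_iff₀ hD0]
    nlinarith [mul_nonneg hmm.le (sub_nonneg.mpr hab)]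
  have hq1ge : μ ≤ posterior μ π 1 := by
    rw [hq1, le_div_iff₀ hD1]
    nlinarith [mul_nonneg hmm.le (sub_nonneg.mpr hab)]
  have hq1le : posterior μ π 1 ≤ 1 := by
    rw [hq1, div_le_one hD1]
    nlinarith [mul_nonneg (show (0:ℝ) ≤ 1 - μ by linarith) (show (0:ℝ) ≤ 1 - b by linarith)]
  have key1 := key_aux1 μ E δ a b hD0.ne' hD1.ne'
  have key2 := key_aux2 μ E δ a b hD0.ne' hD1.ne'
  rw [← hq0, ← hq1] at key1 key2
  have hDD : 0 < (μ * a + (1 - μ) * b) * (μ * (1 - a) + (1 - μ) * (1 - b)) :=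
    mul_pos hD0 hD1
  have hc : (0:ℝ) < μ ^ 2 * (1 - μ) ^ 2 :=
    mul_pos (pow_pos hμ0 2) (pow_pos (by linarith) 2)
  constructor
  · intro hDP
    have h1 : b ≤ E * a + δ := by
      have := hDP {0} 0 1 (by decide)
      simpa [ha, hb] using this
    have h2 : 1 - a ≤ E * (1 - b) + δ := by
      have := hDP {1} 1 0 (by decide)
      simpa [h11, h10] using this
    clear hDP hle hrange hsum hpos
    have hEab : (0:ℝ) ≤ E * a + δ - b := by linarith
    have hEba : (0:ℝ) ≤ E * (1 - b) + δ - (1 - a) := by linarith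
    refine ⟨hq0nn, hq0le, hq1ge, hq1le, ?_, ?_⟩
    · rw [ge_iff_le, ← sub_nonneg, (eq_div_iff hDD.ne').mpr key1]
      exact div_nonneg (mul_nonneg (mul_nonneg hc.le (sub_nonneg.mpr hab)) hEab) hDD.le
    · rw [ge_iff_le, ← sub_nonneg, (eq_div_iff hDD.ne').mpr key2]
      exact div_nonneg (mul_nonneg (mul_nonneg hc.le (sub_nonneg.mpr hab)) hEba) hDD.le
  · rintro ⟨-, -, -, -, hI1, hI2⟩
    have hP1 : 0 ≤ μ ^ 2 * (1 - μ) ^ 2 * (b - a) * (E * a + δ - b) := by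
      rw [← key1]; exact mul_nonneg (sub_nonneg.mpr hI1) hDD.le
    have hP2 : 0 ≤ μ ^ 2 * (1 - μ) ^ 2 * (b - a) * (E * (1 - b) + δ - (1 - a)) := by
      rw [← key2]; exact mul_nonneg (sub_nonneg.mpr hI2) hDD.le
    clear key1 key2 hI1 hI2 hle hrange hsum hpos
    have h1 : b ≤ E * a + δ := by
      rcases eq_or_lt_of_le hab with h | h
      · nlinarith
      · nlinarith [hP1, mul_pos hc (sub_pos.mpr h)]
    have h2 : 1 - a ≤ E * (1 - b) + δ := by
      rcases eq_or_lt_of_le hab with h | h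
      · nlinarith
      · nlinarith [hP2, mul_pos hc (sub_pos.mpr h)]
    have h3 : a ≤ E * b + δ := by nlinarith
    have h4 : 1 - b ≤ E * (1 - a) + δ := by nlinarith
    intro W θ θ' hne
    have hW : W = ∅ ∨ W = {0} ∨ W = {1} ∨ W = {0, 1} := by
      fin_cases W <;> decide
    have hθ : (θ = 0 ∧ θ' = 1) ∨ (θ = 1 ∧ θ' = 0) := by
      fin_cases θ <;> fin_cases θ' <;> simp_all
    rcases hW with rfl | rfl | rfl | rfl <;>
      rcases hθ with ⟨rfl, rfl⟩ | ⟨rfl, rfl⟩ <;>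
      simp [← ha, ← hb, h11, h10, ← hE, Finset.sum_insert, Finset.mem_singleton] <;>
      linarith
end

section
/- Theorem 3.4: For every threshold t ∈ (0,1), all ε₁, ε₂ > 0, δ > 0, and C ∈ (0,1) with ε₁ − ε₂ ≤ Cδ, there exists a prior μ ∈ (0,t) such that U(μ,t,ε₂,δ) − U(μ,t,ε₁,0) ≥ (e^{ε₂} − 1)/((1+δ)e^{ε₁+ε₂} − 1). -/
/-- The sender's indirect utility with threshold `t`: `1` if the posterior is at
least `t`, and `0` otherwise. -/
noncomputable def Vt (t q : ℝ) : ℝ := if t ≤ q then 1 else 0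

/-- The set of feasible posterior pairs under `(ε,δ)`-differential privacy with
prior `μ`. -/
def Feas (μ ε δ : ℝ) : Set (ℝ × ℝ) :=
  {p : ℝ × ℝ | 0 ≤ p.1 ∧ p.1 ≤ μ ∧ μ ≤ p.2 ∧ p.2 ≤ 1 ∧ p.1 < p.2 ∧
    ((1 - p.1) / (1 - μ) - Real.exp ε * p.1 / μ) * (p.2 - μ) / (p.2 - p.1) ≤ δ ∧
    (p.2 / μ - Real.exp ε * (1 - p.2) / (1 - μ)) * (μ - p.1) / (p.2 - p.1) ≤ δ}

/-- The set of all posterior pairs (no privacy constraint) with prior `μ`. -/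
def FeasAll (μ : ℝ) : Set (ℝ × ℝ) :=
  {p : ℝ × ℝ | 0 ≤ p.1 ∧ p.1 ≤ μ ∧ μ ≤ p.2 ∧ p.2 ≤ 1 ∧ p.1 < p.2}

/-- The sender's optimal utility under `(ε,δ)`-differential privacy with prior `μ`
and threshold `t`. -/
noncomputable def U (μ t ε δ : ℝ) : ℝ :=
  max (Vt t μ)
    (sSup {x : ℝ | ∃ p ∈ Feas μ ε δ,
      x = ((p.2 - μ) * Vt t p.1 + (μ - p.1) * Vt t p.2) / (p.2 - p.1)})

/-- The sender's optimal utility without privacy constraints. -/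
noncomputable def Uinf (μ t : ℝ) : ℝ :=
  max (Vt t μ)
    (sSup {x : ℝ | ∃ p ∈ FeasAll μ,
      x = ((p.2 - μ) * Vt t p.1 + (μ - p.1) * Vt t p.2) / (p.2 - p.1)})

set_option maxHeartbeats 1000000 in
/-- Theorem 3.4: for every threshold `t ∈ (0,1)`, all `ε₁, ε₂ > 0`, `δ > 0` and
`C ∈ (0,1)` with `ε₁ − ε₂ ≤ Cδ`, there is a prior `μ ∈ (0,t)` such that
`U(μ,t,ε₂,δ) − U(μ,t,ε₁,0) ≥ (e^{ε₂} − 1)/((1+δ)e^{ε₁+ε₂} − 1)`. -/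
theorem stmt3 (t ε₁ ε₂ δ C : ℝ) (ht : t ∈ Set.Ioo (0 : ℝ) 1)
    (hε₁ : 0 < ε₁) (hε₂ : 0 < ε₂) (hδ : 0 < δ) (hC : C ∈ Set.Ioo (0 : ℝ) 1)
    (hgap : ε₁ - ε₂ ≤ C * δ) :
    ∃ μ ∈ Set.Ioo 0 t,
      U μ t ε₂ δ - U μ t ε₁ 0 ≥
        (Real.exp ε₂ - 1) / ((1 + δ) * Real.exp (ε₁ + ε₂) - 1) := by
  obtain ⟨ht0, ht1⟩ := ht
  obtain ⟨hC0, hC1⟩ := hC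
  have hE1 : (1:ℝ) < Real.exp ε₁ := Real.one_lt_exp_iff.mpr hε₁
  have hE2 : (1:ℝ) < Real.exp ε₂ := Real.one_lt_exp_iff.mpr hε₂
  have hE1δ : Real.exp ε₁ * (1 - δ) < Real.exp ε₂ := by
    rcases le_or_gt 1 δ with h | h
    · have h1 : Real.exp ε₁ * (1 - δ) ≤ 0 :=
        mul_nonpos_of_nonneg_of_nonpos (by linarith) (by linarith)
      linarith
    · have h1 : ε₂ - ε₁ + 1 ≤ Real.exp (ε₂ - ε₁) := by
        have := Real.add_one_le_exp (ε₂ - ε₁); linarith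
      have h2 : Real.exp ε₁ * Real.exp (ε₂ - ε₁) = Real.exp ε₂ := by
        rw [← Real.exp_add]; ring_nf
      have hexp : Real.exp ε₁ * (ε₂ - ε₁ + 1) ≤ Real.exp ε₂ := by
        have := mul_le_mul_of_nonneg_left h1 (show (0:ℝ) ≤ Real.exp ε₁ by linarith)
        linarith
      have hh1 : (0:ℝ) < Real.exp ε₁ * (δ - C * δ) :=
        mul_pos (by linarith) (by nlinarith)
      have hh2 : (0:ℝ) ≤ Real.exp ε₁ * (C * δ - (ε₁ - ε₂)) :=
        mul_nonneg (by linarith) (by linarith)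
      nlinarith [hexp, hh1, hh2]
  obtain ⟨E1, hE1def⟩ : ∃ a : ℝ, Real.exp ε₁ = a := ⟨_, rfl⟩
  obtain ⟨E2, hE2def⟩ : ∃ a : ℝ, Real.exp ε₂ = a := ⟨_, rfl⟩
  rw [hE1def] at hE1 hE1δ
  rw [hE2def] at hE2 hE1δ
  have hE1p : (0:ℝ) < E1 := by linarith
  have hE2p : (0:ℝ) < E2 := by linarith
  -- choose the likelihood ratio x
  obtain ⟨x, hx0, hxE1, hx1, hcδ, hd⟩ : ∃ x : ℝ, 0 < x ∧ x * E1 < 1 ∧ x < 1 ∧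
      1 - E2 * x ≤ δ ∧ 1 ≤ x * (1 + δ) * E1 := by
    refine ⟨max ((1 - δ)/E2) (1/(E1*(1+δ))), lt_max_of_lt_right (by positivity), ?_, ?_, ?_, ?_⟩
    · have h1 : (1 - δ)/E2 < 1/E1 := by
        rw [div_lt_div_iff₀ hE2p hE1p]; linarith [hE1δ]
      have h2 : 1/(E1*(1+δ)) < 1/E1 := by
        apply div_lt_div_of_pos_left one_pos hE1p
        linarith [mul_pos hE1p hδ]
      have h3 := max_lt h1 h2
      calc max ((1 - δ)/E2) (1/(E1*(1+δ))) * E1 < (1/E1) * E1 :=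
            mul_lt_mul_of_pos_right h3 hE1p
        _ = 1 := by field_simp
    · have h1 : (1 - δ)/E2 < 1 := by rw [div_lt_one hE2p]; linarith
      have h2 : 1/(E1*(1+δ)) < 1 := by
        rw [div_lt_one (by positivity)]; linarith [mul_pos hE1p hδ]
      exact max_lt h1 h2
    · have h : (1 - δ)/E2 ≤ max ((1 - δ)/E2) (1/(E1*(1+δ))) := le_max_left _ _
      have h' := (div_le_iff₀ hE2p).mp h
      linarith
    · have h : 1/(E1*(1+δ)) ≤ max ((1 - δ)/E2) (1/(E1*(1+δ))) := le_max_right _ _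
      have h' := (div_le_iff₀ (by positivity : (0:ℝ) < E1*(1+δ))).mp h
      linarith
  -- choose the prior μ
  obtain ⟨μ, hμ0, hμt, hkey⟩ : ∃ μ : ℝ, 0 < μ ∧ μ < t ∧
      μ * (1 - t) = x * t * (1 - μ) := by
    have hden : (0:ℝ) < 1 - t + x * t := by linarith [mul_pos hx0 ht0]
    refine ⟨x * t / (1 - t + x * t), by positivity, ?_, ?_⟩
    · rw [div_lt_iff₀ hden]
      have := mul_pos (mul_pos ht0 (show (0:ℝ) < 1 - t by linarith))
        (show (0:ℝ) < 1 - x by linarith)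
      nlinarith [this]
    · field_simp; ring
  have hμ1 : μ < 1 := hμt.trans ht1
  have h1μ : (0:ℝ) < 1 - μ := by linarith
  refine ⟨μ, ⟨hμ0, hμt⟩, ?_⟩
  -- U at (ε₁, 0) is 0
  have hVμ : Vt t μ = 0 := if_neg (not_le.mpr hμt)
  have hU1 : U μ t ε₁ 0 = 0 := by
    have hsub : {y : ℝ | ∃ p ∈ Feas μ ε₁ 0,
        y = ((p.2 - μ) * Vt t p.1 + (μ - p.1) * Vt t p.2) / (p.2 - p.1)} ⊆ {0} := by
      rintro y ⟨p, hp, hy⟩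
      simp only [Feas, Set.mem_setOf_eq] at hp
      rw [hE1def] at hp
      obtain ⟨hp0, hp1μ, hpμ2, hp21, hp12, hcc1, hcc2⟩ := hp
      have hppos : (0:ℝ) < p.2 - p.1 := by linarith
      have hV1 : Vt t p.1 = 0 := if_neg (not_le.mpr (by linarith))
      rcases le_or_gt t p.2 with h2 | h2
      · have hV2 : Vt t p.2 = 1 := if_pos h2
        have hp1eq : p.1 = μ := by
          by_contra hne
          have hp1lt : p.1 < μ := lt_of_le_of_ne hp1μ hne
          have h' : (p.2 / μ - E1 * (1 - p.2) / (1 - μ)) * (μ - p.1) ≤ 0 := by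
            have := (div_le_iff₀ hppos).mp hcc2
            simpa using this
          have hG : p.2 / μ - E1 * (1 - p.2) / (1 - μ) ≤ 0 := by
            by_contra hg
            push_neg at hg
            have := mul_pos hg (sub_pos.mpr hp1lt)
            linarith
          have hG' : p.2 / μ ≤ E1 * (1 - p.2) / (1 - μ) := by linarith
          have hG'' : p.2 * (1 - μ) ≤ E1 * (1 - p.2) * μ :=
            (div_le_div_iff₀ hμ0 h1μ).mp hG'
          have e1 : t * (1 - μ) ≤ p.2 * (1 - μ) :=
            mul_le_mul_of_nonneg_right h2 h1μ.le
          have e2 : E1 * (1 - p.2) * μ ≤ E1 * (1 - t) * μ := by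
            have := mul_le_mul_of_nonneg_left h2 (mul_nonneg hE1p.le hμ0.le)
            nlinarith [this]
          have e3 : E1 * (1 - t) * μ = E1 * x * t * (1 - μ) := by
            linear_combination E1 * hkey
          have e4 : E1 * x * t * (1 - μ) < t * (1 - μ) := by
            have := mul_lt_mul_of_pos_right hxE1 (mul_pos ht0 h1μ)
            nlinarith [this]
          linarith [e1, hG'', e2, e4]
        simp [hy, hp1eq, hVμ, hV2]
      · have hV2 : Vt t p.2 = 0 := if_neg (not_le.mpr h2)
        simp [hy, hV1, hV2]
    simp only [U, hVμ]
    rcases Set.subset_singleton_iff_eq.mp hsub with h | h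
    · rw [h, Real.sSup_empty]; simp
    · rw [h, csSup_singleton]; simp
  -- the signal pair (q₁, t) for (ε₂, δ)
  have hE2x : x < E2 := by linarith
  have hE2xp : (0:ℝ) < E2 - x := by linarith
  obtain ⟨q₁, hq₁0, hq₁μ, hC1z, hA⟩ : ∃ q₁ : ℝ, 0 < q₁ ∧ q₁ < μ ∧
      ((1 - q₁) / (1 - μ) - E2 * q₁ / μ = 0) ∧
      (μ - q₁) * (t * (E2 - x)) = (μ * (E2 - 1)) * (t - q₁) := by
    have hDp : (0:ℝ) < μ + E2 * (1 - μ) := by linarith [mul_pos hE2p h1μ]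
    have hD1 : (1:ℝ) < μ + E2 * (1 - μ) := by
      have := mul_lt_mul_of_pos_right hE2 h1μ
      linarith
    refine ⟨μ / (μ + E2 * (1 - μ)), div_pos hμ0 hDp, ?_, ?_, ?_⟩
    · rw [div_lt_iff₀ hDp]
      have := mul_pos hμ0 (show (0:ℝ) < μ + E2 * (1 - μ) - 1 by linarith)
      nlinarith [this]
    · field_simp; ring
    · field_simp; linear_combination (E2 - 1) * hkey
  have hq₁t : q₁ < t := hq₁μ.trans hμt
  have htq : (0:ℝ) < t - q₁ := by linarith
  have hwval : (μ - q₁) / (t - q₁) = μ * (E2 - 1) / (t * (E2 - x)) := by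
    rw [div_eq_div_iff htq.ne' (by positivity : (0:ℝ) < t * (E2 - x)).ne']
    linarith [hA]
  have hF : t / μ - E2 * (1 - t) / (1 - μ) = t * (1 - E2 * x) / μ := by
    field_simp
    linear_combination (-E2) * hkey
  -- feasibility of (q₁, t)
  have hfeas : (q₁, t) ∈ Feas μ ε₂ δ := by
    simp only [Feas, Set.mem_setOf_eq]
    rw [hE2def]
    refine ⟨hq₁0.le, hq₁μ.le, hμt.le, ht1.le, hq₁t, ?_, ?_⟩
    · rw [hC1z, zero_mul, zero_div]; exact hδ.le
    · have heq : (t / μ - E2 * (1 - t) / (1 - μ)) * (μ - q₁) / (t - q₁)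
          = (1 - E2 * x) * (E2 - 1) / (E2 - x) := by
        rw [mul_div_assoc, hF, hwval]
        field_simp
      rw [heq, div_le_iff₀ hE2xp]
      have g1 : (0:ℝ) ≤ (δ - (1 - E2 * x)) * (E2 - 1) :=
        mul_nonneg (by linarith) (by linarith)
      have g2 : (0:ℝ) ≤ δ * (1 - x) := mul_nonneg hδ.le (by linarith)
      nlinarith [g1, g2]
  -- value of the pair
  have hVq₁ : Vt t q₁ = 0 := if_neg (not_le.mpr hq₁t)
  have hVtt : Vt t t = 1 := if_pos le_rfl
  have hmem : (μ - q₁) / (t - q₁) ∈ {y : ℝ | ∃ p ∈ Feas μ ε₂ δ,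
      y = ((p.2 - μ) * Vt t p.1 + (μ - p.1) * Vt t p.2) / (p.2 - p.1)} :=
    ⟨(q₁, t), hfeas, by rw [hVq₁, hVtt]; ring⟩
  have hbdd : BddAbove {y : ℝ | ∃ p ∈ Feas μ ε₂ δ,
      y = ((p.2 - μ) * Vt t p.1 + (μ - p.1) * Vt t p.2) / (p.2 - p.1)} := by
    refine ⟨1, ?_⟩
    rintro y ⟨p, hp, hy⟩
    simp only [Feas, Set.mem_setOf_eq] at hp
    obtain ⟨hp0, hp1μ, hpμ2, hp21, hp12, -, -⟩ := hp
    have hppos : (0:ℝ) < p.2 - p.1 := by linarith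
    have hb1 : 0 ≤ Vt t p.1 ∧ Vt t p.1 ≤ 1 := by unfold Vt; split <;> norm_num
    have hb2 : 0 ≤ Vt t p.2 ∧ Vt t p.2 ≤ 1 := by unfold Vt; split <;> norm_num
    rw [hy, div_le_one hppos]
    have g1 : (p.2 - μ) * Vt t p.1 ≤ (p.2 - μ) * 1 :=
      mul_le_mul_of_nonneg_left hb1.2 (by linarith)
    have g2 : (μ - p.1) * Vt t p.2 ≤ (μ - p.1) * 1 :=
      mul_le_mul_of_nonneg_left hb2.2 (by linarith)
    linarith [g1, g2]
  have hU2ge : (μ - q₁) / (t - q₁) ≤ U μ t ε₂ δ := by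
    simp only [U]
    exact le_trans (le_csSup hbdd hmem) (le_max_right _ _)
  -- the final bound
  have h12 : (1:ℝ) < E1 * E2 := by
    calc (1:ℝ) = 1 * 1 := by ring
      _ < E1 * E2 := by
        apply mul_lt_mul'' hE1 hE2 <;> norm_num
  have hAp : (0:ℝ) < (1 + δ) * (E1 * E2) - 1 := by
    have : (0:ℝ) ≤ δ * (E1 * E2) := by positivity
    nlinarith [this]
  have hBp : (0:ℝ) < t * (E2 - x) := by positivity
  have hμxt : x * t ≤ μ := by
    by_contra hcon
    push_neg at hcon
    have h1 : (μ - x * t) * (1 - t) = x * t * (t - μ) := by linear_combination hkey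
    have h2 : (μ - x * t) * (1 - t) < 0 :=
      mul_neg_of_neg_of_pos (by linarith) (by linarith)
    have h3 : (0:ℝ) ≤ x * t * (t - μ) :=
      mul_nonneg (mul_nonneg hx0.le ht0.le) (by linarith)
    linarith [h1, h2, h3]
  have hstep : t * (E2 - x) ≤ μ * ((1 + δ) * (E1 * E2) - 1) := by
    have f1 : x * t * ((1 + δ) * (E1 * E2) - 1) ≤ μ * ((1 + δ) * (E1 * E2) - 1) :=
      mul_le_mul_of_nonneg_right hμxt hAp.le
    have f2 : 1 * E2 ≤ x * (1 + δ) * E1 * E2 :=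
      mul_le_mul_of_nonneg_right hd hE2p.le
    have f3 : t * (1 * E2) ≤ t * (x * (1 + δ) * E1 * E2) :=
      mul_le_mul_of_nonneg_left f2 ht0.le
    nlinarith [f1, f3]
  have hRle : (E2 - 1) / ((1 + δ) * (E1 * E2) - 1) ≤ μ * (E2 - 1) / (t * (E2 - x)) := by
    rw [div_le_div_iff₀ hAp hBp]
    have g := mul_le_mul_of_nonneg_left hstep (show (0:ℝ) ≤ E2 - 1 by linarith)
    nlinarith [g]
  rw [ge_iff_le, hU1, sub_zero, Real.exp_add, hE1def, hE2def]
  calc (E2 - 1) / ((1 + δ) * (E1 * E2) - 1)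
      ≤ μ * (E2 - 1) / (t * (E2 - x)) := hRle
    _ = (μ - q₁) / (t - q₁) := hwval.symm
    _ ≤ U μ t ε₂ δ := hU2ge
end

section
/- Corollary to Theorem 3.4: For every threshold t ∈ (0,1), if 0 < δ ≤ 0.01, 0.01 ≤ ε₂ ≤ ε₁ ≤ 1, and ε₁ − ε₂ ≤ Cδ for some C ∈ (0,1), then there exists a prior μ ∈ (0,t) such that U(μ,t,ε₂,δ) − U(μ,t,ε₁,0) ≥ 0.25. -/
set_option maxHeartbeats 2000000

/-- Corollary to Theorem 3.4: for every threshold `t ∈ (0,1)`, if `0 < δ ≤ 0.01`,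
`0.01 ≤ ε₂ ≤ ε₁ ≤ 1` and `ε₁ − ε₂ ≤ Cδ` for some `C ∈ (0,1)`, then there is a prior
`μ ∈ (0,t)` with `U(μ,t,ε₂,δ) − U(μ,t,ε₁,0) ≥ 0.25`. -/
theorem stmt4 (t ε₁ ε₂ δ : ℝ) (ht : t ∈ Set.Ioo (0 : ℝ) 1)
    (hδ : 0 < δ) (hδ' : δ ≤ 0.01)
    (h1 : 0.01 ≤ ε₂) (h2 : ε₂ ≤ ε₁) (h3 : ε₁ ≤ 1)
    (hC : ∃ C : ℝ, 0 < C ∧ C < 1 ∧ ε₁ - ε₂ ≤ C * δ) :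
    ∃ μ ∈ Set.Ioo 0 t, U μ t ε₂ δ - U μ t ε₁ 0 ≥ 0.25 := by
  obtain ⟨ht0, ht1⟩ := ht
  obtain ⟨C, hC0, hC1, hCd⟩ := hC
  have hεA : ε₁ < ε₂ + δ := by nlinarith [mul_lt_mul_of_pos_right hC1 hδ]
  set b := Real.exp ε₂ with hbdef
  set A := Real.exp (ε₂ + δ) with hAdef
  set a := Real.exp ε₁ with hadef
  clear_value b A a
  have hb0 : (0:ℝ) < b := by rw [hbdef]; exact Real.exp_pos _
  have hA0 : (0:ℝ) < A := by rw [hAdef]; exact Real.exp_pos _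
  have ha0 : (0:ℝ) < a := by rw [hadef]; exact Real.exp_pos _
  have hb1 : (1.01:ℝ) ≤ b := by
    have h := Real.add_one_le_exp ε₂; rw [← hbdef] at h; linarith
  have hbe : b ≤ 2.72 := by
    have h : b ≤ Real.exp 1 := by rw [hbdef]; exact Real.exp_le_exp.2 (le_trans h2 h3)
    have h' := Real.exp_one_lt_d9
    norm_num at h' ⊢
    linarith
  have hbA : b < A := by rw [hbdef, hAdef]; exact Real.exp_lt_exp.2 (by linarith)
  have haA : a < A := by rw [hadef, hAdef]; exact Real.exp_lt_exp.2 hεA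
  have ha1 : (1:ℝ) < a := by
    have h : Real.exp 0 < a := by rw [hadef]; exact Real.exp_lt_exp.2 (show (0:ℝ) < ε₁ by linarith)
    rwa [Real.exp_zero] at h
  have hA1 : (1:ℝ) < A := lt_trans ha1 haA
  have hexpδ : Real.exp δ ≤ 1 + (100/99)*δ := by
    have h := Real.add_one_le_exp (-δ)
    rw [Real.exp_neg] at h
    have h2 := mul_le_mul_of_nonneg_left h (Real.exp_pos δ).le
    rw [mul_inv_cancel₀ (Real.exp_pos δ).ne'] at h2
    nlinarith [Real.exp_pos δ]
  have hAexp : A = b * Real.exp δ := by rw [hAdef, hbdef, Real.exp_add]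
  have hAmb : A - b ≤ (2.75:ℝ)*δ := by
    clear * - hAexp hexpδ hb0 hbe hδ hδ'
    nlinarith [mul_le_mul_of_nonneg_left hexpδ hb0.le,
      mul_le_mul_of_nonneg_right hbe hδ.le]
  have hA4 : A < 2.75 := by
    clear * - hAexp hexpδ hbe hδ hδ' hb0
    nlinarith [mul_le_mul hbe hexpδ (Real.exp_pos δ).le (by norm_num : (0:ℝ) ≤ 2.72)]
  have hA101 : A ≤ 1.011 * b := by
    clear * - hAexp hexpδ hδ' hb0
    nlinarith [mul_le_mul_of_nonneg_left hexpδ hb0.le,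
      mul_le_mul_of_nonneg_left hδ' hb0.le]
  have hquad : A * b ≤ 4*b - 3 := by
    clear * - hb1 hbe hA101 hb0
    nlinarith [mul_nonneg (by linarith : (0:ℝ) ≤ b - 1.01)
        (by linarith : (0:ℝ) ≤ 2.72 - b),
      mul_le_mul_of_nonneg_right hA101 hb0.le]
  set D := t + A*(1-t) with hD
  clear_value D
  have hD1 : 1 < D := by clear * - hD hA1 ht0 ht1; nlinarith
  have hD0 : (0:ℝ) < D := by linarith
  have hDA : D ≤ A := by clear * - hD hA1 ht0 ht1; nlinarith
  have hD4 : D < 4 := by linarith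
  set μ := t / D with hμdef
  clear_value μ
  have hμ0 : 0 < μ := by rw [hμdef]; exact div_pos ht0 hD0
  have hμt : μ < t := by
    rw [hμdef, div_lt_iff₀ hD0]; clear * - ht0 hD1; nlinarith
  have hμ1 : μ < 1 := hμt.trans ht1
  have h1μ0 : 0 < 1 - μ := by linarith
  have htμ0 : 0 < t - μ := by linarith
  have e2' : 1 - μ = A*(1-t)/D := by
    rw [hμdef]; field_simp; rw [hD]; ring
  set q₁ := (4*μ - t)/3 with hq₁
  clear_value q₁
  have hq₁μ : q₁ < μ := by rw [hq₁, div_lt_iff₀ (by norm_num : (0:ℝ) < 3)]; linarith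
  have h4μ : t ≤ 4*μ := by
    rw [hμdef, mul_div_assoc', le_div_iff₀ hD0]; clear * - ht0 hD4; nlinarith
  have hq₁0 : 0 ≤ q₁ := by rw [hq₁]; exact div_nonneg (by linarith) (by norm_num)
  have hq₁t : q₁ < t := hq₁μ.trans hμt
  have e5 : μ - q₁ = (t - μ)/3 := by rw [hq₁]; ring
  have e6 : t - q₁ = 4*(t - μ)/3 := by rw [hq₁]; ring
  have e7 : t / μ = D := by rw [hμdef]; field_simp
  have h1t0 : (0:ℝ) < 1 - t := by linarith
  have e8 : (1-t)/(1-μ) = D/A := by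
    rw [e2']
    field_simp [hA0.ne', hD0.ne', h1t0.ne']
  -- key cubic inequality
  have hkey : A*(3+t) - t ≤ A*b*(4 - t - A*(1-t)) := by
    clear * - ht0 ht1 hA1 hb1 hquad hA0
    nlinarith [mul_nonneg ht0.le (mul_nonneg (by linarith : (0:ℝ) ≤ A - 1)
        (by nlinarith : (0:ℝ) ≤ A*b - 1)),
      mul_nonneg hA0.le (by linarith : (0:ℝ) ≤ 4*b - 3 - A*b)]
  have hscaled : (3*D - 4*t + t*D)*t ≤ b*(4*t - t*D)*(A*(1-t)) := by
    rw [hD]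
    clear * - hkey ht0 ht1
    nlinarith [mul_le_mul_of_nonneg_left hkey
      (mul_nonneg ht0.le (by linarith : (0:ℝ) ≤ 1 - t))]
  have hfac2 : (1 - q₁) * μ ≤ b * q₁ * (1 - μ) := by
    have h1q : (1 - q₁) * μ = ((3*D - 4*t + t*D)*t) / (3*D*D) := by
      rw [hq₁, hμdef]; field_simp; ring
    have h2q : b * q₁ * (1 - μ) = (b*(4*t - t*D)*(A*(1-t))) / (3*D*D) := by
      rw [e2', hq₁, hμdef]; field_simp
    rw [h1q, h2q]
    exact (div_le_div_iff_of_pos_right (by positivity)).2 hscaled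
  have hfac : (1 - q₁)/(1 - μ) - b * q₁ / μ ≤ 0 := by
    rw [sub_nonpos, div_le_div_iff₀ h1μ0 hμ0]; exact hfac2
  -- membership of the pair (q₁, t) in Feas μ ε₂ δ
  have hmem : (q₁, t) ∈ Feas μ ε₂ δ := by
    refine ⟨hq₁0, hq₁μ.le, hμt.le, ht1.le, hq₁t, ?_, ?_⟩
    · show ((1 - q₁) / (1 - μ) - Real.exp ε₂ * q₁ / μ) * (t - μ) / (t - q₁) ≤ δ
      rw [← hbdef]
      have h := mul_nonpos_of_nonpos_of_nonneg hfac htμ0.le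
      have h' := div_nonpos_of_nonpos_of_nonneg h (by linarith : (0:ℝ) ≤ t - q₁)
      linarith
    · show (t / μ - Real.exp ε₂ * (1 - t) / (1 - μ)) * (μ - q₁) / (t - q₁) ≤ δ
      have e8b : b * (1-t) / (1-μ) = b*D/A := by
        rw [mul_div_assoc, e8, mul_div_assoc]
      rw [← hbdef, e5, e6, e7, e8b]
      have hgen : (D - b*D/A) * ((t-μ)/3) / (4*(t-μ)/3) = (D - b*D/A)/4 := by
        rw [mul_comm]
        field_simp
      rw [hgen]
      have hDbA : D - b*D/A ≤ A - b := by
        have heq : D - b*D/A = D*(A-b)/A := by field_simp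
        rw [heq, div_le_iff₀ hA0]
        clear * - hDA hbA hA0
        nlinarith [mul_le_mul_of_nonneg_right hDA (by linarith : (0:ℝ) ≤ A - b)]
      linarith
  -- the value of the pair is 1/4
  have hVt01 : ∀ s q : ℝ, 0 ≤ Vt s q ∧ Vt s q ≤ 1 := by
    intro s q; unfold Vt; split <;> norm_num
  have hval : (1/4 : ℝ) ∈ {x : ℝ | ∃ p ∈ Feas μ ε₂ δ,
      x = ((p.2 - μ) * Vt t p.1 + (μ - p.1) * Vt t p.2) / (p.2 - p.1)} := by
    refine ⟨(q₁, t), hmem, ?_⟩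
    show (1/4 : ℝ) = ((t - μ) * Vt t q₁ + (μ - q₁) * Vt t t) / (t - q₁)
    have hv1 : Vt t q₁ = 0 := by unfold Vt; rw [if_neg (not_le.2 hq₁t)]
    have hv2 : Vt t t = 1 := by unfold Vt; rw [if_pos le_rfl]
    rw [hv1, hv2, e5, e6]
    field_simp
    ring
  have hbdd : BddAbove {x : ℝ | ∃ p ∈ Feas μ ε₂ δ,
      x = ((p.2 - μ) * Vt t p.1 + (μ - p.1) * Vt t p.2) / (p.2 - p.1)} := by
    refine ⟨1, ?_⟩
    rintro x ⟨p, ⟨hp0, hp1, hp2, hp3, hp4, -, -⟩, rfl⟩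
    rw [div_le_one (by linarith : (0:ℝ) < p.2 - p.1)]
    clear * - hVt01 hp1 hp2 hp4
    nlinarith [(hVt01 t p.1).1, (hVt01 t p.1).2, (hVt01 t p.2).1, (hVt01 t p.2).2,
      mul_le_mul_of_nonneg_left (hVt01 t p.1).2 (by linarith : (0:ℝ) ≤ p.2 - μ),
      mul_le_mul_of_nonneg_left (hVt01 t p.2).2 (by linarith : (0:ℝ) ≤ μ - p.1),
      mul_nonneg (by linarith : (0:ℝ) ≤ p.2 - μ) (hVt01 t p.1).1,
      mul_nonneg (by linarith : (0:ℝ) ≤ μ - p.1) (hVt01 t p.2).1]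
  have hU2 : (1/4 : ℝ) ≤ U μ t ε₂ δ :=
    le_trans (le_csSup hbdd hval) (le_max_right _ _)
  -- U μ t ε₁ 0 ≤ 0
  have hU1 : U μ t ε₁ 0 ≤ 0 := by
    rw [U]
    apply max_le
    · unfold Vt; rw [if_neg (not_le.2 hμt)]
    · apply Real.sSup_le _ le_rfl
      rintro x ⟨p, ⟨hp0, hp1, hp2, hp3, hp4, hc1, hc2⟩, rfl⟩
      have hv1 : Vt t p.1 = 0 := by
        unfold Vt; rw [if_neg (not_le.2 (lt_of_le_of_lt hp1 hμt))]
      rcases eq_or_lt_of_le hp1 with heq | hlt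
      · rw [hv1, heq]
        simp
      · -- show p.2 < t
        have hp2t : p.2 < t := by
          by_contra hcon
          push_neg at hcon
          rw [← hadef] at hc2
          have hd0 : (0:ℝ) < p.2 - p.1 := by linarith
          have hWm : (p.2 / μ - a * (1 - p.2) / (1 - μ)) * (μ - p.1) ≤ 0 := by
            have h'' := mul_le_mul_of_nonneg_right hc2 hd0.le
            rw [div_mul_cancel₀ _ hd0.ne'] at h''
            linarith
          have hW : p.2 / μ - a * (1 - p.2) / (1 - μ) ≤ 0 := by
            by_contra hW'
            push_neg at hW'
            have hm : (0:ℝ) < μ - p.1 := by linarith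
            clear * - hW' hWm hm
            nlinarith [mul_pos hW' hm]
          have k1 : D ≤ p.2 / μ := by
            rw [← e7]; exact (div_le_div_iff_of_pos_right hμ0).2 hcon
          have k2 : a * (1 - p.2) / (1 - μ) ≤ a * (1 - t) / (1 - μ) :=
            (div_le_div_iff_of_pos_right h1μ0).2 (mul_le_mul_of_nonneg_left (by linarith) ha0.le)
          have k3 : a * (1 - t) / (1 - μ) = a * (D / A) := by
            rw [mul_div_assoc, e8]
          have k4 : a * (D / A) < D := by
            rw [mul_div_assoc', div_lt_iff₀ hA0]
            clear * - haA hD0 hA0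
            nlinarith
          linarith
        have hv2 : Vt t p.2 = 0 := by unfold Vt; rw [if_neg (not_le.2 hp2t)]
        rw [hv1, hv2]
        simp
  refine ⟨μ, ⟨hμ0, hμt⟩, ?_⟩
  have : (0.25:ℝ) = 1/4 := by norm_num
  linarith
end

section
/- Proposition 3.5: For every threshold t ∈ (0,1) and all ε₁, ε₂, δ > 0, there exists a prior μ ∈ (0,1) such that U(μ,t,ε₁,0) = 0 while U(μ,t,ε₂,δ) > 0; in particular, the ratio of the sender's optimal utility under (ε₂,δ)-differential privacy to that under ε₁-differential privacy can be made arbitrarily large. -/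
lemma Vt_nonneg (t q : ℝ) : 0 ≤ Vt t q := by unfold Vt; split_ifs <;> norm_num

lemma Vt_le_one (t q : ℝ) : Vt t q ≤ 1 := by unfold Vt; split_ifs <;> norm_num

lemma feas_ub (μ t ε δ : ℝ) :
    ∀ x ∈ {x : ℝ | ∃ p ∈ Feas μ ε δ,
      x = ((p.2 - μ) * Vt t p.1 + (μ - p.1) * Vt t p.2) / (p.2 - p.1)}, x ≤ 1 := by
  rintro x ⟨p, hp, rfl⟩
  obtain ⟨h0, h1, h2, h3, h4, -, -⟩ := hp
  have hd : 0 < p.2 - p.1 := sub_pos.2 h4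
  rw [div_le_one hd]
  nlinarith [Vt_nonneg t p.1, Vt_le_one t p.1, Vt_nonneg t p.2, Vt_le_one t p.2]

/-- Proposition 3.5: for every threshold `t ∈ (0,1)` and all `ε₁, ε₂, δ > 0`, there is
a prior `μ ∈ (0,1)` with `U(μ,t,ε₁,0) = 0` while `U(μ,t,ε₂,δ) > 0`; in particular the
ratio of the optimal utility under `(ε₂,δ)`-differential privacy to that under
`ε₁`-differential privacy can be made arbitrarily large. -/
theorem stmt5 (t ε₁ ε₂ δ : ℝ) (ht : t ∈ Set.Ioo (0 : ℝ) 1)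
    (hε₁ : 0 < ε₁) (hε₂ : 0 < ε₂) (hδ : 0 < δ) :
    (∃ μ ∈ Set.Ioo (0 : ℝ) 1, U μ t ε₁ 0 = 0 ∧ 0 < U μ t ε₂ δ) ∧
    ∀ M : ℝ, ∃ μ ∈ Set.Ioo (0 : ℝ) 1, M * U μ t ε₁ 0 < U μ t ε₂ δ := by
  obtain ⟨ht0, ht1⟩ := ht
  have hE₁ : 1 < Real.exp ε₁ := by have := Real.add_one_le_exp ε₁; linarith
  have hE₂ : 1 < Real.exp ε₂ := by have := Real.add_one_le_exp ε₂; linarith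
  set μ := t / (2 * (Real.exp ε₁ + t)) with hμdef
  have hden : 0 < 2 * (Real.exp ε₁ + t) := by nlinarith
  have hμpos : 0 < μ := div_pos ht0 hden
  have hμeq : μ * (2 * (Real.exp ε₁ + t)) = t := div_mul_cancel₀ t hden.ne'
  clear_value μ
  clear hμdef
  have hμt : μ < t := by nlinarith [mul_pos hμpos ht0, mul_pos hμpos (lt_trans one_pos hE₁)]
  have hμ1 : μ < 1 := hμt.trans ht1
  have h1μ : 0 < 1 - μ := by linarith
  have hkey : Real.exp ε₁ * μ < t * (1 - μ) := by
    nlinarith [mul_pos hμpos ht0, mul_pos hμpos (lt_trans one_pos hE₁)]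
  have hVμ : Vt t μ = 0 := if_neg (not_le.2 hμt)
  -- Part A : U μ t ε₁ 0 = 0
  have hU0 : U μ t ε₁ 0 = 0 := by
    have hub : ∀ x ∈ {x : ℝ | ∃ p ∈ Feas μ ε₁ 0,
        x = ((p.2 - μ) * Vt t p.1 + (μ - p.1) * Vt t p.2) / (p.2 - p.1)}, x ≤ 0 := by
      rintro x ⟨p, hp, rfl⟩
      obtain ⟨h0, h1, h2, h3, h4, hc1, hc2⟩ := hp
      have hd : 0 < p.2 - p.1 := sub_pos.2 h4
      have hV1 : Vt t p.1 = 0 := if_neg (not_le.2 (lt_of_le_of_lt h1 hμt))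
      rw [hV1, mul_zero, zero_add]
      by_cases hq2 : t ≤ p.2
      · have hV2 : Vt t p.2 = 1 := if_pos hq2
        rw [hV2, mul_one]
        have hB : 0 < p.2 / μ - Real.exp ε₁ * (1 - p.2) / (1 - μ) := by
          rw [sub_pos, div_lt_div_iff₀ h1μ hμpos]
          nlinarith [mul_nonneg (mul_nonneg (by linarith : (0:ℝ) ≤ Real.exp ε₁)
              (by linarith : (0:ℝ) ≤ p.2)) hμpos.le,
            mul_le_mul_of_nonneg_left hq2 h1μ.le]
        have hle : μ - p.1 ≤ 0 := by
          by_contra h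
          push_neg at h
          have : 0 < (p.2 / μ - Real.exp ε₁ * (1 - p.2) / (1 - μ)) * (μ - p.1) / (p.2 - p.1) :=
            div_pos (mul_pos hB h) hd
          linarith
        exact div_nonpos_of_nonpos_of_nonneg hle hd.le
      · have hV2 : Vt t p.2 = 0 := if_neg hq2
        rw [hV2, mul_zero, zero_div]
    have h0mem : (0 : ℝ) ∈ {x : ℝ | ∃ p ∈ Feas μ ε₁ 0,
        x = ((p.2 - μ) * Vt t p.1 + (μ - p.1) * Vt t p.2) / (p.2 - p.1)} := by
      refine ⟨(0, μ), ⟨?_, ?_, ?_, ?_, ?_, ?_, ?_⟩, ?_⟩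
      · exact le_rfl
      · exact hμpos.le
      · exact le_rfl
      · exact hμ1.le
      · exact hμpos
      · simp only [sub_self, mul_zero, zero_div]
        exact le_rfl
      · have : (μ / μ - Real.exp ε₁ * (1 - μ) / (1 - μ)) * (μ - 0) / (μ - 0)
            = 1 - Real.exp ε₁ := by
          field_simp
          rw [sub_zero, mul_div_cancel_right₀ _ hμpos.ne']
        rw [this]; linarith
      · simp [hVμ]
    have hsup : sSup {x : ℝ | ∃ p ∈ Feas μ ε₁ 0,
        x = ((p.2 - μ) * Vt t p.1 + (μ - p.1) * Vt t p.2) / (p.2 - p.1)} = 0 :=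
      le_antisymm (csSup_le ⟨0, h0mem⟩ hub) (le_csSup ⟨0, hub⟩ h0mem)
    unfold U
    rw [hVμ, hsup]
    simp
  -- Part B : 0 < U μ t ε₂ δ
  have hUpos : 0 < U μ t ε₂ δ := by
    have hE₂pos : (0 : ℝ) < Real.exp ε₂ := Real.exp_pos ε₂
    set s := min (min ((Real.exp ε₂ - 1) * (1 - μ) / Real.exp ε₂) (δ * (t - μ) / t)) (1 / 2)
      with hsdef
    have hs_pos : 0 < s := by
      refine lt_min (lt_min ?_ ?_) (by norm_num)
      · exact div_pos (mul_pos (by linarith) h1μ) hE₂pos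
      · exact div_pos (mul_pos hδ (by linarith)) ht0
    have hs_half : s ≤ 1 / 2 := min_le_right _ _
    have hsa : s ≤ (Real.exp ε₂ - 1) * (1 - μ) / Real.exp ε₂ :=
      le_trans (min_le_left _ _) (min_le_left _ _)
    have hsb : s ≤ δ * (t - μ) / t := le_trans (min_le_left _ _) (min_le_right _ _)
    clear_value s
    clear hsdef
    have hsaE : s * Real.exp ε₂ ≤ (Real.exp ε₂ - 1) * (1 - μ) := by
      rw [le_div_iff₀ hE₂pos] at hsa; linarith
    have hsbt : s * t ≤ δ * (t - μ) := by
      rw [le_div_iff₀ ht0] at hsb; linarith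
    set q₁ := μ * (1 - s) with hq₁def
    clear_value q₁
    have hq₁0 : 0 ≤ q₁ := hq₁def ▸ mul_nonneg hμpos.le (by linarith)
    have hq₁μ : q₁ ≤ μ := by rw [hq₁def]; nlinarith
    have hq₁t : q₁ < t := lt_of_le_of_lt hq₁μ hμt
    have htq₁ : 0 < t - q₁ := by linarith
    have hμq : μ - q₁ = μ * s := by rw [hq₁def]; ring
    have hmem : ((q₁, t) : ℝ × ℝ) ∈ Feas μ ε₂ δ := by
      refine ⟨hq₁0, hq₁μ, hμt.le, ht1.le, hq₁t, ?_, ?_⟩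
      · -- first constraint
        have hfac : (1 - q₁) / (1 - μ) - Real.exp ε₂ * q₁ / μ ≤ 0 := by
          rw [sub_nonpos, div_le_div_iff₀ h1μ hμpos, hq₁def]
          have key : 1 - μ + μ * s ≤ Real.exp ε₂ * (1 - s) * (1 - μ) := by
            nlinarith [mul_nonneg (mul_nonneg hs_pos.le hμpos.le)
              (by linarith : (0:ℝ) ≤ Real.exp ε₂ - 1)]
          nlinarith [mul_le_mul_of_nonneg_right key hμpos.le]
        have : ((1 - q₁) / (1 - μ) - Real.exp ε₂ * q₁ / μ) * (t - μ) / (t - q₁) ≤ 0 :=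
          div_nonpos_of_nonpos_of_nonneg
            (mul_nonpos_iff.2 (Or.inr ⟨hfac, by linarith⟩)) htq₁.le
        linarith
      · -- second constraint
        have hA : t / μ - Real.exp ε₂ * (1 - t) / (1 - μ) ≤ t / μ := by
          have : 0 ≤ Real.exp ε₂ * (1 - t) / (1 - μ) :=
            div_nonneg (mul_nonneg hE₂pos.le (by linarith)) h1μ.le
          linarith
        have hnum : 0 ≤ μ - q₁ := by linarith
        have h1 : (t / μ - Real.exp ε₂ * (1 - t) / (1 - μ)) * (μ - q₁) / (t - q₁)
            ≤ (t / μ) * (μ - q₁) / (t - q₁) := by gcongr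
        have h2 : (t / μ) * (μ - q₁) / (t - q₁) = t * s / (t - q₁) := by
          rw [hμq]
          rw [show t / μ * (μ * s) = t * s by field_simp]
        have h3 : t * s / (t - q₁) ≤ t * s / (t - μ) := by
          gcongr
        have h4 : t * s / (t - μ) ≤ δ := by
          rw [div_le_iff₀ (by linarith : (0:ℝ) < t - μ)]
          linarith
        linarith
    have hx_pos : 0 < μ * s / (t - q₁) := div_pos (mul_pos hμpos hs_pos) htq₁
    have hx_mem : μ * s / (t - q₁) ∈ {x : ℝ | ∃ p ∈ Feas μ ε₂ δ,
        x = ((p.2 - μ) * Vt t p.1 + (μ - p.1) * Vt t p.2) / (p.2 - p.1)} := by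
      refine ⟨(q₁, t), hmem, ?_⟩
      have hV1 : Vt t q₁ = 0 := if_neg (not_le.2 hq₁t)
      have hV2 : Vt t t = 1 := if_pos le_rfl
      simp only [hV1, hV2, mul_zero, mul_one, zero_add, hμq]
    have hsup_ge : μ * s / (t - q₁) ≤ sSup {x : ℝ | ∃ p ∈ Feas μ ε₂ δ,
        x = ((p.2 - μ) * Vt t p.1 + (μ - p.1) * Vt t p.2) / (p.2 - p.1)} :=
      le_csSup ⟨1, feas_ub μ t ε₂ δ⟩ hx_mem
    have : μ * s / (t - q₁) ≤ U μ t ε₂ δ := le_trans hsup_ge (le_max_right _ _)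
    linarith
  exact ⟨⟨μ, ⟨hμpos, hμ1⟩, hU0, hUpos⟩,
    fun M => ⟨μ, ⟨hμpos, hμ1⟩, by rw [hU0, mul_zero]; exact hUpos⟩⟩
end

section
/- Proposition 3.6: For every threshold t ∈ (0,1) and every ε > 0, sup_{μ∈(0,1)} (U_∞(μ,t) − U(μ,t,ε,0)) ≥ 1/((1−t)e^ε + t); that is, the gap between the sender's optimal utility with no privacy constraint and under ε-differential privacy can be made at least 1/((1−t)e^ε + t) up to an arbitrarily small loss by an appropriate choice of prior. -/
/-- Any feasible value is at most 1. -/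
lemma val_le_one (t μ q₁ q₂ : ℝ) (h1 : q₁ ≤ μ) (h2 : μ ≤ q₂) (h3 : q₁ < q₂) :
    ((q₂ - μ) * Vt t q₁ + (μ - q₁) * Vt t q₂) / (q₂ - q₁) ≤ 1 := by
  rw [div_le_one (by linarith)]
  nlinarith [Vt_nonneg t q₁, Vt_le_one t q₁, Vt_nonneg t q₂, Vt_le_one t q₂]

/-- The unconstrained optimal utility is at most 1. -/
lemma Uinf_le_one (μ t : ℝ) (hμ0 : 0 < μ) (hμ1 : μ < 1) : Uinf μ t ≤ 1 := by
  unfold Uinf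
  apply max_le (Vt_le_one t μ)
  apply csSup_le
  · exact ⟨((1 - μ) * Vt t 0 + (μ - 0) * Vt t 1) / (1 - 0),
      ⟨(0, 1), ⟨le_refl 0, hμ0.le, hμ1.le, le_refl 1, by norm_num⟩, rfl⟩⟩
  · rintro x ⟨p, ⟨_, h1, h2, _, h3⟩, rfl⟩
    exact val_le_one t μ p.1 p.2 h1 h2 h3

lemma U_nonneg (μ t ε δ : ℝ) : 0 ≤ U μ t ε δ :=
  le_trans (Vt_nonneg t μ) (le_max_left _ _)

/-- For priors below the critical prior, the utility under ε-DP is 0. -/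
lemma U_nonpos (μ t ε : ℝ) (hμ0 : 0 < μ) (hμ1 : μ < 1) (ht0 : 0 < t) (ht1 : t < 1)
    (hexp : (1:ℝ) ≤ Real.exp ε)
    (hcrit : μ * ((1 - t) * Real.exp ε + t) < t) : U μ t ε 0 ≤ 0 := by
  have hD1 : (1:ℝ) ≤ (1 - t) * Real.exp ε + t := by nlinarith
  have hμt : μ < t := by nlinarith [mul_le_mul_of_nonneg_left hD1 hμ0.le]
  have hVμ : Vt t μ = 0 := by unfold Vt; rw [if_neg (not_le.mpr hμt)]
  unfold U
  rw [hVμ]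
  apply max_le le_rfl
  apply Real.sSup_nonpos
  rintro x ⟨p, ⟨hp0, hp1, hp2, hp3, hp4, hc1, hc2⟩, rfl⟩
  have hV1 : Vt t p.1 = 0 := by
    unfold Vt; rw [if_neg (not_le.mpr (lt_of_le_of_lt hp1 hμt))]
  rw [hV1]
  rcases eq_or_lt_of_le hp1 with heq | hlt
  · rw [heq]; simp
  · -- q₁ < μ, so the second constraint forces q₂ < t, hence Vt t q₂ = 0
    have hV2 : Vt t p.2 = 0 := by
      unfold Vt
      rw [if_neg]
      intro hts
      have hden : 0 < p.2 - p.1 := by linarith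
      have hA : p.2 / μ - Real.exp ε * (1 - p.2) / (1 - μ) ≤ 0 := by
        by_contra hpos
        push_neg at hpos
        have : 0 < (p.2 / μ - Real.exp ε * (1 - p.2) / (1 - μ)) * (μ - p.1) / (p.2 - p.1) := by
          apply div_pos (mul_pos hpos (by linarith)) hden
        linarith
      have h1μ : 0 < 1 - μ := by linarith
      have key : p.2 * (1 - μ) ≤ Real.exp ε * μ * (1 - p.2) := by
        have := sub_nonpos.mp hA
        rw [div_le_div_iff₀ hμ0 h1μ] at this
        linarith [this]
      -- q₂ ≥ t gives t(1-μ) ≤ e^ε μ (1-t), contradicting hcrit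
      have h2 : t * (1 - μ) ≤ Real.exp ε * μ * (1 - t) := by
        nlinarith [mul_le_mul_of_nonneg_right hts h1μ.le,
          mul_le_mul_of_nonneg_left (by linarith : 1 - p.2 ≤ 1 - t)
            (mul_pos (Real.exp_pos ε) hμ0).le]
      nlinarith
    rw [hV2]
    simp

/-- Without privacy constraints, a prior μ < t achieves utility at least μ/t. -/
lemma Uinf_ge (μ t : ℝ) (hμ0 : 0 < μ) (ht1 : t < 1) (hμt : μ < t) (ht0 : 0 < t) :
    μ / t ≤ Uinf μ t := by
  unfold Uinf
  refine le_trans ?_ (le_max_right _ _)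
  have hmem : μ / t ∈ {x : ℝ | ∃ p ∈ FeasAll μ,
      x = ((p.2 - μ) * Vt t p.1 + (μ - p.1) * Vt t p.2) / (p.2 - p.1)} := by
    refine ⟨(0, t), ⟨le_refl 0, hμ0.le, hμt.le, ht1.le, ht0⟩, ?_⟩
    have h0 : Vt t 0 = 0 := by unfold Vt; rw [if_neg (not_le.mpr ht0)]
    have htt : Vt t t = 1 := by unfold Vt; rw [if_pos le_rfl]
    simp only [h0, htt]
    ring
  apply le_csSup _ hmem
  exact ⟨1, fun x ⟨p, ⟨_, h1, h2, _, h3⟩, hx⟩ => hx ▸ val_le_one t μ p.1 p.2 h1 h2 h3⟩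

/-- Proposition 3.6: for every threshold `t ∈ (0,1)` and every `ε > 0`, the supremum
over priors `μ ∈ (0,1)` of the gap between the unconstrained optimal utility and the
optimal utility under `ε`-differential privacy is at least `1/((1−t)e^ε + t)`. -/
theorem stmt6 (t ε : ℝ) (ht : t ∈ Set.Ioo (0 : ℝ) 1) (hε : 0 < ε) :
    sSup {x : ℝ | ∃ μ ∈ Set.Ioo (0 : ℝ) 1, x = Uinf μ t - U μ t ε 0} ≥
      1 / ((1 - t) * Real.exp ε + t) := by
  obtain ⟨ht0, ht1⟩ := ht
  have hexp : (1 : ℝ) ≤ Real.exp ε := Real.one_le_exp (by positivity)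
  set D : ℝ := (1 - t) * Real.exp ε + t with hD
  have hD1 : (1 : ℝ) ≤ D := by nlinarith
  have hDpos : 0 < D := by linarith
  set S := {x : ℝ | ∃ μ ∈ Set.Ioo (0 : ℝ) 1, x = Uinf μ t - U μ t ε 0} with hS
  have hbdd : BddAbove S := by
    refine ⟨1, ?_⟩
    rintro x ⟨μ, ⟨hμ0, hμ1⟩, rfl⟩
    have := Uinf_le_one μ t hμ0 hμ1
    have := U_nonneg μ t ε 0
    linarith
  -- key: for every μ ∈ (0, t/D), μ/t ≤ sSup S
  have hkey : ∀ μ : ℝ, 0 < μ → μ * D < t → μ / t ≤ sSup S := by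
    intro μ hμ0 hcrit
    have hμt : μ < t := by nlinarith [mul_le_mul_of_nonneg_left hD1 hμ0.le]
    have hμ1 : μ < 1 := lt_trans hμt ht1
    have hU : U μ t ε 0 ≤ 0 := U_nonpos μ t ε hμ0 hμ1 ht0 ht1 hexp hcrit
    have hUinf : μ / t ≤ Uinf μ t := Uinf_ge μ t hμ0 ht1 hμt ht0
    have hmem : Uinf μ t - U μ t ε 0 ∈ S := ⟨μ, ⟨hμ0, hμ1⟩, rfl⟩
    calc μ / t ≤ Uinf μ t - U μ t ε 0 := by linarith
    _ ≤ sSup S := le_csSup hbdd hmem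
  rw [ge_iff_le]
  refine le_of_forall_lt fun c hc => ?_
  -- choose μ = (max c 0 * t + t/D)/2
  set c' := max c 0 with hc'
  have hc'0 : 0 ≤ c' := le_max_right _ _
  have hc'lt : c' < 1 / D := by
    rcases le_or_gt c 0 with h | h
    · rw [hc', max_eq_right h]; positivity
    · rw [hc', max_eq_left h.le]; exact hc
  set μ := (c' * t + t / D) / 2 with hμ
  have hμ0 : 0 < μ := by
    have : 0 < t / D := by positivity
    have : 0 ≤ c' * t := by positivity
    rw [hμ]; linarith
  have hct : c' * t < t / D := by
    rw [lt_div_iff₀ hDpos]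
    calc c' * t * D = (c' * D) * t := by ring
    _ < (1 / D * D) * t := by
        apply mul_lt_mul_of_pos_right _ ht0
        exact mul_lt_mul_of_pos_right hc'lt hDpos
    _ = t := by field_simp
  have hcrit : μ * D < t := by
    rw [hμ]
    rw [div_mul_eq_mul_div, div_lt_iff₀ (by norm_num : (0:ℝ) < 2)]
    have h1 : t / D * D = t := by field_simp
    nlinarith
  have hle := hkey μ hμ0 hcrit
  have hcμ : c < μ / t := by
    have : c' * t < μ := by rw [hμ]; linarith
    have h2 : c' < μ / t := by rwa [lt_div_iff₀ ht0]
    exact lt_of_le_of_lt (le_max_left c 0) h2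
  linarith
end

section
/- Corollary to Proposition 3.6: For every threshold t with 0.01 ≤ t < 1 and every ε with 0 < ε ≤ 1, there exists a prior μ ∈ (0,1) such that U_∞(μ,t) − U(μ,t,ε,0) ≥ 0.37. -/
set_option maxHeartbeats 2000000 in
/-- Corollary to Proposition 3.6: for every threshold `t` with `0.01 ≤ t < 1` and
every `ε` with `0 < ε ≤ 1`, there is a prior `μ ∈ (0,1)` with
`Uinf(μ,t) − U(μ,t,ε,0) ≥ 0.37`. -/
theorem stmt7 (t ε : ℝ) (ht1 : 0.01 ≤ t) (ht2 : t < 1) (hε1 : 0 < ε) (hε2 : ε ≤ 1) :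
    ∃ μ ∈ Set.Ioo (0 : ℝ) 1, Uinf μ t - U μ t ε 0 ≥ 0.37 := by
  have ht0 : (0 : ℝ) < t := by linarith
  set μ : ℝ := 0.3701 * t with hμdef
  have hμ0 : 0 < μ := by positivity
  have hμt : μ < t := by nlinarith
  have hμ1 : μ < 1 := by linarith
  have hexp : Real.exp ε ≤ 2.7182818286 := by
    have h1 : Real.exp ε ≤ Real.exp 1 := Real.exp_le_exp.mpr hε2
    have h2 := Real.exp_one_lt_d9
    linarith
  have hexp0 : 0 < Real.exp ε := Real.exp_pos ε
  refine ⟨μ, ⟨hμ0, hμ1⟩, ?_⟩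
  -- Lower bound on Uinf
  have hUinf : (0.3701 : ℝ) ≤ Uinf μ t := by
    have hbdd : BddAbove {x : ℝ | ∃ p ∈ FeasAll μ,
        x = ((p.2 - μ) * Vt t p.1 + (μ - p.1) * Vt t p.2) / (p.2 - p.1)} := by
      refine ⟨1, ?_⟩
      rintro x ⟨p, ⟨h0, h1, h2, h3, h4⟩, rfl⟩
      have hd : 0 < p.2 - p.1 := by linarith
      have hV1a : Vt t p.1 ≤ 1 := by unfold Vt; split <;> norm_num
      have hV1b : 0 ≤ Vt t p.1 := by unfold Vt; split <;> norm_num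
      have hV2a : Vt t p.2 ≤ 1 := by unfold Vt; split <;> norm_num
      have hV2b : 0 ≤ Vt t p.2 := by unfold Vt; split <;> norm_num
      rw [div_le_one hd]
      nlinarith
    have hmem : (0.3701 : ℝ) ∈ {x : ℝ | ∃ p ∈ FeasAll μ,
        x = ((p.2 - μ) * Vt t p.1 + (μ - p.1) * Vt t p.2) / (p.2 - p.1)} := by
      refine ⟨((0 : ℝ), t), ⟨le_refl 0, le_of_lt hμ0, le_of_lt hμt, le_of_lt ht2, ht0⟩, ?_⟩
      show (0.3701 : ℝ) = ((t - μ) * Vt t 0 + (μ - 0) * Vt t t) / (t - 0)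
      have hV1 : Vt t 0 = 0 := by unfold Vt; rw [if_neg]; linarith
      have hV2 : Vt t t = 1 := by unfold Vt; rw [if_pos le_rfl]
      rw [hV1, hV2, hμdef]
      field_simp
      have ht0' : t - 0 ≠ 0 := by simpa using ht0.ne'
      rw [eq_div_iff ht0']
      ring
    have := le_csSup hbdd hmem
    exact le_trans this (le_max_right _ _)
  -- Upper bound on U
  have hU : U μ t ε 0 ≤ 0 := by
    have hVμ : Vt t μ = 0 := by unfold Vt; rw [if_neg]; linarith
    have hsup : sSup {x : ℝ | ∃ p ∈ Feas μ ε 0,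
        x = ((p.2 - μ) * Vt t p.1 + (μ - p.1) * Vt t p.2) / (p.2 - p.1)} ≤ 0 := by
      by_cases hne : {x : ℝ | ∃ p ∈ Feas μ ε 0,
          x = ((p.2 - μ) * Vt t p.1 + (μ - p.1) * Vt t p.2) / (p.2 - p.1)}.Nonempty
      · refine csSup_le hne ?_
        rintro x ⟨p, ⟨h0, h1, h2, h3, h4, hc1, hc2⟩, rfl⟩
        have hd : 0 < p.2 - p.1 := by linarith
        have h1μ : 0 < 1 - μ := by linarith
        have hV1 : Vt t p.1 = 0 := by unfold Vt; rw [if_neg]; linarith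
        rcases eq_or_lt_of_le h1 with heq | hlt
        · rw [hV1, heq]
          simp
        · -- p.1 < μ, derive the odds constraint on p.2
          have hBC : (p.2 / μ - Real.exp ε * (1 - p.2) / (1 - μ)) * (μ - p.1) ≤ 0 := by
            have := (div_le_iff₀ hd).mp hc2
            linarith
          have hB : p.2 / μ - Real.exp ε * (1 - p.2) / (1 - μ) ≤ 0 := by
            rcases mul_nonpos_iff.mp hBC with ⟨hb, hc⟩ | ⟨hb, hc⟩
            · linarith
            · exact hb
          have hodds : p.2 * (1 - μ) ≤ Real.exp ε * (1 - p.2) * μ := by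
            have hB' : p.2 / μ ≤ Real.exp ε * (1 - p.2) / (1 - μ) := by linarith
            exact (div_le_div_iff₀ hμ0 h1μ).mp hB'
          have hV2 : Vt t p.2 = 0 := by
            unfold Vt; rw [if_neg]
            intro hle
            have h1p2 : 0 ≤ 1 - p.2 := by linarith
            have hstep1 : t * (1 - μ) ≤ Real.exp ε * (1 - p.2) * μ := by
              nlinarith [mul_nonneg (by linarith : (0:ℝ) ≤ p.2 - t) h1μ.le]
            have hA : Real.exp ε * (1 - p.2) ≤ 2.7182818286 * (1 - t) :=
              mul_le_mul hexp (by linarith) h1p2 (by norm_num)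
            have hstep2 : Real.exp ε * (1 - p.2) * μ ≤ 2.7182818286 * (1 - t) * μ :=
              mul_le_mul_of_nonneg_right hA hμ0.le
            have hsq : t * 0.01 ≤ t * t := mul_le_mul_of_nonneg_left ht1 ht0.le
            rw [hμdef] at hstep1 hstep2
            nlinarith [hsq, hstep1, hstep2]
          rw [hV1, hV2]
          simp
      · rw [Set.not_nonempty_iff_eq_empty] at hne
        rw [hne, Real.sSup_empty]
    rw [U, hVμ]
    exact max_le le_rfl hsup
  linarith
end

section
/- Proposition 3.8: For every threshold t ∈ (0,1), every ε > 0 and δ > 0, the prior μ = t/2 satisfies U_∞(μ,t) − U(μ,t,ε,δ) ≥ 1/2 − min{ (1−μ)(δ + e^ε − 1)/((1−μ)(2e^ε − 1) + μ), (1−μ)δ / max{2(1−μ)δ, (1−μ)(2 − e^ε) + e^ε μ} }. -/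
/-- The unconstrained optimum is at least `1/2` at prior `t/2`. -/
lemma Uinf_ge_half (t : ℝ) (ht0 : 0 < t) (ht1 : t < 1) :
    (1 : ℝ) / 2 ≤ Uinf (t / 2) t := by
  set μ := t / 2 with hμ_def
  have hμ0 : 0 < μ := by rw [hμ_def]; linarith
  have hμt : μ < t := by rw [hμ_def]; linarith
  have hbdd : BddAbove {x : ℝ | ∃ p ∈ FeasAll μ,
      x = ((p.2 - μ) * Vt t p.1 + (μ - p.1) * Vt t p.2) / (p.2 - p.1)} := by
    refine ⟨1, ?_⟩
    rintro x ⟨p, hp, rfl⟩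
    simp only [FeasAll, Set.mem_setOf_eq] at hp
    obtain ⟨h1, h2, h3, h4, h5⟩ := hp
    have hD : 0 < p.2 - p.1 := sub_pos.mpr h5
    rw [div_le_one hD]
    have e1 : (p.2 - μ) * Vt t p.1 ≤ (p.2 - μ) * 1 :=
      mul_le_mul_of_nonneg_left (Vt_le_one t p.1) (by linarith)
    have e2 : (μ - p.1) * Vt t p.2 ≤ (μ - p.1) * 1 :=
      mul_le_mul_of_nonneg_left (Vt_le_one t p.2) (by linarith)
    linarith
  have hmem : (1 : ℝ) / 2 ∈ {x : ℝ | ∃ p ∈ FeasAll μ,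
      x = ((p.2 - μ) * Vt t p.1 + (μ - p.1) * Vt t p.2) / (p.2 - p.1)} := by
    refine ⟨((0 : ℝ), t), ?_, ?_⟩
    · simp only [FeasAll, Set.mem_setOf_eq]
      exact ⟨le_rfl, hμ0.le, hμt.le, ht1.le, ht0⟩
    · have hV0 : Vt t (0 : ℝ) = 0 := if_neg (by linarith)
      have hVt : Vt t t = 1 := if_pos le_rfl
      simp only [hV0, hVt]
      rw [hμ_def]
      field_simp
      rw [eq_div_iff (sub_ne_zero.mpr ht0.ne')]; ring
  unfold Uinf
  exact le_trans (le_csSup hbdd hmem) (le_max_right _ _)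

set_option maxHeartbeats 1000000 in
/-- Proposition 3.8: for every threshold `t ∈ (0,1)` and all `ε, δ > 0`, the prior
`μ = t/2` satisfies
`Uinf(μ,t) − U(μ,t,ε,δ) ≥ 1/2 − min{ (1−μ)(δ+e^ε−1)/((1−μ)(2e^ε−1)+μ),
(1−μ)δ / max{2(1−μ)δ, (1−μ)(2−e^ε)+e^ε μ} }`. -/
theorem stmt8 (t ε δ : ℝ) (ht : t ∈ Set.Ioo (0 : ℝ) 1) (hε : 0 < ε) (hδ : 0 < δ) :
    Uinf (t / 2) t - U (t / 2) t ε δ ≥ 1 / 2 -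
      min ((1 - t / 2) * (δ + Real.exp ε - 1) /
            ((1 - t / 2) * (2 * Real.exp ε - 1) + t / 2))
          ((1 - t / 2) * δ /
            max (2 * (1 - t / 2) * δ)
              ((1 - t / 2) * (2 - Real.exp ε) + Real.exp ε * (t / 2))) := by
  obtain ⟨ht0, ht1⟩ := ht
  have hUinf : (1 : ℝ) / 2 ≤ Uinf (t / 2) t := Uinf_ge_half t ht0 ht1
  have he' : 1 + ε ≤ Real.exp ε := by linarith [Real.add_one_le_exp ε]
  -- Bound the constrained utility above, in an abstract form.
  suffices key : ∀ e μ : ℝ, 1 < e → 0 < μ → μ < t → 2 * μ = t → μ < 1 →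
      (∀ p : ℝ × ℝ, p ∈ Feas μ ε δ →
        ((1 - p.1) / (1 - μ) - e * p.1 / μ) * (p.2 - μ) / (p.2 - p.1) ≤ δ ∧
        (p.2 / μ - e * (1 - p.2) / (1 - μ)) * (μ - p.1) / (p.2 - p.1) ≤ δ) →
      U μ t ε δ ≤
        min ((1 - μ) * (δ + e - 1) / ((1 - μ) * (2 * e - 1) + μ))
          ((1 - μ) * δ / max (2 * (1 - μ) * δ) ((1 - μ) * (2 - e) + e * μ)) by
    have hμ0 : (0 : ℝ) < t / 2 := by linarith
    have hU := key (Real.exp ε) (t / 2) (by linarith) hμ0 (by linarith) (by ring)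
      (by linarith) (fun p hp => ⟨hp.2.2.2.2.2.1, hp.2.2.2.2.2.2⟩)
    linarith
  intro e μ he1 hμ0 hμt h2μ hμ1 hfeas
  have h1μ : 0 < 1 - μ := by linarith
  have hdenA : 0 < (1 - μ) * (2 * e - 1) + μ := by nlinarith
  have hBden : 0 < max (2 * (1 - μ) * δ) ((1 - μ) * (2 - e) + e * μ) :=
    lt_max_of_lt_left (by nlinarith)
  have hA0 : 0 ≤ (1 - μ) * (δ + e - 1) / ((1 - μ) * (2 * e - 1) + μ) :=
    div_nonneg (by nlinarith) hdenA.le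
  have hB0 : 0 ≤ (1 - μ) * δ / max (2 * (1 - μ) * δ) ((1 - μ) * (2 - e) + e * μ) :=
    div_nonneg (by nlinarith) hBden.le
  unfold U
  apply max_le
  · rw [show Vt t μ = 0 from if_neg (not_le.mpr hμt)]
    exact le_min hA0 hB0
  · apply Real.sSup_le _ (le_min hA0 hB0)
    rintro x ⟨p, hp, rfl⟩
    obtain ⟨hC1, hC2⟩ := hfeas p hp
    simp only [Feas, Set.mem_setOf_eq] at hp
    obtain ⟨h1, h2, h3, h4, h5, -, -⟩ := hp
    have hD : 0 < p.2 - p.1 := sub_pos.mpr h5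
    have hV1 : Vt t p.1 = 0 := if_neg (by linarith)
    by_cases hq2 : t ≤ p.2
    · have hV2 : Vt t p.2 = 1 := if_pos hq2
      rw [hV1, hV2]
      have hq2' : 2 * μ ≤ p.2 := by rw [h2μ]; exact hq2
      rw [div_le_iff₀ hD] at hC1 hC2
      have H1 : ((1 - p.1) * μ - e * p.1 * (1 - μ)) * (p.2 - μ) ≤
          δ * (p.2 - p.1) * (μ * (1 - μ)) := by
        have h := mul_le_mul_of_nonneg_right hC1 (mul_pos hμ0 h1μ).le
        calc ((1 - p.1) * μ - e * p.1 * (1 - μ)) * (p.2 - μ)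
            = (((1 - p.1) / (1 - μ) - e * p.1 / μ) * (μ * (1 - μ))) * (p.2 - μ) := by
              rw [show ((1 - p.1) / (1 - μ) - e * p.1 / μ) * (μ * (1 - μ)) =
                  (1 - p.1) * μ - e * p.1 * (1 - μ) by field_simp]
          _ = ((1 - p.1) / (1 - μ) - e * p.1 / μ) * (p.2 - μ) * (μ * (1 - μ)) := by ring
          _ ≤ δ * (p.2 - p.1) * (μ * (1 - μ)) := h
      have H2 : (p.2 * (1 - μ) - e * μ * (1 - p.2)) * (μ - p.1) ≤
          δ * (p.2 - p.1) * (μ * (1 - μ)) := by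
        have h := mul_le_mul_of_nonneg_right hC2 (mul_pos hμ0 h1μ).le
        calc (p.2 * (1 - μ) - e * μ * (1 - p.2)) * (μ - p.1)
            = ((p.2 / μ - e * (1 - p.2) / (1 - μ)) * (μ * (1 - μ))) * (μ - p.1) := by
              rw [show (p.2 / μ - e * (1 - p.2) / (1 - μ)) * (μ * (1 - μ)) =
                  p.2 * (1 - μ) - e * μ * (1 - p.2) by field_simp]
          _ = (p.2 / μ - e * (1 - p.2) / (1 - μ)) * (μ - p.1) * (μ * (1 - μ)) := by ring
          _ ≤ δ * (p.2 - p.1) * (μ * (1 - μ)) := h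
      apply le_min
      · rw [div_le_div_iff₀ hD hdenA]
        have P : 0 ≤ (μ - p.1) * ((p.2 - 2 * μ) * (e * (1 - μ) + μ)) :=
          mul_nonneg (by linarith) (mul_nonneg (by linarith) (by nlinarith))
        have key2 : μ * (((p.2 - μ) * 0 + (μ - p.1) * 1) * ((1 - μ) * (2 * e - 1) + μ)) ≤
            μ * ((1 - μ) * (δ + e - 1) * (p.2 - p.1)) := by nlinarith [H1, P]
        exact le_of_mul_le_mul_left key2 hμ0
      · rw [div_le_div_iff₀ hD hBden]
        rcases le_or_gt ((1 - μ) * (2 - e) + e * μ) (2 * (1 - μ) * δ) with hK | hK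
        · rw [max_eq_left hK]
          nlinarith [mul_nonneg (mul_nonneg h1μ.le hδ.le)
            (by linarith : 0 ≤ p.2 - p.1 - 2 * (μ - p.1))]
        · rw [max_eq_right hK.le]
          have Q : 0 ≤ (μ - p.1) * ((p.2 - 2 * μ) * (1 - μ + e * μ)) :=
            mul_nonneg (by linarith) (mul_nonneg (by linarith) (by nlinarith))
          have key2 : μ * (((p.2 - μ) * 0 + (μ - p.1) * 1) * ((1 - μ) * (2 - e) + e * μ)) ≤
              μ * ((1 - μ) * δ * (p.2 - p.1)) := by nlinarith [H2, Q]
          exact le_of_mul_le_mul_left key2 hμ0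
    · have hV2 : Vt t p.2 = 0 := if_neg hq2
      rw [hV1, hV2]
      rw [show ((p.2 - μ) * 0 + (μ - p.1) * 0) / (p.2 - p.1) = 0 by ring]
      exact le_min hA0 hB0
end

section
/- Corollary to Proposition 3.8: For every threshold t ∈ (0,1), if 0 < δ ≤ 0.01 and 0 < ε ≤ 0.5, then there exists a prior μ ∈ (0,1) (namely μ = t/2) such that U_∞(μ,t) − U(μ,t,ε,δ) ≥ 0.47. -/
/-- Corollary to Proposition 3.8: for every threshold `t ∈ (0,1)`, if `0 < δ ≤ 0.01`
and `0 < ε ≤ 0.5`, then there is a prior `μ ∈ (0,1)` (namely `μ = t/2`) with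
`Uinf(μ,t) − U(μ,t,ε,δ) ≥ 0.47`. -/
theorem stmt9 (t ε δ : ℝ) (ht : t ∈ Set.Ioo (0 : ℝ) 1)
    (hδ1 : 0 < δ) (hδ2 : δ ≤ 0.01) (hε1 : 0 < ε) (hε2 : ε ≤ 0.5) :
    ∃ μ ∈ Set.Ioo (0 : ℝ) 1, μ = t / 2 ∧ Uinf μ t - U μ t ε δ ≥ 0.47 := by
  obtain ⟨ht0, ht1⟩ := ht
  set μ := t / 2 with hμdef
  have hμ0 : 0 < μ := by simp only [hμdef]; linarith
  have hμt : μ < t := by simp only [hμdef]; linarith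
  have hμ1 : μ < 1 := by linarith
  refine ⟨μ, ⟨hμ0, hμ1⟩, rfl, ?_⟩
  have hVμ : Vt t μ = 0 := if_neg (not_le.2 hμt)
  -- exp bound
  have hexp : Real.exp ε ≤ 1.65 := by
    have h1 : Real.exp ε ≤ Real.exp 0.5 := Real.exp_le_exp.2 hε2
    have h2 : Real.exp 0.5 < 1.65 := by
      have h3 : Real.exp 0.5 ^ 2 < 1.65 ^ 2 := by
        have : Real.exp ((2 : ℕ) * 0.5) = Real.exp 0.5 ^ 2 := Real.exp_nat_mul 0.5 2
        have he : Real.exp 0.5 ^ 2 = Real.exp 1 := by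
          rw [← this]; norm_num
        rw [he]
        have := Real.exp_one_lt_d9
        nlinarith
      exact lt_of_pow_lt_pow_left₀ 2 (by norm_num) h3
    linarith
  -- upper bound on U
  have hU : U μ t ε δ ≤ 0.03 := by
    unfold U
    rw [hVμ]
    apply max_le (by norm_num)
    apply Real.sSup_le _ (by norm_num)
    rintro x ⟨p, ⟨h1, h2, h3, h4, h5, h6, h7⟩, rfl⟩
    have hV1 : Vt t p.1 = 0 := if_neg (not_le.2 (by linarith))
    rw [hV1]
    by_cases hc : t ≤ p.2
    · have hV2 : Vt t p.2 = 1 := if_pos hc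
      rw [hV2]
      have hd : (0 : ℝ) < p.2 - p.1 := by linarith
      have hy0 : 0 ≤ (μ - p.1) / (p.2 - p.1) := div_nonneg (by linarith) (by linarith)
      set y := (μ - p.1) / (p.2 - p.1) with hy
      have hcoef : (0.35 : ℝ) ≤ p.2 / μ - Real.exp ε * (1 - p.2) / (1 - μ) := by
        have hA : (2 : ℝ) ≤ p.2 / μ := by
          rw [le_div_iff₀ hμ0]
          simp only [hμdef]; linarith
        have hB : Real.exp ε * (1 - p.2) / (1 - μ) ≤ 1.65 := by
          rw [div_le_iff₀ (by linarith : (0 : ℝ) < 1 - μ)]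
          have hε0 : (0 : ℝ) ≤ Real.exp ε := (Real.exp_pos ε).le
          nlinarith [Real.exp_pos ε]
        linarith
      have hcy : (p.2 / μ - Real.exp ε * (1 - p.2) / (1 - μ)) * y ≤ δ := by
        rw [hy, ← mul_div_assoc]
        exact h7
      have h035 : (0.35 : ℝ) * y ≤ (p.2 / μ - Real.exp ε * (1 - p.2) / (1 - μ)) * y :=
        mul_le_mul_of_nonneg_right hcoef hy0
      have hyb : y ≤ 0.03 := by nlinarith
      calc ((p.2 - μ) * 0 + (μ - p.1) * 1) / (p.2 - p.1) = y := by rw [hy]; ring_nf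
        _ ≤ 0.03 := hyb
    · have hV2 : Vt t p.2 = 0 := if_neg hc
      rw [hV2]
      norm_num
  -- lower bound on Uinf
  have hUinf : (1 / 2 : ℝ) ≤ Uinf μ t := by
    unfold Uinf
    apply le_max_of_le_right
    have hbdd : BddAbove {x : ℝ | ∃ p ∈ FeasAll μ,
        x = ((p.2 - μ) * Vt t p.1 + (μ - p.1) * Vt t p.2) / (p.2 - p.1)} := by
      refine ⟨1, ?_⟩
      rintro x ⟨p, ⟨g1, g2, g3, g4, g5⟩, rfl⟩
      have hd : (0 : ℝ) < p.2 - p.1 := by linarith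
      have hv1 : Vt t p.1 ≤ 1 ∧ 0 ≤ Vt t p.1 := by unfold Vt; split <;> norm_num
      have hv2 : Vt t p.2 ≤ 1 ∧ 0 ≤ Vt t p.2 := by unfold Vt; split <;> norm_num
      rw [div_le_one hd]
      nlinarith [hv1.1, hv1.2, hv2.1, hv2.2]
    have hmem : (1 / 2 : ℝ) ∈ {x : ℝ | ∃ p ∈ FeasAll μ,
        x = ((p.2 - μ) * Vt t p.1 + (μ - p.1) * Vt t p.2) / (p.2 - p.1)} := by
      refine ⟨((0 : ℝ), t), ⟨le_refl 0, hμ0.le, hμt.le, ht1.le, ht0⟩, ?_⟩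
      have hv1 : Vt t (0 : ℝ) = 0 := if_neg (not_le.2 ht0)
      have hv2 : Vt t t = 1 := if_pos (le_refl t)
      simp only [hv1, hv2]
      rw [hμdef]
      field_simp
      ring
    exact le_csSup hbdd hmem
  linarith
end

section
/- Lemma 4.4 (support bound with ex ante constraints): Fix a finite state space Θ with k states, a prior μ ∈ Δ(Θ), continuous functions g₁,…,g_m : Δ(Θ) → ℝ, constants c₁,…,c_m ∈ ℝ, and an upper semicontinuous function f : Δ(Θ) → ℝ. Call a finitely supported probability distribution τ on Δ(Θ) valid if its barycenter is μ and E_{q∼τ}[g_i(q)] ≤ c_i for all i = 1,…,m. If the set of valid distributions is nonempty, then there exists a valid τ* with |supp(τ*)| ≤ k + m such that E_{q∼τ*}[f(q)] ≥ E_{q∼τ}[f(q)] for every valid τ. -/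
open scoped BigOperators

/-- The probability simplex `Δ(Θ)` over a finite state space `Θ`. -/
def simplex (Θ : Type*) [Fintype Θ] : Set (Θ → ℝ) :=
  {q | (∀ θ, 0 ≤ q θ) ∧ ∑ θ, q θ = 1}

/-- A (finitely supported) signaling scheme for the prior `μ`: a finitely supported
distribution over posteriors in the simplex whose barycenter is `μ`. -/
def IsScheme {Θ : Type*} [Fintype Θ] (μ : Θ → ℝ) (τ : (Θ → ℝ) →₀ ℝ) : Prop :=
  (∀ q ∈ τ.support, 0 < τ q ∧ q ∈ simplex Θ) ∧
  (∑ q ∈ τ.support, τ q) = 1 ∧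
  (∑ q ∈ τ.support, τ q • q) = μ

/-- The value `E_{q∼τ}[V(q)]` of a signaling scheme `τ` for indirect utility `V`. -/
noncomputable def schemeValue {Θ : Type*} [Fintype Θ]
    (V : (Θ → ℝ) → ℝ) (τ : (Θ → ℝ) →₀ ℝ) : ℝ :=
  ∑ q ∈ τ.support, τ q * V q

/-- The concave hull at `x` of a function `f` restricted to a region `D`:
the supremum of `∑ᵢ λᵢ f(zᵢ)` over finite convex combinations of points `zᵢ ∈ D`
with `∑ᵢ λᵢ zᵢ = x`.  (For a function equal to `f` on `D` and `−∞` off `D`, this is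
its concave hull evaluated at `x`.) -/
noncomputable def concaveHullOn {E : Type*} [AddCommGroup E] [Module ℝ E]
    (f : E → ℝ) (D : Set E) (x : E) : ℝ :=
  sSup {y : ℝ | ∃ (n : ℕ) (z : Fin n → E) (lam : Fin n → ℝ),
    (∀ i, z i ∈ D) ∧ (∀ i, 0 ≤ lam i) ∧ (∑ i, lam i) = 1 ∧
    (∑ i, lam i • z i) = x ∧ y = ∑ i, lam i * f (z i)}

/-- The region of `ε`-differentially private posteriors:
`K(μ,ε) = {q ∈ Δ(Θ) : q(θ)μ(θ′) ≤ e^ε q(θ′)μ(θ) for all (θ,θ′) ∈ A}`. -/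
def Kset {Θ : Type*} [Fintype Θ] (μ : Θ → ℝ) (ε : ℝ) (A : Finset (Θ × Θ)) :
    Set (Θ → ℝ) :=
  {q ∈ simplex Θ | ∀ p ∈ A, q p.1 * μ p.2 ≤ Real.exp ε * (q p.2 * μ p.1)}



section Aux

open Filter Topology

variable {Θ : Type*} [Fintype Θ]

lemma aux_simplex_isClosed : IsClosed (simplex Θ) := by
  have h : simplex Θ = (⋂ θ, {q : Θ → ℝ | 0 ≤ q θ}) ∩ {q : Θ → ℝ | ∑ θ, q θ = 1} := by
    ext q; simp [simplex, Set.mem_iInter]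
  rw [h]
  exact ((isClosed_iInter fun θ => isClosed_le continuous_const (continuous_apply θ))).inter
    (isClosed_eq (continuous_finset_sum _ fun θ _ => continuous_apply θ) continuous_const)

lemma aux_simplex_isCompact : IsCompact (simplex Θ) := by
  have hsub : simplex Θ ⊆ Set.pi Set.univ (fun _ : Θ => Set.Icc (0:ℝ) 1) := by
    intro q hq θ _
    refine ⟨hq.1 θ, ?_⟩
    calc q θ ≤ ∑ θ', q θ' := Finset.single_le_sum (fun θ' _ => hq.1 θ') (Finset.mem_univ θ)
    _ = 1 := hq.2
  exact (isCompact_univ_pi fun _ => isCompact_Icc).of_isClosed_subset aux_simplex_isClosed hsub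

lemma aux_usc_bddAbove {X : Type*} [TopologicalSpace X] {s : Set X} (hs : IsCompact s)
    {f : X → ℝ} (hf : UpperSemicontinuousOn f s) : ∃ M, ∀ x ∈ s, f x ≤ M := by
  have H : ∀ (x : X), x ∈ s → ∃ u : Set X, IsOpen u ∧ x ∈ u ∧ ∀ y ∈ u ∩ s, f y < f x + 1 := by
    intro x hx
    have h := hf x hx (f x + 1) (lt_add_one _)
    rcases mem_nhdsWithin.mp h with ⟨u, hu, hxu, hsub⟩
    exact ⟨u, hu, hxu, fun y hy => hsub hy⟩
  choose u huo hum husub using H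
  rcases hs.elim_nhds_subcover' u (fun x hx => (huo x hx).mem_nhds (hum x hx)) with ⟨t, ht⟩
  rcases t.eq_empty_or_nonempty with rfl | hte
  · refine ⟨0, fun x hx => ?_⟩
    have := ht hx
    simp at this
  · refine ⟨t.sup' hte (fun x => f ↑x + 1), fun x hx => ?_⟩
    rcases Set.mem_iUnion₂.mp (ht hx) with ⟨y, hy, hxy⟩
    have h1 : f x < f ↑y + 1 := husub ↑y y.2 x ⟨hxy, hx⟩
    have h2 := Finset.le_sup' (fun x : s => f ↑x + 1) hy
    exact le_trans (le_of_lt h1) h2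

lemma aux_exists_dependence (m : ℕ) (g : Fin m → (Θ → ℝ) → ℝ) (F : Finset (Θ → ℝ))
    (hF : Fintype.card Θ + m < F.card) :
    ∃ d : (Θ → ℝ) → ℝ, (∃ q ∈ F, d q ≠ 0) ∧
      (∀ θ, ∑ q ∈ F, d q * q θ = 0) ∧ (∀ i, ∑ q ∈ F, d q * g i q = 0) := by
  classical
  set v : F → (Θ → ℝ) × (Fin m → ℝ) := fun q => ((q : Θ → ℝ), fun i => g i q) with hv
  have hnli : ¬ LinearIndependent ℝ v := by
    intro h
    have hcard := h.fintype_card_le_finrank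
    rw [Module.finrank_prod, Module.finrank_pi, Module.finrank_pi, Fintype.card_coe, Fintype.card_fin] at hcard
    omega
  obtain ⟨cf, hsum, j, hj⟩ := Fintype.not_linearIndependent_iff.mp hnli
  set d : (Θ → ℝ) → ℝ := fun q => if h : q ∈ F then cf ⟨q, h⟩ else 0 with hd
  have hdq : ∀ x : F, d ↑x = cf x := fun x => by simp [hd]
  have hFt : ∀ (h : (Θ → ℝ) → ℝ), ∑ q ∈ F, d q * h q = ∑ x : F, cf x * h ↑x := by
    intro h
    rw [← Finset.sum_attach F (fun q => d q * h q), Finset.univ_eq_attach]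
    exact Finset.sum_congr rfl fun x _ => by rw [hdq]
  have h1 : ∑ x : F, cf x • ((x : Θ → ℝ)) = 0 := by
    have h := congrArg Prod.fst hsum
    simpa [Prod.fst_sum, hv] using h
  have h2 : ∑ x : F, cf x • (fun i => g i (x : Θ → ℝ)) = (0 : Fin m → ℝ) := by
    have h := congrArg Prod.snd hsum
    simpa [Prod.snd_sum, hv] using h
  refine ⟨d, ⟨↑j, j.2, by rwa [hdq]⟩, ?_, ?_⟩
  · intro θ
    rw [hFt (fun q => q θ)]
    have h := congrFun h1 θ
    simpa [Finset.sum_apply] using h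
  · intro i
    rw [hFt (g i)]
    have h := congrFun h2 i
    simpa [Finset.sum_apply] using h

end Aux

section Aux2

open Filter Topology

variable {Θ : Type*} [Fintype Θ]

lemma aux_reduce_once {m : ℕ} (μ : Θ → ℝ) (g : Fin m → (Θ → ℝ) → ℝ) (f : (Θ → ℝ) → ℝ)
    (τ : (Θ → ℝ) →₀ ℝ) (hτ : IsScheme μ τ) (d : (Θ → ℝ) → ℝ)
    (hd0 : ∃ q ∈ τ.support, d q ≠ 0)
    (hdμ : ∀ θ, ∑ q ∈ τ.support, d q * q θ = 0)
    (hdg : ∀ i, ∑ q ∈ τ.support, d q * g i q = 0)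
    (hdf : 0 ≤ ∑ q ∈ τ.support, d q * f q) :
    ∃ τ' : (Θ → ℝ) →₀ ℝ, IsScheme μ τ' ∧ τ'.support.card < τ.support.card ∧
      (∀ i, ∑ q ∈ τ'.support, τ' q * g i q = ∑ q ∈ τ.support, τ q * g i q) ∧
      schemeValue f τ ≤ schemeValue f τ' := by
  classical
  obtain ⟨hpos, hsum1, hbary⟩ := hτ
  have hsimp : ∀ q ∈ τ.support, (∀ θ, 0 ≤ q θ) ∧ ∑ θ, q θ = 1 := fun q hq => (hpos q hq).2
  have hd_zero : ∑ q ∈ τ.support, d q = 0 := by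
    have h1 : ∑ θ, (∑ q ∈ τ.support, d q * q θ) = 0 := by simp [hdμ]
    rw [Finset.sum_comm] at h1
    have h2 : ∀ q ∈ τ.support, ∑ θ, d q * q θ = d q := fun q hq => by
      rw [← Finset.mul_sum, (hsimp q hq).2, mul_one]
    rwa [Finset.sum_congr rfl h2] at h1
  have hneg : ∃ q ∈ τ.support, d q < 0 := by
    by_contra h
    push_neg at h
    obtain ⟨q1, hq1, hne1⟩ := hd0
    have := (Finset.sum_eq_zero_iff_of_nonneg (fun q hq => h q hq)).mp hd_zero
    exact hne1 (this q1 hq1)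
  obtain ⟨q₀, hq₀mem, hq₀min⟩ :=
    Finset.exists_min_image (τ.support.filter (fun q => d q < 0)) (fun q => τ q / (-d q))
      (by obtain ⟨q, hq, hlt⟩ := hneg; exact ⟨q, Finset.mem_filter.mpr ⟨hq, hlt⟩⟩)
  have hdq₀ : d q₀ < 0 := (Finset.mem_filter.mp hq₀mem).2
  have hq₀F : q₀ ∈ τ.support := (Finset.mem_filter.mp hq₀mem).1
  set t : ℝ := τ q₀ / (-d q₀) with htdef
  have ht_pos : 0 < t := div_pos (hpos q₀ hq₀F).1 (neg_pos.mpr hdq₀)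
  have hw_nonneg : ∀ q ∈ τ.support, 0 ≤ τ q + t * d q := by
    intro q hq
    rcases lt_or_ge (d q) 0 with hlt | hge
    · have hmin := hq₀min q (Finset.mem_filter.mpr ⟨hq, hlt⟩)
      have h2 : t * (-d q) ≤ τ q := by
        rw [← le_div_iff₀ (neg_pos.mpr hlt)]
        exact hmin
      nlinarith
    · nlinarith [(hpos q hq).1, mul_nonneg ht_pos.le hge]
  have hq₀zero : τ q₀ + t * d q₀ = 0 := by
    have hne' : -d q₀ ≠ 0 := ne_of_gt (neg_pos.mpr hdq₀)
    have : t * d q₀ = -(τ q₀ / (-d q₀) * (-d q₀)) := by rw [htdef]; ring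
    rw [this, div_mul_cancel₀ _ hne']
    ring
  set w : (Θ → ℝ) →₀ ℝ := Finsupp.onFinset τ.support
    (fun q => if q ∈ τ.support then τ q + t * d q else 0)
    (fun q hq => by by_contra hc; exact hq (if_neg hc)) with hwdef
  have hw_apply : ∀ q, w q = if q ∈ τ.support then τ q + t * d q else 0 := fun q => rfl
  have hw_in : ∀ q ∈ τ.support, w q = τ q + t * d q := fun q hq => by
    rw [hw_apply, if_pos hq]
  have hw_supp : w.support ⊆ τ.support := Finsupp.support_onFinset_subset
  have hkey : ∀ h : (Θ → ℝ) → ℝ, ∑ q ∈ w.support, w q * h q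
      = (∑ q ∈ τ.support, τ q * h q) + t * ∑ q ∈ τ.support, d q * h q := by
    intro h
    have e1 : ∑ q ∈ w.support, w q * h q = ∑ q ∈ τ.support, w q * h q :=
      Finset.sum_subset hw_supp (fun q _ hnq => by
        rw [Finsupp.notMem_support_iff.mp hnq, zero_mul])
    rw [e1, Finset.mul_sum, ← Finset.sum_add_distrib]
    exact Finset.sum_congr rfl fun q hq => by rw [hw_in q hq]; ring
  have hq₀_not : q₀ ∉ w.support := by
    rw [Finsupp.notMem_support_iff, hw_in q₀ hq₀F, hq₀zero]
  have hcard : w.support.card < τ.support.card :=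
    Finset.card_lt_card ⟨hw_supp, fun hsub => hq₀_not (hsub hq₀F)⟩
  refine ⟨w, ⟨?_, ?_, ?_⟩, hcard, ?_, ?_⟩
  · intro q hq
    have hqF := hw_supp hq
    constructor
    · have := hw_nonneg q hqF
      rw [← hw_in q hqF] at this
      exact lt_of_le_of_ne this (Ne.symm (Finsupp.mem_support_iff.mp hq))
    · exact (hpos q hqF).2
  · have h := hkey (fun _ => 1)
    simp only [mul_one] at h
    rw [h, hsum1, hd_zero, mul_zero, add_zero]
  · have h := hkey
    ext θ
    rw [Finset.sum_apply]
    simp only [Pi.smul_apply, smul_eq_mul]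
    rw [hkey (fun q => q θ), hdμ θ, mul_zero, add_zero]
    have hb := congrFun hbary θ
    rw [Finset.sum_apply] at hb
    simpa using hb
  · intro i
    rw [hkey (g i), hdg i, mul_zero, add_zero]
  · show (∑ q ∈ τ.support, τ q * f q) ≤ ∑ q ∈ w.support, w q * f q
    rw [hkey f]
    nlinarith [mul_nonneg ht_pos.le hdf]

lemma aux_reduce_all {m : ℕ} (μ : Θ → ℝ) (g : Fin m → (Θ → ℝ) → ℝ) (f : (Θ → ℝ) → ℝ)
    (τ : (Θ → ℝ) →₀ ℝ) (hτ : IsScheme μ τ) :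
    ∃ τ' : (Θ → ℝ) →₀ ℝ, IsScheme μ τ' ∧ τ'.support.card ≤ Fintype.card Θ + m ∧
      (∀ i, ∑ q ∈ τ'.support, τ' q * g i q = ∑ q ∈ τ.support, τ q * g i q) ∧
      schemeValue f τ ≤ schemeValue f τ' := by
  classical
  suffices H : ∀ n (τ : (Θ → ℝ) →₀ ℝ), IsScheme μ τ → τ.support.card ≤ n →
      ∃ τ' : (Θ → ℝ) →₀ ℝ, IsScheme μ τ' ∧ τ'.support.card ≤ Fintype.card Θ + m ∧
      (∀ i, ∑ q ∈ τ'.support, τ' q * g i q = ∑ q ∈ τ.support, τ q * g i q) ∧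
      schemeValue f τ ≤ schemeValue f τ' by
    exact H τ.support.card τ hτ le_rfl
  intro n
  induction n with
  | zero => exact fun τ hτ hc => ⟨τ, hτ, by omega, fun i => rfl, le_rfl⟩
  | succ n ih =>
    intro τ hτ hc
    by_cases hle : τ.support.card ≤ Fintype.card Θ + m
    · exact ⟨τ, hτ, hle, fun i => rfl, le_rfl⟩
    · push_neg at hle
      obtain ⟨d, hd0, hdμ, hdg⟩ := aux_exists_dependence m g τ.support hle
      rcases le_or_gt 0 (∑ q ∈ τ.support, d q * f q) with hdf | hdf
      · obtain ⟨τ'', hs, hcard, hgs, hval⟩ := aux_reduce_once μ g f τ hτ d hd0 hdμ hdg hdf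
        obtain ⟨τ', h1, h2, h3, h4⟩ := ih τ'' hs (by omega)
        exact ⟨τ', h1, h2, fun i => (h3 i).trans (hgs i), le_trans hval h4⟩
      · obtain ⟨τ'', hs, hcard, hgs, hval⟩ := aux_reduce_once μ g f τ hτ (fun q => -d q)
          (by obtain ⟨q, hq, h⟩ := hd0; exact ⟨q, hq, neg_ne_zero.mpr h⟩)
          (fun θ => by simp only [neg_mul]; rw [Finset.sum_neg_distrib, hdμ θ, neg_zero])
          (fun i => by simp only [neg_mul]; rw [Finset.sum_neg_distrib, hdg i, neg_zero])
          (by simp only [neg_mul]; rw [Finset.sum_neg_distrib]; linarith)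
        obtain ⟨τ', h1, h2, h3, h4⟩ := ih τ'' hs (by omega)
        exact ⟨τ', h1, h2, fun i => (h3 i).trans (hgs i), le_trans hval h4⟩

end Aux2

section Aux3

variable {Θ : Type*} [Fintype Θ]

lemma aux_tuple {N : ℕ} (τ : (Θ → ℝ) →₀ ℝ) (μ : Θ → ℝ) (hμ : μ ∈ simplex Θ)
    (hτ : IsScheme μ τ) (hcard : τ.support.card ≤ N) :
    ∃ (lam : Fin N → ℝ) (p : Fin N → Θ → ℝ),
      (∀ j, 0 ≤ lam j) ∧ (∀ j, p j ∈ simplex Θ) ∧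
      ∀ h : (Θ → ℝ) → ℝ, ∑ j, lam j * h (p j) = ∑ q ∈ τ.support, τ q * h q := by
  classical
  set e := τ.support.equivFin with he
  set lam : Fin N → ℝ := fun j =>
    if hj : (j : ℕ) < τ.support.card then τ ↑(e.symm ⟨j, hj⟩) else 0 with hlam
  set p : Fin N → Θ → ℝ := fun j =>
    if hj : (j : ℕ) < τ.support.card then ↑(e.symm ⟨j, hj⟩) else μ with hp
  have hGdef : ∀ (h : (Θ → ℝ) → ℝ) (j : Fin N), lam j * h (p j) =
      (fun n : ℕ => if hj : n < τ.support.card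
        then τ ↑(e.symm ⟨n, hj⟩) * h ↑(e.symm ⟨n, hj⟩) else 0) (j : ℕ) := by
    intro h j
    by_cases hj : (j : ℕ) < τ.support.card
    · simp only [hlam, hp, dif_pos hj]
    · simp only [hlam, hp, dif_neg hj, zero_mul]
  refine ⟨lam, p, ?_, ?_, ?_⟩
  · intro j
    by_cases hj : (j : ℕ) < τ.support.card
    · simp only [hlam, dif_pos hj]
      exact (hτ.1 _ (e.symm ⟨j, hj⟩).2).1.le
    · simp [hlam, dif_neg hj]
  · intro j
    by_cases hj : (j : ℕ) < τ.support.card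
    · simp only [hp, dif_pos hj]
      exact (hτ.1 _ (e.symm ⟨j, hj⟩).2).2
    · simp only [hp, dif_neg hj]
      exact hμ
  · intro h
    set G : ℕ → ℝ := fun n => if hj : n < τ.support.card
      then τ ↑(e.symm ⟨n, hj⟩) * h ↑(e.symm ⟨n, hj⟩) else 0 with hG
    have step1 : ∑ j, lam j * h (p j) = ∑ j : Fin N, G (j : ℕ) :=
      Finset.sum_congr rfl fun j _ => hGdef h j
    have step2 : ∑ j : Fin N, G (j : ℕ) = ∑ n ∈ Finset.range N, G n :=
      Fin.sum_univ_eq_sum_range G N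
    have step3 : ∑ n ∈ Finset.range N, G n = ∑ n ∈ Finset.range τ.support.card, G n :=
      (Finset.sum_subset (Finset.range_subset_range.mpr hcard) (fun n _ hn => by
        rw [hG]; exact dif_neg (by simpa using hn))).symm
    have step4 : ∑ n ∈ Finset.range τ.support.card, G n
        = ∑ j : Fin τ.support.card, G (j : ℕ) :=
      (Fin.sum_univ_eq_sum_range G τ.support.card).symm
    have step5 : ∑ j : Fin τ.support.card, G (j : ℕ)
        = ∑ j : Fin τ.support.card, τ ↑(e.symm j) * h ↑(e.symm j) := by
      refine Finset.sum_congr rfl fun j _ => ?_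
      rw [hG]
      simp only [dif_pos j.2, Fin.eta]
    have step6 : ∑ j : Fin τ.support.card, τ ↑(e.symm j) * h ↑(e.symm j)
        = ∑ x : τ.support, τ ↑x * h ↑x := Equiv.sum_comp e.symm (fun x => τ ↑x * h ↑x)
    have step7 : ∑ x : τ.support, τ ↑x * h ↑x = ∑ q ∈ τ.support, τ q * h q := by
      rw [Finset.univ_eq_attach]
      exact Finset.sum_attach τ.support (fun q => τ q * h q)
    rw [step1, step2, step3, step4, step5, step6, step7]

end Aux3

section Main
open Filter Topology

/-- Lemma 4.4 (support bound with ex ante constraints): with `k = |Θ|` states and `m`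
ex ante constraints `E_{q∼τ}[gᵢ(q)] ≤ cᵢ`, if some valid scheme exists then there is an
optimal valid scheme whose support has at most `k + m` points. -/
theorem stmt11 {Θ : Type*} [Fintype Θ] (m : ℕ)
    (μ : Θ → ℝ) (hμ : μ ∈ simplex Θ)
    (g : Fin m → (Θ → ℝ) → ℝ) (hg : ∀ i, ContinuousOn (g i) (simplex Θ))
    (c : Fin m → ℝ)
    (f : (Θ → ℝ) → ℝ) (hf : UpperSemicontinuousOn f (simplex Θ))
    (hne : ∃ τ : (Θ → ℝ) →₀ ℝ, IsScheme μ τ ∧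
      ∀ i, (∑ q ∈ τ.support, τ q * g i q) ≤ c i) :
    ∃ τ : (Θ → ℝ) →₀ ℝ,
      (IsScheme μ τ ∧ ∀ i, (∑ q ∈ τ.support, τ q * g i q) ≤ c i) ∧
      τ.support.card ≤ Fintype.card Θ + m ∧
      ∀ τ' : (Θ → ℝ) →₀ ℝ,
        (IsScheme μ τ' ∧ ∀ i, (∑ q ∈ τ'.support, τ' q * g i q) ≤ c i) →
        schemeValue f τ' ≤ schemeValue f τ := by
  classical
  obtain ⟨M, hM⟩ := aux_usc_bddAbove aux_simplex_isCompact hf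
  have hΘ : 0 < Fintype.card Θ := by
    by_contra h
    push_neg at h
    have hempty : IsEmpty Θ := by
      rw [Nat.le_zero] at h
      exact Fintype.card_eq_zero_iff.mp h
    have h1 := hμ.2
    rw [Finset.univ_eq_empty, Finset.sum_empty] at h1
    norm_num at h1
  set N := Fintype.card Θ + m with hN
  have hNpos : 0 < N := by omega
  have hval_le : ∀ τ : (Θ → ℝ) →₀ ℝ, IsScheme μ τ → schemeValue f τ ≤ M := by
    intro τ hτ
    calc schemeValue f τ = ∑ q ∈ τ.support, τ q * f q := rfl
      _ ≤ ∑ q ∈ τ.support, τ q * M := Finset.sum_le_sum fun q hq =>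
          mul_le_mul_of_nonneg_left (hM q (hτ.1 q hq).2) (hτ.1 q hq).1.le
      _ = (∑ q ∈ τ.support, τ q) * M := (Finset.sum_mul _ _ _).symm
      _ = M := by rw [hτ.2.1, one_mul]
  set S : Set ℝ := {y | ∃ τ : (Θ → ℝ) →₀ ℝ, (IsScheme μ τ ∧
    ∀ i, (∑ q ∈ τ.support, τ q * g i q) ≤ c i) ∧ schemeValue f τ = y} with hSdef
  have hSne : S.Nonempty := by
    obtain ⟨τ0, h0⟩ := hne
    exact ⟨schemeValue f τ0, τ0, h0, rfl⟩
  have hSbdd : BddAbove S := by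
    refine ⟨M, ?_⟩
    rintro y ⟨τ, hτ, rfl⟩
    exact hval_le τ hτ.1
  set v := sSup S with hv
  have hmemS : ∀ τ : (Θ → ℝ) →₀ ℝ, IsScheme μ τ →
      (∀ i, (∑ q ∈ τ.support, τ q * g i q) ≤ c i) → schemeValue f τ ≤ v :=
    fun τ h1 h2 => le_csSup hSbdd ⟨τ, ⟨h1, h2⟩, rfl⟩
  obtain ⟨x, hxmono, hxtend, hxS⟩ := exists_seq_tendsto_sSup hSne hSbdd
  have hchoice : ∀ n, ∃ τ' : (Θ → ℝ) →₀ ℝ, (IsScheme μ τ' ∧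
      (∀ i, (∑ q ∈ τ'.support, τ' q * g i q) ≤ c i)) ∧ τ'.support.card ≤ N ∧
      x n ≤ schemeValue f τ' := by
    intro n
    obtain ⟨τ0, hτ0, hval0⟩ := hxS n
    obtain ⟨τ', h1, h2, h3, h4⟩ := aux_reduce_all μ g f τ0 hτ0.1
    exact ⟨τ', ⟨h1, fun i => (h3 i).trans_le (hτ0.2 i)⟩, h2, hval0 ▸ h4⟩
  choose T hTvalid hTcard hTval using hchoice
  have hTtend : Tendsto (fun n => schemeValue f (T n)) atTop (𝓝 v) :=
    tendsto_of_tendsto_of_tendsto_of_le_of_le hxtend tendsto_const_nhds hTval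
      (fun n => hmemS _ (hTvalid n).1 (hTvalid n).2)
  have htuple : ∀ n, ∃ (lam : Fin N → ℝ) (p : Fin N → Θ → ℝ),
      (∀ j, 0 ≤ lam j) ∧ (∀ j, p j ∈ simplex Θ) ∧
      ∀ h : (Θ → ℝ) → ℝ, ∑ j, lam j * h (p j) = ∑ q ∈ (T n).support, T n q * h q :=
    fun n => aux_tuple (T n) μ hμ (hTvalid n).1 (hTcard n)
  choose lam p hlam0 hpmem hsump using htuple
  have hlamsum : ∀ n, ∑ j, lam n j = 1 := by
    intro n
    have h := hsump n (fun _ => 1)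
    simpa [(hTvalid n).1.2.1] using h
  have hlam1 : ∀ n j, lam n j ≤ 1 := by
    intro n j
    calc lam n j ≤ ∑ j', lam n j' :=
          Finset.single_le_sum (fun j' _ => hlam0 n j') (Finset.mem_univ j)
      _ = 1 := hlamsum n
  set K : Set ((Fin N → ℝ) × (Fin N → Θ → ℝ)) :=
    (Set.pi Set.univ fun _ => Set.Icc (0:ℝ) 1) ×ˢ (Set.pi Set.univ fun _ => simplex Θ) with hK
  have hKcomp : IsCompact K :=
    (isCompact_univ_pi fun _ => isCompact_Icc).prod
      (isCompact_univ_pi fun _ => aux_simplex_isCompact)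
  have hmemK : ∀ n, (lam n, p n) ∈ K := fun n =>
    ⟨fun j _ => ⟨hlam0 n j, hlam1 n j⟩, fun j _ => hpmem n j⟩
  obtain ⟨a, haK, φ, hφ, hconv⟩ := hKcomp.tendsto_subseq hmemK
  have hlamconv : ∀ j, Tendsto (fun n => lam (φ n) j) atTop (𝓝 (a.1 j)) := by
    intro j
    have hcont : Continuous fun y : (Fin N → ℝ) × (Fin N → Θ → ℝ) => y.1 j :=
      (continuous_apply j).comp continuous_fst
    exact (hcont.tendsto a).comp hconv
  have hpconv : ∀ j, Tendsto (fun n => p (φ n) j) atTop (𝓝 (a.2 j)) := by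
    intro j
    have hcont : Continuous fun y : (Fin N → ℝ) × (Fin N → Θ → ℝ) => y.2 j :=
      (continuous_apply j).comp continuous_snd
    exact (hcont.tendsto a).comp hconv
  have hpθconv : ∀ j θ, Tendsto (fun n => p (φ n) j θ) atTop (𝓝 (a.2 j θ)) :=
    fun j θ => ((continuous_apply θ).tendsto _).comp (hpconv j)
  have hlamL0 : ∀ j, 0 ≤ a.1 j := fun j => (haK.1 j (Set.mem_univ j)).1
  have hpLmem : ∀ j, a.2 j ∈ simplex Θ := fun j => haK.2 j (Set.mem_univ j)
  have hpwithin : ∀ j, Tendsto (fun n => p (φ n) j) atTop (𝓝[simplex Θ] (a.2 j)) :=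
    fun j => tendsto_nhdsWithin_iff.mpr ⟨hpconv j,
      Filter.Eventually.of_forall fun n => hpmem (φ n) j⟩
  have hsumlam : ∑ j, a.1 j = 1 := by
    have h1 : Tendsto (fun n => ∑ j, lam (φ n) j) atTop (𝓝 (∑ j, a.1 j)) :=
      tendsto_finset_sum _ fun j _ => hlamconv j
    have h2 : (fun n => ∑ j, lam (φ n) j) = fun _ => 1 := funext fun n => hlamsum (φ n)
    rw [h2] at h1
    exact (tendsto_nhds_unique h1 tendsto_const_nhds)
  have hbaryL : ∀ θ, ∑ j, a.1 j * a.2 j θ = μ θ := by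
    intro θ
    have h1 : Tendsto (fun n => ∑ j, lam (φ n) j * p (φ n) j θ) atTop
        (𝓝 (∑ j, a.1 j * a.2 j θ)) :=
      tendsto_finset_sum _ fun j _ => (hlamconv j).mul (hpθconv j θ)
    have h2 : ∀ n, ∑ j, lam (φ n) j * p (φ n) j θ = μ θ := by
      intro n
      rw [hsump (φ n) (fun q => q θ)]
      have hb := congrFun (hTvalid (φ n)).1.2.2 θ
      rw [Finset.sum_apply] at hb
      simpa using hb
    simp only [h2] at h1
    exact tendsto_nhds_unique h1 tendsto_const_nhds
  have hgL : ∀ i, ∑ j, a.1 j * g i (a.2 j) ≤ c i := by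
    intro i
    have h1 : Tendsto (fun n => ∑ j, lam (φ n) j * g i (p (φ n) j)) atTop
        (𝓝 (∑ j, a.1 j * g i (a.2 j))) := by
      refine tendsto_finset_sum _ fun j _ => (hlamconv j).mul ?_
      exact (hg i (a.2 j) (hpLmem j)).tendsto.comp (hpwithin j)
    refine le_of_tendsto h1 (Filter.Eventually.of_forall fun n => ?_)
    rw [hsump (φ n) (g i)]
    exact (hTvalid (φ n)).2 i
  set vL := ∑ j, a.1 j * f (a.2 j) with hvL
  have hvle : v ≤ vL := by
    refine le_of_forall_pos_le_add ?_
    intro ε hε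
    set ε' := ε / N with hε'
    have hNR : (0:ℝ) < N := by exact_mod_cast hNpos
    have hε'pos : 0 < ε' := div_pos hε hNR
    have hterm : ∀ j : Fin N, ∀ᶠ n in atTop,
        lam (φ n) j * f (p (φ n) j) ≤ a.1 j * f (a.2 j) + ε' := by
      intro j
      rcases eq_or_lt_of_le (hlamL0 j) with hz | hposL
      · set M' : ℝ := |M| + 1 with hM'
        have h1 : Tendsto (fun n => lam (φ n) j * M') atTop (𝓝 (a.1 j * M')) :=
          (hlamconv j).mul tendsto_const_nhds
        rw [← hz, zero_mul] at h1
        have h2 := h1.eventually_lt_const hε'pos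
        filter_upwards [h2] with n hn
        have hfb : f (p (φ n) j) ≤ M' := by
          refine le_trans (hM _ (hpmem (φ n) j)) ?_
          rw [hM']
          have := le_abs_self M
          linarith
        calc lam (φ n) j * f (p (φ n) j) ≤ lam (φ n) j * M' :=
              mul_le_mul_of_nonneg_left hfb (hlam0 (φ n) j)
          _ ≤ ε' := hn.le
          _ ≤ a.1 j * f (a.2 j) + ε' := by rw [← hz, zero_mul, zero_add]
      · set y := f (a.2 j) + ε' / (2 * a.1 j) with hy
        have hylt : f (a.2 j) < y := by
          rw [hy]
          have : 0 < ε' / (2 * a.1 j) := div_pos hε'pos (by linarith)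
          linarith
        have husc := hf (a.2 j) (hpLmem j) y hylt
        have h3 : ∀ᶠ n in atTop, f (p (φ n) j) < y := (hpwithin j).eventually husc
        have h4 : Tendsto (fun n => lam (φ n) j * y) atTop (𝓝 (a.1 j * y)) :=
          (hlamconv j).mul tendsto_const_nhds
        have h5 : a.1 j * y < a.1 j * f (a.2 j) + ε' := by
          rw [hy, mul_add]
          have he : a.1 j * (ε' / (2 * a.1 j)) = ε' / 2 := by
            field_simp
          rw [he]
          linarith
        have h6 := h4.eventually_lt_const h5
        filter_upwards [h3, h6] with n h3n h6n
        calc lam (φ n) j * f (p (φ n) j) ≤ lam (φ n) j * y :=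
              mul_le_mul_of_nonneg_left h3n.le (hlam0 (φ n) j)
          _ ≤ a.1 j * f (a.2 j) + ε' := h6n.le
    have hall : ∀ᶠ n in atTop, schemeValue f (T (φ n)) ≤ vL + ε := by
      filter_upwards [Filter.eventually_all.mpr hterm] with n hn
      have heq : schemeValue f (T (φ n)) = ∑ j, lam (φ n) j * f (p (φ n) j) :=
        (hsump (φ n) f).symm
      rw [heq]
      calc ∑ j, lam (φ n) j * f (p (φ n) j)
          ≤ ∑ j, (a.1 j * f (a.2 j) + ε') := Finset.sum_le_sum fun j _ => hn j
        _ = vL + N * ε' := by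
            rw [Finset.sum_add_distrib, Finset.sum_const, Finset.card_univ,
              Fintype.card_fin, nsmul_eq_mul, hvL]
        _ = vL + ε := by
            rw [hε', mul_div_cancel₀ _ (ne_of_gt hNR)]
    have hTφ : Tendsto (fun n => schemeValue f (T (φ n))) atTop (𝓝 v) :=
      hTtend.comp hφ.tendsto_atTop
    exact le_of_tendsto hTφ hall
  -- construct the final scheme
  set w : (Θ → ℝ) →₀ ℝ := ∑ j : Fin N, Finsupp.single (a.2 j) (a.1 j) with hw
  have hw_sum : ∀ h : (Θ → ℝ) → ℝ, ∑ q ∈ w.support, w q * h q = ∑ j, a.1 j * h (a.2 j) := by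
    intro h
    have h0 : ∀ q : Θ → ℝ, (0:ℝ) * h q = 0 := fun q => zero_mul _
    calc ∑ q ∈ w.support, w q * h q = w.sum (fun q b => b * h q) := rfl
      _ = ∑ j : Fin N, (Finsupp.single (a.2 j) (a.1 j)).sum (fun q b => b * h q) :=
          (Finsupp.sum_finset_sum_index h0 (fun q b₁ b₂ => add_mul b₁ b₂ (h q))).symm
      _ = ∑ j, a.1 j * h (a.2 j) :=
          Finset.sum_congr rfl fun j _ => Finsupp.sum_single_index (h0 _)
  have hw_vec : ∑ q ∈ w.support, w q • q = ∑ j, a.1 j • a.2 j := by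
    calc ∑ q ∈ w.support, w q • q = w.sum (fun q b => b • q) := rfl
      _ = ∑ j : Fin N, (Finsupp.single (a.2 j) (a.1 j)).sum (fun q b => b • q) :=
          (Finsupp.sum_finset_sum_index (fun q => zero_smul ℝ q) (fun q b₁ b₂ => add_smul b₁ b₂ q)).symm
      _ = ∑ j, a.1 j • a.2 j :=
          Finset.sum_congr rfl fun j _ => Finsupp.sum_single_index (zero_smul ℝ _)
  have hw_nonneg : ∀ q, 0 ≤ w q := by
    intro q
    rw [hw, Finsupp.finset_sum_apply]
    refine Finset.sum_nonneg fun j _ => ?_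
    rw [Finsupp.single_apply]
    split
    · exact hlamL0 j
    · exact le_rfl
  have hw_suppsub : w.support ⊆ Finset.univ.image (fun j => a.2 j) := by
    intro q hq
    rcases Finset.mem_biUnion.mp (Finsupp.support_finset_sum hq) with ⟨j, _, hj⟩
    have hqj : q = a.2 j := by
      have := Finsupp.support_single_subset hj
      simpa using this
    exact Finset.mem_image.mpr ⟨j, Finset.mem_univ j, hqj.symm⟩
  have hw_card : w.support.card ≤ N :=
    le_trans (Finset.card_le_card hw_suppsub)
      (le_trans Finset.card_image_le (by simp))
  have hw_scheme : IsScheme μ w := by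
    refine ⟨?_, ?_, ?_⟩
    · intro q hq
      refine ⟨lt_of_le_of_ne (hw_nonneg q) (Ne.symm (Finsupp.mem_support_iff.mp hq)), ?_⟩
      rcases Finset.mem_image.mp (hw_suppsub hq) with ⟨j, _, hj⟩
      rw [← hj]
      exact hpLmem j
    · have h := hw_sum (fun _ => 1)
      simpa [hsumlam] using h
    · rw [hw_vec]
      ext θ
      rw [Finset.sum_apply]
      simp only [Pi.smul_apply, smul_eq_mul]
      exact hbaryL θ
  have hw_g : ∀ i, (∑ q ∈ w.support, w q * g i q) ≤ c i := fun i => by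
    rw [hw_sum (g i)]; exact hgL i
  refine ⟨w, ⟨hw_scheme, hw_g⟩, hw_card, ?_⟩
  intro τ' hτ'
  have h1 : schemeValue f τ' ≤ v := hmemS τ' hτ'.1 hτ'.2
  have h2 : v ≤ schemeValue f w := by
    have : schemeValue f w = ∑ j, a.1 j * f (a.2 j) := hw_sum f
    rw [this]
    exact hvle
  linarith

end Main
end

section
/- Lemma 4.5 (concave-hull characterization with ex ante constraints): Fix a finite state space Θ, a prior μ ∈ Δ(Θ), continuous functions g₁,…,g_m : Δ(Θ) → ℝ, constants c = (c₁,…,c_m) ∈ ℝ^m, and an upper semicontinuous f : Δ(Θ) → ℝ. Define f^g : Δ(Θ) × ℝ^m → ℝ ∪ {−∞} by f^g(q,γ) = f(q) if g_i(q) ≤ γ_i for all i, and f^g(q,γ) = −∞ otherwise. If there exists at least one finitely supported distribution τ on Δ(Θ) with barycenter μ satisfying E_{q∼τ}[g_i(q)] ≤ c_i for all i, then the supremum of E_{q∼τ}[f(q)] over all such τ equals the concave hull of f^g evaluated at (μ, c). -/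
open scoped BigOperators

lemma sum_equivFin' {α M : Type*} [AddCommMonoid M] (s : Finset α) (F : α → M) :
    ∑ i : Fin s.card, F (s.equivFin.symm i) = ∑ q ∈ s, F q := by
  rw [← Finset.sum_coe_sort s F, ← Equiv.sum_comp s.equivFin.symm (fun a => F a.1)]

lemma finsupp_sum_sum_single {α M : Type*} [AddCommMonoid M] (n : ℕ)
    (x : Fin n → α) (w : Fin n → ℝ) (h : α → ℝ → M)
    (h0 : ∀ a, h a 0 = 0) (hadd : ∀ a b₁ b₂, h a (b₁ + b₂) = h a b₁ + h a b₂) :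
    ((∑ i, Finsupp.single (x i) (w i)).sum h) = ∑ i, h (x i) (w i) := by
  rw [← Finsupp.sum_finset_sum_index h0 hadd]
  exact Finset.sum_congr rfl fun i _ => Finsupp.sum_single_index (h0 _)

/-- Lemma 4.5 (concave-hull characterization with ex ante constraints): if some scheme
with barycenter `μ` satisfies the ex ante constraints `E_{q∼τ}[gᵢ(q)] ≤ cᵢ`, then the
supremum of `E_{q∼τ}[f(q)]` over all such schemes equals the concave hull, at `(μ,c)`,
of the modified function `f^g(q,γ) = f(q)` on `{(q,γ) : gᵢ(q) ≤ γᵢ ∀i}` (and `−∞` off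
this region). -/
theorem stmt12 {Θ : Type*} [Fintype Θ] (m : ℕ)
    (μ : Θ → ℝ) (hμ : μ ∈ simplex Θ)
    (g : Fin m → (Θ → ℝ) → ℝ) (hg : ∀ i, ContinuousOn (g i) (simplex Θ))
    (c : Fin m → ℝ)
    (f : (Θ → ℝ) → ℝ) (hf : UpperSemicontinuousOn f (simplex Θ))
    (hne : ∃ τ : (Θ → ℝ) →₀ ℝ, IsScheme μ τ ∧
      ∀ i, (∑ q ∈ τ.support, τ q * g i q) ≤ c i) :
    sSup {x : ℝ | ∃ τ : (Θ → ℝ) →₀ ℝ,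
        (IsScheme μ τ ∧ ∀ i, (∑ q ∈ τ.support, τ q * g i q) ≤ c i) ∧
        x = schemeValue f τ} =
      concaveHullOn (fun p : (Θ → ℝ) × (Fin m → ℝ) => f p.1)
        {p : (Θ → ℝ) × (Fin m → ℝ) | p.1 ∈ simplex Θ ∧ ∀ i, g i p.1 ≤ p.2 i}
        (μ, c) := by
  unfold concaveHullOn
  congr 1
  ext x
  simp only [Set.mem_setOf_eq]
  constructor
  · rintro ⟨τ, ⟨⟨hsupp, hsum1, hbary⟩, hcon⟩, rfl⟩
    set n := τ.support.card with hn
    set e := τ.support.equivFin with he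
    refine ⟨n, fun i => ((e.symm i : Θ → ℝ),
        fun j => g j (e.symm i) + (c j - ∑ q ∈ τ.support, τ q * g j q)),
      fun i => τ (e.symm i), ?_, ?_, ?_, ?_, ?_⟩
    · intro i
      exact ⟨(hsupp _ (e.symm i).2).2,
        fun j => le_add_of_nonneg_right (sub_nonneg.2 (hcon j))⟩
    · intro i
      exact (hsupp _ (e.symm i).2).1.le
    · exact (sum_equivFin' τ.support (fun q => τ q)).trans hsum1
    · refine Prod.ext ?_ ?_
      · rw [Prod.fst_sum]
        simpa using (sum_equivFin' τ.support (fun q => τ q • q)).trans hbary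
      · rw [Prod.snd_sum]
        funext j
        rw [Finset.sum_apply]
        refine Eq.trans (Finset.sum_congr rfl fun i _ =>
          (rfl : _ = τ (e.symm i) * (g j (e.symm i) + (c j - ∑ q ∈ τ.support, τ q * g j q)))) ?_
        rw [sum_equivFin' τ.support
            (fun q => τ q * (g j q + (c j - ∑ q ∈ τ.support, τ q * g j q)))]
        simp only [mul_add, Finset.sum_add_distrib, ← Finset.sum_mul, hsum1]
        ring
    · exact (sum_equivFin' τ.support (fun q => τ q * f q)).symm
  · rintro ⟨n, z, lam, hzD, hlam, hlam1, hbar, rfl⟩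
    classical
    set τ : (Θ → ℝ) →₀ ℝ := ∑ i, Finsupp.single (z i).1 (lam i) with hτ
    have hmem : ∀ q ∈ τ.support, ∃ i, (z i).1 = q := by
      intro q hq
      rw [hτ] at hq
      rcases Finsupp.mem_support_finset_sum q hq with ⟨i, _, hqi⟩
      exact ⟨i, (Finset.mem_singleton.1 (Finsupp.support_single_subset hqi)).symm⟩
    have hτnn : ∀ q, 0 ≤ τ q := by
      intro q
      rw [hτ, Finsupp.finset_sum_apply]
      refine Finset.sum_nonneg fun i _ => ?_
      rw [Finsupp.single_apply]
      split <;> simp [hlam _]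
    refine ⟨τ, ⟨⟨?_, ?_, ?_⟩, ?_⟩, ?_⟩
    · intro q hq
      refine ⟨lt_of_le_of_ne (hτnn q) (Ne.symm (Finsupp.mem_support_iff.1 hq)), ?_⟩
      rcases hmem q hq with ⟨i, rfl⟩
      exact (hzD i).1
    · have h1 : (∑ q ∈ τ.support, τ q) = ∑ i, lam i :=
        finsupp_sum_sum_single n (fun i => (z i).1) lam (fun _ w => w) (fun _ => rfl) (fun _ _ _ => rfl)
      exact h1.trans hlam1
    · have h1 : (∑ q ∈ τ.support, τ q • q) = ∑ i, lam i • (z i).1 :=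
        finsupp_sum_sum_single n (fun i => (z i).1) lam (fun q w => w • q) (fun a => zero_smul ℝ a) (fun a b₁ b₂ => add_smul b₁ b₂ a)
      rw [h1]
      have h2 : (∑ i, lam i • z i).1 = μ := by rw [hbar]
      rw [← h2, Prod.fst_sum]
      rfl
    · intro j
      have h1 : (∑ q ∈ τ.support, τ q * g j q) = ∑ i, lam i * g j (z i).1 :=
        finsupp_sum_sum_single n (fun i => (z i).1) lam (fun q w => w * g j q) (by simp) (by intro a b₁ b₂; ring)
      rw [h1]
      have h2 : (∑ i, lam i • z i).2 = c := by rw [hbar]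
      have h3 : (∑ i, lam i • z i).2 j = ∑ i, lam i * (z i).2 j := by
        rw [Prod.snd_sum, Finset.sum_apply]; rfl
      calc ∑ i, lam i * g j (z i).1 ≤ ∑ i, lam i * (z i).2 j :=
            Finset.sum_le_sum fun i _ =>
              mul_le_mul_of_nonneg_left ((hzD i).2 j) (hlam i)
        _ = c j := by rw [← h3, h2]
    · have h1 : (∑ q ∈ τ.support, τ q * f q) = ∑ i, lam i * f (z i).1 :=
        finsupp_sum_sum_single n (fun i => (z i).1) lam (fun q w => w * f q) (by simp) (by intro a b₁ b₂; ring)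
      unfold schemeValue
      exact h1.symm
end

section
/- Theorem 4.6 (characterization for (ε,δ)-differential privacy): Let ε > 0 and δ > 0, and for each (θ,θ′) ∈ 𝒜 define g_{(θ,θ′)}(q) = max{0, q(θ)/μ(θ) − e^ε q(θ′)/μ(θ′)}. Call a finitely supported distribution τ on Δ(Θ) (ε,δ)-feasible if its barycenter is μ and E_{q∼τ}[g_{(θ,θ′)}(q)] ≤ δ for every (θ,θ′) ∈ 𝒜 (the point mass at μ is (ε,δ)-feasible, so feasible schemes exist). Then: (i) there exists an (ε,δ)-feasible τ* with |supp(τ*)| ≤ k + m maximizing E_{q∼τ}[V(q)] among all (ε,δ)-feasible τ; and (ii) this optimal value equals the concave hull, evaluated at (μ, δ·𝟙_m), of the modified function V^g : Δ(Θ) × ℝ^m → ℝ ∪ {−∞} defined by V^g(q,γ) = V(q) if g_{(θ,θ′)}(q) ≤ γ_{(θ,θ′)} for all (θ,θ′) ∈ 𝒜 and V^g(q,γ) = −∞ otherwise. -/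
open scoped BigOperators

/-- The ex ante constraint function for `(ε,δ)`-differential privacy associated with
the ordered adjacent pair `p = (θ,θ′)`:
`g_{(θ,θ′)}(q) = max{0, q(θ)/μ(θ) − e^ε q(θ′)/μ(θ′)}`. -/
noncomputable def gDP {Θ : Type*} (μ : Θ → ℝ) (ε : ℝ) (p : Θ × Θ) (q : Θ → ℝ) : ℝ :=
  max 0 (q p.1 / μ p.1 - Real.exp ε * (q p.2 / μ p.2))

open Filter Set


section USC

variable {α : Type*} [TopologicalSpace α]

lemma usc_comp_cwa {β : Type*} [TopologicalSpace β]
    {f : β → ℝ} {s : Set β} {g : α → β} {P : Set α} {x : α}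
    (hf : UpperSemicontinuousWithinAt f s (g x)) (hg : Continuous g)
    (hmaps : Set.MapsTo g P s) :
    UpperSemicontinuousWithinAt (fun a => f (g a)) P x := by
  intro c hc
  exact (hg.continuousWithinAt.tendsto_nhdsWithin hmaps).eventually (hf c hc)

lemma usc_mul_cwa {P : Set α} {x : α} {φ ψ : α → ℝ}
    (hφ : ContinuousWithinAt φ P x) (hψ : UpperSemicontinuousWithinAt ψ P x)
    (hφ0 : ∀ y ∈ P, 0 ≤ φ y) (hx : x ∈ P) :
    UpperSemicontinuousWithinAt (fun y => φ y * ψ y) P x := by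
  intro c hc
  have hc' : φ x * ψ x < c := hc
  have hφx : 0 ≤ φ x := hφ0 x hx
  set ε : ℝ := if h : φ x = 0 then 1 else (c - φ x * ψ x) / (2 * φ x) with hε
  have hεpos : 0 < ε := by
    rw [hε]
    split_ifs with h
    · norm_num
    · have hφpos : 0 < φ x := lt_of_le_of_ne hφx (Ne.symm h)
      have : 0 < c - φ x * ψ x := by linarith
      positivity
  have hlt : φ x * (ψ x + ε) < c := by
    rw [hε]
    split_ifs with h
    · simpa [h] using hc'
    · have hφpos : 0 < φ x := lt_of_le_of_ne hφx (Ne.symm h)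
      have h2 : φ x * ((c - φ x * ψ x) / (2 * φ x)) = (c - φ x * ψ x) / 2 := by
        field_simp
      have : 0 < c - φ x * ψ x := by linarith
      calc φ x * (ψ x + (c - φ x * ψ x) / (2 * φ x))
          = φ x * ψ x + (c - φ x * ψ x) / 2 := by rw [mul_add, h2]
        _ < c := by linarith
  have hev1 : ∀ᶠ y in nhdsWithin x P, ψ y < ψ x + ε := hψ _ (by linarith)
  have hev2 : ∀ᶠ y in nhdsWithin x P, φ y * (ψ x + ε) < c :=
    (hφ.mul_const (ψ x + ε)).eventually_lt_const hlt
  have hev3 : ∀ᶠ y in nhdsWithin x P, y ∈ P := self_mem_nhdsWithin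
  filter_upwards [hev1, hev2, hev3] with y h1 h2 h3
  calc φ y * ψ y ≤ φ y * (ψ x + ε) := mul_le_mul_of_nonneg_left h1.le (hφ0 y h3)
    _ < c := h2

lemma usc_bddAbove {K : Set α} (hK : IsCompact K)
    {f : α → ℝ} (hf : UpperSemicontinuousOn f K) : ∃ B, ∀ x ∈ K, f x ≤ B := by
  classical
  have hU : ∀ x ∈ K, {y | y ∈ K → f y < f x + 1} ∈ nhds x := by
    intro x hx
    have := hf x hx (f x + 1) (lt_add_one _)
    rwa [eventually_nhdsWithin_iff] at this
  obtain ⟨t, htK, hcov⟩ := hK.elim_nhds_subcover _ hU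
  by_cases ht : t.Nonempty
  · refine ⟨t.sup' ht (fun x => f x + 1), fun y hy => ?_⟩
    obtain ⟨x, hxt, hyx⟩ := Set.mem_iUnion₂.mp (hcov hy)
    exact le_trans (hyx hy).le (Finset.le_sup' (fun x => f x + 1) hxt)
  · refine ⟨0, fun y hy => absurd (hcov hy) ?_⟩
    simp [Finset.not_nonempty_iff_eq_empty.mp ht]

lemma usc_isClosed_superlevel {K : Set α} (hKc : IsClosed K) {f : α → ℝ}
    (hf : UpperSemicontinuousOn f K) (a : ℝ) : IsClosed {x ∈ K | a ≤ f x} := by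
  rw [← closure_subset_iff_isClosed]
  intro x hx
  have hsub : {x ∈ K | a ≤ f x} ⊆ K := fun y hy => hy.1
  have hxK : x ∈ K := (closure_minimal hsub hKc) hx
  refine ⟨hxK, ?_⟩
  by_contra hlt
  push_neg at hlt
  have hev : ∀ᶠ y in nhdsWithin x K, f y < a := hf x hxK a hlt
  have hev' : ∀ᶠ y in nhdsWithin x {x ∈ K | a ≤ f x}, f y < a :=
    nhdsWithin_mono x hsub hev
  have hne : (nhdsWithin x {x ∈ K | a ≤ f x}).NeBot :=
    mem_closure_iff_nhdsWithin_neBot.mp hx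
  obtain ⟨y, hy, hyS⟩ := (hev'.and self_mem_nhdsWithin).exists
  exact absurd hyS.2 (not_le.mpr hy)

end USC

lemma usc_exists_max {α : Type*} [TopologicalSpace α] [T2Space α] {K : Set α}
    (hK : IsCompact K) (hne : K.Nonempty) {f : α → ℝ}
    (hf : UpperSemicontinuousOn f K) :
    ∃ x ∈ K, ∀ y ∈ K, f y ≤ f x := by
  obtain ⟨B, hB⟩ := usc_bddAbove hK hf
  have hbdd : BddAbove (f '' K) := ⟨B, fun y ⟨x, hx, hxy⟩ => hxy ▸ hB x hx⟩
  have hine : (f '' K).Nonempty := hne.image f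
  set c := sSup (f '' K) with hc
  set T : ℕ → Set α := fun n => {x ∈ K | c - 1 / (n + 1) ≤ f x} with hT
  have hTne : ∀ n, (T n).Nonempty := by
    intro n
    have hlt : c - 1 / (n + 1) < c := by
      have : (0:ℝ) < 1 / (n + 1) := by positivity
      linarith
    obtain ⟨y, ⟨x, hxK, rfl⟩, hxy⟩ := exists_lt_of_lt_csSup hine hlt
    exact ⟨x, hxK, hxy.le⟩
  have hTcl : ∀ n, IsClosed (T n) := fun n => usc_isClosed_superlevel hK.isClosed hf _
  have hTcm : IsCompact (T 0) := hK.of_isClosed_subset (hTcl 0) (fun x hx => hx.1)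
  have hTdec : ∀ n, T (n + 1) ⊆ T n := by
    intro n x hx
    refine ⟨hx.1, le_trans ?_ hx.2⟩
    have h1 : (1:ℝ) / ((n:ℝ) + 1 + 1) ≤ 1 / ((n:ℝ) + 1) := by
      apply one_div_le_one_div_of_le
      · positivity
      · linarith
    push_cast
    push_cast at hx
    linarith [hx.2]
  obtain ⟨x, hx⟩ := IsCompact.nonempty_iInter_of_sequence_nonempty_isCompact_isClosed
    T hTdec hTne hTcm hTcl
  have hxK : x ∈ K := (Set.mem_iInter.mp hx 0).1
  refine ⟨x, hxK, fun y hy => ?_⟩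
  have h1 : f y ≤ c := le_csSup hbdd ⟨y, hy, rfl⟩
  have h2 : c ≤ f x := by
    by_contra h
    push_neg at h
    obtain ⟨n, hn⟩ := exists_nat_one_div_lt (show (0:ℝ) < c - f x by linarith)
    have := (Set.mem_iInter.mp hx n).2
    linarith
  linarith

lemma pad_sum {M : Type*} [AddCommMonoid M] {n N : ℕ} (h : n ≤ N) (F : Fin n → M) :
    ∑ i : Fin N, (if hh : (i : ℕ) < n then F ⟨i, hh⟩ else 0) = ∑ j, F j := by
  set G : ℕ → M := fun i => if hh : i < n then F ⟨i, hh⟩ else 0 with hG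
  have h1 : ∑ i : Fin N, (if hh : (i : ℕ) < n then F ⟨i, hh⟩ else 0) = ∑ i ∈ Finset.range N, G i :=
    Fin.sum_univ_eq_sum_range G N
  have h2 : ∑ i ∈ Finset.range N, G i = ∑ i ∈ Finset.range n, G i := by
    refine (Finset.sum_subset (Finset.range_subset_range.mpr h) ?_).symm
    intro i _ hi
    rw [Finset.mem_range] at hi
    simp [hG, hi]
  have h3 : ∑ i ∈ Finset.range n, G i = ∑ j : Fin n, G j := (Fin.sum_univ_eq_sum_range G n).symm
  rw [h1, h2, h3]
  exact Finset.sum_congr rfl fun j _ => by simp [hG, j.isLt]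

lemma resum {σ : Type*} {ι : Type*} [Fintype ι] {M : Type*} [AddCommMonoid M] [Module ℝ M]
    (w : ι → ℝ) (v : ι → σ) (h : σ → M) :
    ∑ q ∈ (∑ i, Finsupp.single (v i) (w i)).support,
      ((∑ i, Finsupp.single (v i) (w i)) q) • h q = ∑ i, w i • h (v i) := by
  classical
  set τ := ∑ i, Finsupp.single (v i) (w i) with hτ
  have happ : ∀ q, τ q = ∑ i, if v i = q then w i else 0 := by
    intro q
    rw [hτ, Finsupp.finset_sum_apply]
    exact Finset.sum_congr rfl fun i _ => Finsupp.single_apply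
  have hsupp : τ.support ⊆ Finset.image v Finset.univ := by
    intro q hq
    rw [Finsupp.mem_support_iff, happ] at hq
    obtain ⟨i, _, hi⟩ := Finset.exists_ne_zero_of_sum_ne_zero hq
    rw [Finset.mem_image]
    refine ⟨i, Finset.mem_univ i, ?_⟩
    by_contra hne
    simp [hne] at hi
  have h1 : ∑ q ∈ τ.support, τ q • h q = ∑ q ∈ Finset.image v Finset.univ, τ q • h q := by
    refine Finset.sum_subset hsupp ?_
    intro q _ hq
    rw [Finsupp.notMem_support_iff.mp hq, zero_smul]
  rw [h1]
  calc ∑ q ∈ Finset.image v Finset.univ, τ q • h q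
      = ∑ q ∈ Finset.image v Finset.univ, ∑ i, (if v i = q then w i • h q else 0) := by
        refine Finset.sum_congr rfl fun q _ => ?_
        rw [happ, Finset.sum_smul]
        exact Finset.sum_congr rfl fun i _ => by rw [ite_smul, zero_smul]
    _ = ∑ i, ∑ q ∈ Finset.image v Finset.univ, (if v i = q then w i • h q else 0) :=
        Finset.sum_comm
    _ = ∑ i, w i • h (v i) := by
        refine Finset.sum_congr rfl fun i _ => ?_
        have : ∀ q ∈ Finset.image v Finset.univ, (if v i = q then w i • h q else 0)
            = if v i = q then w i • h (v i) else 0 := by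
          intro q _
          split_ifs with hq
          · rw [hq]
          · rfl
        rw [Finset.sum_congr rfl this, Finset.sum_ite_eq]
        simp


noncomputable def sumFstLin (Θ ι : Type*) [Fintype Θ] :
    ((Θ → ℝ) × (ι → ℝ)) × ℝ →ₗ[ℝ] ℝ where
  toFun u := ∑ θ, u.1.1 θ
  map_add' u v := by simp [Finset.sum_add_distrib]
  map_smul' c u := by simp [Finset.mul_sum]

lemma fst_sum' {α M N : Type*} [AddCommMonoid M] [AddCommMonoid N]
    (s : Finset α) (f : α → M × N) : (∑ a ∈ s, f a).1 = ∑ a ∈ s, (f a).1 :=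
  map_sum (AddMonoidHom.fst M N) f s

lemma snd_sum' {α M N : Type*} [AddCommMonoid M] [AddCommMonoid N]
    (s : Finset α) (f : α → M × N) : (∑ a ∈ s, f a).2 = ∑ a ∈ s, (f a).2 :=
  map_sum (AddMonoidHom.snd M N) f s

lemma finrank_ker_sumFstLin (Θ ι : Type*) [Fintype Θ] [Fintype ι] [Nonempty Θ] :
    Module.finrank ℝ (LinearMap.ker (sumFstLin Θ ι)) = Fintype.card Θ + Fintype.card ι := by
  classical
  have hsurj : Function.Surjective (sumFstLin Θ ι) := by
    intro c
    obtain ⟨θ0⟩ := (inferInstance : Nonempty Θ)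
    refine ⟨((Pi.single θ0 c, 0), 0), ?_⟩
    show ∑ θ, Pi.single θ0 c θ = c
    simp [Finset.sum_pi_single']
  have h1 := LinearMap.finrank_range_add_finrank_ker (sumFstLin Θ ι)
  rw [LinearMap.range_eq_top.mpr hsurj, finrank_top] at h1
  have h2 : Module.finrank ℝ ((((Θ → ℝ) × (ι → ℝ)) × ℝ)) =
      Fintype.card Θ + Fintype.card ι + 1 := by
    simp [Module.finrank_prod, Module.finrank_pi]
  rw [h2] at h1
  have h3 : Module.finrank ℝ ℝ = 1 := Module.finrank_self ℝ
  omega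

lemma cara_step {Θ ι : Type*} [Fintype Θ] [Fintype ι] [Nonempty Θ]
    (V : (Θ → ℝ) → ℝ) (D' : Set ((Θ → ℝ) × (ι → ℝ)))
    (hD'S : ∀ x ∈ D', x.1 ∈ simplex Θ)
    (x0 : (Θ → ℝ) × (ι → ℝ)) (y : ℝ) (n₀ : ℕ)
    (z₀ : Fin n₀ → (Θ → ℝ) × (ι → ℝ)) (lam₀ : Fin n₀ → ℝ)
    (hz₀ : ∀ j, z₀ j ∈ D') (hl0 : ∀ j, 0 ≤ lam₀ j) (hl1 : ∑ j, lam₀ j = 1)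
    (hbc : ∑ j, lam₀ j • z₀ j = x0) (hy : y = ∑ j, lam₀ j * V (z₀ j).1) :
    ∃ n, n ≤ Fintype.card Θ + Fintype.card ι + 1 ∧
      ∃ (z : Fin n → (Θ → ℝ) × (ι → ℝ)) (lam : Fin n → ℝ),
        (∀ j, z j ∈ D') ∧ (∀ j, 0 ≤ lam j) ∧ (∑ j, lam j) = 1 ∧
        (∑ j, lam j • z j) = x0 ∧ y = ∑ j, lam j * V (z j).1 ∧
        (n = Fintype.card Θ + Fintype.card ι + 1 →
          ∃ η, 0 < η ∧ ∃ lam' : Fin n → ℝ,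
            (∀ j, 0 ≤ lam' j) ∧ (∑ j, lam' j) = 1 ∧
            (∑ j, lam' j • z j) = x0 ∧ y + η = ∑ j, lam' j * V (z j).1) := by
  classical
  set Lift : Set (((Θ → ℝ) × (ι → ℝ)) × ℝ) := {u | u.1 ∈ D' ∧ u.2 = V u.1.1} with hLift
  have hwconv : ((x0, y) : ((Θ → ℝ) × (ι → ℝ)) × ℝ) ∈ convexHull ℝ Lift := by
    have hc := Finset.centerMass_mem_convexHull (Finset.univ : Finset (Fin n₀))
      (w := lam₀) (z := fun j => ((z₀ j, V (z₀ j).1) : ((Θ → ℝ) × (ι → ℝ)) × ℝ))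
      (fun j _ => hl0 j) (by rw [hl1]; norm_num)
      (fun j _ => show ((z₀ j, V (z₀ j).1) : ((Θ → ℝ) × (ι → ℝ)) × ℝ) ∈ Lift from ⟨hz₀ j, rfl⟩)
    rw [Finset.centerMass_eq_of_sum_1 _ _ hl1] at hc
    have heq : ∑ j, lam₀ j • ((z₀ j, V (z₀ j).1) : ((Θ → ℝ) × (ι → ℝ)) × ℝ) = (x0, y) := by
      apply Prod.ext
      · rw [fst_sum']; simpa using hbc
      · rw [snd_sum']; simpa [smul_eq_mul] using hy.symm
    rwa [heq] at hc
  obtain ⟨ι₁, hfin, zz, ww, hrange, haff, hwpos, hwsum, hwcomb⟩ :=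
    eq_pos_convex_span_of_mem_convexHull hwconv
  letI : Fintype ι₁ := hfin
  haveI hne1 : Nonempty ι₁ := by
    rcases isEmpty_or_nonempty ι₁ with h | h
    · exfalso; rw [Finset.univ_eq_empty, Finset.sum_empty] at hwsum; norm_num at hwsum
    · exact h
  have hzz : ∀ i, zz i ∈ Lift := fun i => hrange (Set.mem_range_self i)
  have hzzD' : ∀ i, (zz i).1 ∈ D' := fun i => (hzz i).1
  have hzzV : ∀ i, (zz i).2 = V (zz i).1.1 := fun i => (hzz i).2
  have hLz : ∀ i, sumFstLin Θ ι (zz i) = 1 := fun i => (hD'S _ (hzzD' i)).2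
  set i0 : ι₁ := Classical.arbitrary ι₁ with hi0
  have hli : LinearIndependent ℝ (fun i : {x : ι₁ // x ≠ i0} => zz i - zz i0) := by
    have h := (affineIndependent_iff_linearIndependent_vsub ℝ zz i0).mp haff
    simpa [vsub_eq_sub] using h
  have hspan_le : Submodule.span ℝ (Set.range fun i : {x : ι₁ // x ≠ i0} => zz ↑i - zz i0)
      ≤ LinearMap.ker (sumFstLin Θ ι) := by
    rw [Submodule.span_le]
    rintro _ ⟨i, rfl⟩
    rw [SetLike.mem_coe, LinearMap.mem_ker, map_sub, hLz, hLz, sub_self]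
  have hcard1 : Fintype.card {x : ι₁ // x ≠ i0} = Fintype.card ι₁ - 1 := by
    have h := Fintype.card_subtype_compl (fun x : ι₁ => x = i0)
    rw [Fintype.card_subtype_eq] at h
    convert h using 2
  have hrankle : Fintype.card ι₁ - 1 ≤ Fintype.card Θ + Fintype.card ι := by
    have h1 := finrank_span_eq_card hli
    have h2 := Submodule.finrank_mono hspan_le
    rw [h1, finrank_ker_sumFstLin] at h2
    omega
  have hpos : 1 ≤ Fintype.card ι₁ := Fintype.card_pos
  set e : Fin (Fintype.card ι₁) ≃ ι₁ := (Fintype.equivFin ι₁).symm with he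
  have hfst : ∑ i, ww i • (zz i).1 = x0 := by
    have h := congrArg Prod.fst hwcomb
    rw [fst_sum'] at h
    simpa using h
  have hval : ∑ i, ww i * V ((zz i).1.1) = y := by
    have h := congrArg Prod.snd hwcomb
    rw [snd_sum'] at h
    simp only [Prod.smul_snd, smul_eq_mul] at h
    rw [← h]
    exact Finset.sum_congr rfl fun i _ => by rw [hzzV i]
  refine ⟨Fintype.card ι₁, by omega, fun j => (zz (e j)).1, fun j => ww (e j),
    fun j => hzzD' _, fun j => (hwpos _).le, ?_, ?_, ?_, ?_⟩
  · rw [Equiv.sum_comp e ww, hwsum]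
  · rw [Equiv.sum_comp e (fun i => ww i • (zz i).1), hfst]
  · rw [Equiv.sum_comp e (fun i => ww i * V ((zz i).1.1)), hval]
  · -- perturbation
    intro hceq
    have hcard2 : Fintype.card {x : ι₁ // x ≠ i0} = Fintype.card Θ + Fintype.card ι := by
      omega
    have hspan_eq : Submodule.span ℝ (Set.range fun i : {x : ι₁ // x ≠ i0} => zz ↑i - zz i0)
        = LinearMap.ker (sumFstLin Θ ι) := by
      apply Submodule.eq_of_le_of_finrank_le hspan_le
      rw [finrank_ker_sumFstLin, finrank_span_eq_card hli, hcard2]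
    have het : ((((0 : Θ → ℝ), (0 : ι → ℝ)), (1:ℝ)) : ((Θ → ℝ) × (ι → ℝ)) × ℝ)
        ∈ LinearMap.ker (sumFstLin Θ ι) := by
      rw [LinearMap.mem_ker]
      show ∑ _θ : Θ, (0:ℝ) = 0
      simp
    rw [← hspan_eq, Submodule.mem_span_range_iff_exists_fun] at het
    obtain ⟨c, hc⟩ := het
    set b : ι₁ → ℝ := fun i => if h : i = i0 then -∑ j, c j else c ⟨i, h⟩ with hb
    have hsplitR : ∀ (F : ι₁ → ℝ),
        ∑ i, F i = F i0 + ∑ i : {x : ι₁ // x ≠ i0}, F ↑i := by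
      intro F
      rw [← Finset.add_sum_erase _ F (Finset.mem_univ i0)]
      congr 1
      exact Finset.sum_subtype _ (fun x => by simp [Finset.mem_erase]) F
    have hsplitE : ∀ (F : ι₁ → ((Θ → ℝ) × (ι → ℝ)) × ℝ),
        ∑ i, F i = F i0 + ∑ i : {x : ι₁ // x ≠ i0}, F ↑i := by
      intro F
      rw [← Finset.add_sum_erase _ F (Finset.mem_univ i0)]
      congr 1
      exact Finset.sum_subtype _ (fun x => by simp [Finset.mem_erase]) F
    have hbsub : ∀ i : {x : ι₁ // x ≠ i0}, b ↑i = c i := fun i => dif_neg i.2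
    have hb0 : b i0 = -∑ j, c j := dif_pos rfl
    have hbsum : ∑ i, b i = 0 := by
      rw [hsplitR b, hb0, Finset.sum_congr rfl fun (i : {x : ι₁ // x ≠ i0}) _ => hbsub i]
      ring
    have hbz : ∑ i, b i • zz i = (((0 : Θ → ℝ), (0 : ι → ℝ)), (1:ℝ)) := by
      have h1 : ∑ i : {x : ι₁ // x ≠ i0}, b ↑i • zz ↑i
          = ∑ i : {x : ι₁ // x ≠ i0}, c i • zz ↑i :=
        Finset.sum_congr rfl fun i _ => by rw [hbsub i]
      have h2 : ∑ i : {x : ι₁ // x ≠ i0}, c i • (zz ↑i - zz i0)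
          = ∑ i : {x : ι₁ // x ≠ i0}, c i • zz ↑i - (∑ i : {x : ι₁ // x ≠ i0}, c i) • zz i0 := by
        rw [Finset.sum_smul]
        rw [← Finset.sum_sub_distrib]
        exact Finset.sum_congr rfl fun i _ => smul_sub _ _ _
      have h3 : ∑ i : {x : ι₁ // x ≠ i0}, c i • zz ↑i
          = (((0 : Θ → ℝ), (0 : ι → ℝ)), (1:ℝ)) + (∑ i : {x : ι₁ // x ≠ i0}, c i) • zz i0 := by
        rw [← hc, h2]; abel
      calc ∑ i, b i • zz i
          = b i0 • zz i0 + ∑ i : {x : ι₁ // x ≠ i0}, b ↑i • zz ↑i :=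
            hsplitE (fun i => b i • zz i)
        _ = (((0 : Θ → ℝ), (0 : ι → ℝ)), (1:ℝ)) := by rw [h1, hb0, h3, neg_smul]; abel
    have hwminpos : 0 < Finset.univ.inf' Finset.univ_nonempty ww := by
      rw [Finset.lt_inf'_iff]
      exact fun i _ => hwpos i
    have hbmax0 : 0 ≤ Finset.univ.sup' Finset.univ_nonempty (fun i => |b i|) :=
      le_trans (abs_nonneg (b i0)) (Finset.le_sup' (fun i => |b i|) (Finset.mem_univ i0))
    set wmin := Finset.univ.inf' Finset.univ_nonempty ww with hwm
    set bmax := Finset.univ.sup' Finset.univ_nonempty (fun i => |b i|) with hbm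
    set η := wmin / (bmax + 1) with hηd
    have hηpos : 0 < η := div_pos hwminpos (by linarith)
    have hηmul : η * (bmax + 1) = wmin := div_mul_cancel₀ _ (by linarith)
    have hkey : ∀ i, η * |b i| ≤ wmin := by
      intro i
      have h1 : |b i| ≤ bmax := Finset.le_sup' (fun i => |b i|) (Finset.mem_univ i)
      nlinarith [hηpos.le]
    have hnn : ∀ i, 0 ≤ ww i + η * b i := by
      intro i
      have h1 : wmin ≤ ww i := Finset.inf'_le _ (Finset.mem_univ i)
      have h2 : η * (-|b i|) ≤ η * b i :=
        mul_le_mul_of_nonneg_left (neg_abs_le _) hηpos.le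
      have h3 := hkey i
      nlinarith
    have hcomb' : ∑ i, (ww i + η * b i) • zz i
        = ((x0, y) : ((Θ → ℝ) × (ι → ℝ)) × ℝ)
          + η • ((((0 : Θ → ℝ), (0 : ι → ℝ)), (1:ℝ)) : ((Θ → ℝ) × (ι → ℝ)) × ℝ) := by
      have : ∀ i, (ww i + η * b i) • zz i = ww i • zz i + η • (b i • zz i) := by
        intro i; rw [add_smul, mul_smul]
      rw [Finset.sum_congr rfl fun i _ => this i, Finset.sum_add_distrib, hwcomb,
        ← Finset.smul_sum, hbz]
    refine ⟨η, hηpos, fun j => ww (e j) + η * b (e j), fun j => hnn _, ?_, ?_, ?_⟩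
    · rw [Equiv.sum_comp e (fun i => ww i + η * b i), Finset.sum_add_distrib,
        hwsum, ← Finset.mul_sum, hbsum]
      ring
    · rw [Equiv.sum_comp e (fun i => (ww i + η * b i) • (zz i).1)]
      have h := congrArg Prod.fst hcomb'
      rw [fst_sum'] at h
      simpa [Prod.mk_zero_zero] using h
    · rw [Equiv.sum_comp e (fun i => (ww i + η * b i) * V ((zz i).1.1))]
      have h := congrArg Prod.snd hcomb'
      rw [snd_sum'] at h
      simp only [Prod.smul_snd, smul_eq_mul, Prod.snd_add] at h
      rw [Finset.sum_congr rfl fun i _ => by rw [← hzzV i]]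
      rw [h]
      simp


theorem aux_main {Θ ι : Type*} [Fintype Θ] [Fintype ι]
    (μ : Θ → ℝ) (hμpos : ∀ θ, 0 < μ θ) (hμsum : ∑ θ, μ θ = 1)
    (g : ι → (Θ → ℝ) → ℝ) (hgc : ∀ i, Continuous (g i)) (hg0 : ∀ i q, 0 ≤ g i q)
    (M : ι → ℝ) (hgbd : ∀ i, ∀ q ∈ simplex Θ, g i q ≤ M i)
    (δ : ℝ) (hδ : 0 < δ) (hgμ : ∀ i, g i μ ≤ δ)
    (V : (Θ → ℝ) → ℝ) (hV : UpperSemicontinuousOn V (simplex Θ)) :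
    ∃ τ : (Θ → ℝ) →₀ ℝ,
      (IsScheme μ τ ∧ ∀ i, (∑ q ∈ τ.support, τ q * g i q) ≤ δ) ∧
      τ.support.card ≤ Fintype.card Θ + Fintype.card ι ∧
      (∀ τ' : (Θ → ℝ) →₀ ℝ,
        (IsScheme μ τ' ∧ ∀ i, (∑ q ∈ τ'.support, τ' q * g i q) ≤ δ) →
        schemeValue V τ' ≤ schemeValue V τ) ∧
      schemeValue V τ = concaveHullOn (fun x : (Θ → ℝ) × (ι → ℝ) => V x.1)
          {x : (Θ → ℝ) × (ι → ℝ) | x.1 ∈ simplex Θ ∧ ∀ i, g i x.1 ≤ x.2 i}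
          ((μ, fun _ => δ) : (Θ → ℝ) × (ι → ℝ)) := by
  classical
  haveI : Nonempty Θ := by
    by_contra h
    rw [not_nonempty_iff] at h
    rw [Finset.univ_eq_empty, Finset.sum_empty] at hμsum
    norm_num at hμsum
  -- notation
  set x0 : (Θ → ℝ) × (ι → ℝ) := (μ, fun _ => δ) with hx0def
  set D : Set ((Θ → ℝ) × (ι → ℝ)) := {x | x.1 ∈ simplex Θ ∧ ∀ i, g i x.1 ≤ x.2 i} with hDdef
  set D' : Set ((Θ → ℝ) × (ι → ℝ)) :=
    {x | x.1 ∈ simplex Θ ∧ ∀ i, g i x.1 ≤ x.2 i ∧ x.2 i ≤ M i + δ} with hD'def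
  set SS : Set ℝ := {y : ℝ | ∃ (n : ℕ) (z : Fin n → (Θ → ℝ) × (ι → ℝ)) (lam : Fin n → ℝ),
    (∀ i, z i ∈ D) ∧ (∀ i, 0 ≤ lam i) ∧ (∑ i, lam i) = 1 ∧
    (∑ i, lam i • z i) = x0 ∧ y = ∑ i, lam i * V (z i).1} with hSSdef
  have hgoalchull : concaveHullOn (fun x : (Θ → ℝ) × (ι → ℝ) => V x.1) D x0 = sSup SS := rfl
  have hμs : μ ∈ simplex Θ := ⟨fun θ => (hμpos θ).le, hμsum⟩
  have hM0 : ∀ i, 0 ≤ M i := fun i => le_trans (hg0 i μ) (hgbd i μ hμs)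
  have hx0D' : x0 ∈ D' := ⟨hμs, fun i => ⟨hgμ i, by have := hM0 i; simp only [hx0def]; linarith⟩⟩
  have hD'D : D' ⊆ D := fun x hx => ⟨hx.1, fun i => (hx.2 i).1⟩
  have hx0D : x0 ∈ D := hD'D hx0D'
  have hsimpc : IsCompact (simplex Θ) := isCompact_stdSimplex ℝ Θ
  obtain ⟨B, hB⟩ : ∃ B, ∀ q ∈ simplex Θ, V q ≤ B := usc_bddAbove hsimpc hV
  -- SS is bounded above by B
  have hSSbdd : BddAbove SS := by
    refine ⟨B, fun y hy => ?_⟩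
    obtain ⟨n, z, lam, hz, hl0, hl1, _, hyv⟩ := hy
    rw [hyv]
    calc ∑ i, lam i * V (z i).1 ≤ ∑ i, lam i * B := by
          refine Finset.sum_le_sum fun i _ => ?_
          exact mul_le_mul_of_nonneg_left (hB _ (hz i).1) (hl0 i)
      _ = B := by rw [← Finset.sum_mul, hl1, one_mul]
  -- SS equals its capped variant
  have hSS' : ∀ y ∈ SS, ∃ (n : ℕ) (z : Fin n → (Θ → ℝ) × (ι → ℝ)) (lam : Fin n → ℝ),
      (∀ i, z i ∈ D') ∧ (∀ i, 0 ≤ lam i) ∧ (∑ i, lam i) = 1 ∧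
      (∑ i, lam i • z i) = x0 ∧ y = ∑ i, lam i * V (z i).1 := by
    intro y hy
    obtain ⟨n, z, lam, hz, hl0, hl1, hbc, hyv⟩ := hy
    have hsnd : ∀ i, ∑ j, lam j * (z j).2 i = δ := by
      intro i
      have h1 := congrArg Prod.snd hbc
      rw [snd_sum'] at h1
      have h2 := congrArg (fun f => f i) h1
      simpa [Finset.sum_apply] using h2
    have hfst2 : ∑ j, lam j • (z j).1 = μ := by
      have h1 := congrArg Prod.fst hbc
      rw [fst_sum'] at h1
      simpa using h1
    have hglam : ∀ i, ∑ j, lam j * g i ((z j).1) ≤ δ := by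
      intro i
      rw [← hsnd i]
      exact Finset.sum_le_sum fun j _ => mul_le_mul_of_nonneg_left ((hz j).2 i) (hl0 j)
    have hglam0 : ∀ i, 0 ≤ ∑ j, lam j * g i ((z j).1) :=
      fun i => Finset.sum_nonneg fun j _ => mul_nonneg (hl0 j) (hg0 i _)
    refine ⟨n, fun j => ((z j).1,
        fun i => g i ((z j).1) + (δ - ∑ j', lam j' * g i ((z j').1))),
      lam, ?_, hl0, hl1, ?_, ?_⟩
    · intro j
      refine ⟨(hz j).1, fun i => ⟨by have := hglam i; dsimp only; linarith, ?_⟩⟩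
      have h1 : g i ((z j).1) ≤ M i := hgbd i _ (hz j).1
      have h2 := hglam0 i
      dsimp only
      linarith
    · apply Prod.ext
      · rw [fst_sum']
        simpa using hfst2
      · rw [snd_sum']
        funext i
        have hx2 : x0.2 i = δ := rfl
        rw [hx2]
        simp only [Prod.smul_snd, Finset.sum_apply, Pi.smul_apply, smul_eq_mul]
        have hexp : ∀ j : Fin n, lam j * (g i ((z j).1) + (δ - ∑ j', lam j' * g i ((z j').1)))
            = lam j * g i ((z j).1) + lam j * (δ - ∑ j', lam j' * g i ((z j').1)) :=
          fun j => mul_add _ _ _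
        rw [Finset.sum_congr rfl fun j _ => hexp j, Finset.sum_add_distrib,
          ← Finset.sum_mul, hl1, one_mul]
        ring
    · rw [hyv]
  have hSS'mem : ∀ (n : ℕ) (z : Fin n → (Θ → ℝ) × (ι → ℝ)) (lam : Fin n → ℝ),
      (∀ i, z i ∈ D') → (∀ i, 0 ≤ lam i) → (∑ i, lam i) = 1 →
      (∑ i, lam i • z i) = x0 → (∑ i, lam i * V (z i).1) ∈ SS := by
    intro n z lam hz hl0 hl1 hbc
    exact ⟨n, z, lam, fun i => hD'D (hz i), hl0, hl1, hbc, rfl⟩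
  -- the compact search space
  set N : ℕ := Fintype.card Θ + Fintype.card ι + 1 with hNdef
  set P : Set ((Fin N → ℝ) × (Fin N → (Θ → ℝ) × (ι → ℝ))) :=
    {p | (∀ j, 0 ≤ p.1 j) ∧ (∑ j, p.1 j) = 1 ∧ (∀ j, p.2 j ∈ D') ∧
      (∑ j, p.1 j • p.2 j) = x0} with hPdef
  set H : ((Fin N → ℝ) × (Fin N → (Θ → ℝ) × (ι → ℝ))) → ℝ :=
    fun p => ∑ j, p.1 j * V ((p.2 j).1) with hHdef
  have hD'cl : IsClosed D' := by
    have h1 : D' = (Prod.fst ⁻¹' simplex Θ) ∩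
        ⋂ i, ({x : (Θ → ℝ) × (ι → ℝ) | g i x.1 ≤ x.2 i} ∩ {x | x.2 i ≤ M i + δ}) := by
      ext x
      simp only [hD'def, Set.mem_setOf_eq, Set.mem_inter_iff, Set.mem_preimage,
        Set.mem_iInter]
    rw [h1]
    refine IsClosed.inter (IsClosed.preimage continuous_fst (isClosed_stdSimplex ℝ Θ)) ?_
    refine isClosed_iInter fun i => IsClosed.inter ?_ ?_
    · exact isClosed_le ((hgc i).comp continuous_fst) ((continuous_apply i).comp continuous_snd)
    · exact isClosed_le ((continuous_apply i).comp continuous_snd) continuous_const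
  have hD'cp : IsCompact D' := by
    have hcp : IsCompact ((simplex Θ) ×ˢ (Set.Icc (0 : ι → ℝ) (fun i => M i + δ))) :=
      (isCompact_stdSimplex ℝ Θ).prod
        (isCompact_Icc (a := (0 : ι → ℝ)) (b := fun i => M i + δ))
    have hsub : D' ⊆ (simplex Θ) ×ˢ (Set.Icc (0 : ι → ℝ) (fun i => M i + δ)) := by
      intro x hx
      refine Set.mem_prod.mpr ⟨hx.1, Set.mem_Icc.mpr ⟨?_, ?_⟩⟩
      · intro i
        exact le_trans (hg0 i _) (hx.2 i).1
      · intro i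
        exact (hx.2 i).2
    exact IsCompact.of_isClosed_subset hcp hD'cl hsub
  have hPcp : IsCompact P := by
    have hBst : IsCompact ((stdSimplex ℝ (Fin N)) ×ˢ (Set.univ.pi fun _ : Fin N => D')) :=
      (isCompact_stdSimplex ℝ (Fin N)).prod (isCompact_univ_pi fun _ => hD'cp)
    have hclosed : IsClosed {p : (Fin N → ℝ) × (Fin N → (Θ → ℝ) × (ι → ℝ)) |
        (∑ j, p.1 j • p.2 j) = x0} := by
      apply isClosed_eq ?_ continuous_const
      exact continuous_finset_sum _ fun j _ =>
        ((continuous_apply j).comp continuous_fst).smul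
          ((continuous_apply j).comp continuous_snd)
    have hPeq : P = ((stdSimplex ℝ (Fin N)) ×ˢ (Set.univ.pi fun _ : Fin N => D')) ∩
        {p | (∑ j, p.1 j • p.2 j) = x0} := by
      ext p
      simp only [hPdef, Set.mem_inter_iff, Set.mem_prod, Set.mem_pi, Set.mem_univ,
        true_implies, Set.mem_setOf_eq, stdSimplex]
      tauto
    rw [hPeq]
    exact hBst.inter_right hclosed
  have hPne : P.Nonempty := by
    refine ⟨((fun j => if j = ⟨0, by omega⟩ then 1 else 0), fun _ => x0),
      ?_, ?_, fun j => hx0D', ?_⟩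
    · intro j
      dsimp only
      split_ifs <;> norm_num
    · show (∑ j : Fin N, if j = ⟨0, by omega⟩ then (1:ℝ) else 0) = 1
      rw [Finset.sum_ite_eq']
      simp
    · show (∑ j : Fin N, (if j = ⟨0, by omega⟩ then (1:ℝ) else 0) • x0) = x0
      rw [← Finset.sum_smul, Finset.sum_ite_eq']
      simp
  have hHusc : UpperSemicontinuousOn H P := by
    intro p hp
    have hrw : UpperSemicontinuousWithinAt (fun q : (Fin N → ℝ) × (Fin N → (Θ → ℝ) × (ι → ℝ)) =>
        ∑ j : Fin N, q.1 j * V ((q.2 j).1)) P p := by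
      apply upperSemicontinuousWithinAt_sum
        (f := fun (j : Fin N) (q : (Fin N → ℝ) × (Fin N → (Θ → ℝ) × (ι → ℝ))) =>
          q.1 j * V ((q.2 j).1))
      intro j _
      apply usc_mul_cwa
      · exact ((continuous_apply j).comp continuous_fst).continuousWithinAt
      · exact usc_comp_cwa (f := V) (s := simplex Θ)
          (g := fun q : (Fin N → ℝ) × (Fin N → (Θ → ℝ) × (ι → ℝ)) => (q.2 j).1)
          (hV _ (hp.2.2.1 j).1)
          (continuous_fst.comp ((continuous_apply j).comp continuous_snd))
          (fun q hq => (hq.2.2.1 j).1)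
      · intro q hq
        exact hq.1 j
      · exact hp
    exact hrw
  obtain ⟨pm, hpmP, hpmmax⟩ := usc_exists_max hPcp hPne hHusc
  set ys : ℝ := H pm with hysdef
  have hysSS : ys ∈ SS :=
    hSS'mem N pm.2 pm.1 hpmP.2.2.1 hpmP.1 hpmP.2.1 hpmP.2.2.2
  -- every element of SS is at most ys
  have hSSle : ∀ y ∈ SS, y ≤ ys := by
    intro y hy
    obtain ⟨n1, z1, lam1, hz1, hl01, hl11, hbc1, hyv1⟩ := hSS' y hy
    obtain ⟨n2, hn2le, z2, lam2, hz2, hl02, hl12, hbc2, hyv2, -⟩ :=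
      cara_step V D' (fun x hx => hx.1) x0 y n1 z1 lam1 hz1 hl01 hl11 hbc1 hyv1
    have hn2N : n2 ≤ N := by omega
    have hps : ∀ j : Fin N,
        (if h : (j : ℕ) < n2 then lam2 ⟨j, h⟩ else 0) •
          (if h : (j : ℕ) < n2 then z2 ⟨j, h⟩ else x0)
        = (if h : (j : ℕ) < n2 then lam2 ⟨j, h⟩ • z2 ⟨j, h⟩ else 0) := by
      intro j
      by_cases h : (j : ℕ) < n2
      · simp [h]
      · simp [h]
    have hpv : ∀ j : Fin N,
        (if h : (j : ℕ) < n2 then lam2 ⟨j, h⟩ else 0) *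
          V ((if h : (j : ℕ) < n2 then z2 ⟨j, h⟩ else x0)).1
        = (if h : (j : ℕ) < n2 then lam2 ⟨j, h⟩ * V ((z2 ⟨j, h⟩).1) else 0) := by
      intro j
      by_cases h : (j : ℕ) < n2
      · simp [h]
      · simp [h]
    have hmem : ((fun j : Fin N => if h : (j : ℕ) < n2 then lam2 ⟨j, h⟩ else 0),
        (fun j : Fin N => if h : (j : ℕ) < n2 then z2 ⟨j, h⟩ else x0)) ∈ P := by
      refine ⟨?_, ?_, ?_, ?_⟩
      · intro j
        dsimp only
        split_ifs with h
        · exact hl02 _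
        · exact le_rfl
      · show (∑ j : Fin N, if h : (j : ℕ) < n2 then lam2 ⟨j, h⟩ else 0) = 1
        rw [pad_sum hn2N lam2]
        exact hl12
      · intro j
        dsimp only
        split_ifs with h
        · exact hz2 _
        · exact hx0D'
      · show (∑ j : Fin N, (if h : (j : ℕ) < n2 then lam2 ⟨j, h⟩ else 0) •
            (if h : (j : ℕ) < n2 then z2 ⟨j, h⟩ else x0)) = x0
        rw [Finset.sum_congr rfl fun j _ => hps j,
          pad_sum hn2N (fun j => lam2 j • z2 j)]
        exact hbc2
    have hHval : H ((fun j : Fin N => if h : (j : ℕ) < n2 then lam2 ⟨j, h⟩ else 0),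
        (fun j : Fin N => if h : (j : ℕ) < n2 then z2 ⟨j, h⟩ else x0)) = y := by
      show (∑ j : Fin N, (if h : (j : ℕ) < n2 then lam2 ⟨j, h⟩ else 0) *
          V ((if h : (j : ℕ) < n2 then z2 ⟨j, h⟩ else x0)).1) = y
      rw [Finset.sum_congr rfl fun j _ => hpv j,
        pad_sum hn2N (fun j => lam2 j * V ((z2 j).1))]
      exact hyv2.symm
    calc y = _ := hHval.symm
      _ ≤ ys := hpmmax _ hmem
  have hsup : sSup SS = ys := le_antisymm (csSup_le ⟨ys, hysSS⟩ hSSle) (le_csSup hSSbdd hysSS)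
  -- apply cara_step at the optimum
  obtain ⟨n, z, lam, hzD', hl0, hl1, hbc, hyv⟩ := hSS' ys hysSS
  obtain ⟨n', hn'le, z', lam', hz'D', hl0', hl1', hbc', hyv', hpert⟩ :=
    cara_step V D' (fun x hx => hx.1) x0 ys n z lam hzD' hl0 hl1 hbc hyv
  have hn'small : n' ≤ Fintype.card Θ + Fintype.card ι := by
    rcases Nat.lt_or_ge n' (Fintype.card Θ + Fintype.card ι + 1) with h | h
    · omega
    · exfalso
      have hn'eq : n' = Fintype.card Θ + Fintype.card ι + 1 := le_antisymm hn'le h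
      obtain ⟨η, hηpos, lam'', hl0'', hl1'', hbc'', hyv''⟩ := hpert hn'eq
      have : ys + η ∈ SS := by
        rw [hyv'']
        exact hSS'mem n' z' lam'' hz'D' hl0'' hl1'' hbc''
      have := hSSle _ this
      linarith
  -- build the final scheme
  set τ : (Θ → ℝ) →₀ ℝ := ∑ j, Finsupp.single ((z' j).1) (lam' j) with hτdef
  have happ : ∀ q, τ q = ∑ j, if ((z' j).1 = q) then lam' j else 0 := by
    intro q
    rw [hτdef, Finsupp.finset_sum_apply]
    exact Finset.sum_congr rfl fun j _ => Finsupp.single_apply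
  have hτ0 : ∀ q, 0 ≤ τ q := by
    intro q
    rw [happ]
    refine Finset.sum_nonneg fun j _ => ?_
    split_ifs
    · exact hl0' j
    · exact le_rfl
  have hsupp_im : ∀ q ∈ τ.support, ∃ j, (z' j).1 = q := by
    intro q hq
    have hne := Finsupp.mem_support_iff.mp hq
    rw [happ] at hne
    obtain ⟨j, _, hj⟩ := Finset.exists_ne_zero_of_sum_ne_zero hne
    refine ⟨j, ?_⟩
    by_contra h
    simp [h] at hj
  have hsupp_pos : ∀ q ∈ τ.support, 0 < τ q ∧ q ∈ simplex Θ := by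
    intro q hq
    constructor
    · exact lt_of_le_of_ne (hτ0 q) (Ne.symm (Finsupp.mem_support_iff.mp hq))
    · obtain ⟨j, hj⟩ := hsupp_im q hq
      rw [← hj]
      exact (hz'D' j).1
  have hw1 : (∑ q ∈ τ.support, τ q) = 1 := by
    have hres := resum lam' (fun j => (z' j).1) (fun _ => (1:ℝ))
    rw [← hτdef] at hres
    simp only [smul_eq_mul, mul_one] at hres
    rw [hres]
    exact hl1'
  have hbary : (∑ q ∈ τ.support, τ q • q) = μ := by
    have hres := resum lam' (fun j => (z' j).1) (fun q => q)
    rw [← hτdef] at hres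
    rw [hres]
    have h1 := congrArg Prod.fst hbc'
    rw [fst_sum'] at h1
    simpa using h1
  have hsndτ : ∀ i, ∑ j, lam' j * (z' j).2 i = δ := by
    intro i
    have h1 := congrArg Prod.snd hbc'
    rw [snd_sum'] at h1
    have h2 := congrArg (fun f => f i) h1
    simpa [Finset.sum_apply] using h2
  have hcon : ∀ i, (∑ q ∈ τ.support, τ q * g i q) ≤ δ := by
    intro i
    have hres := resum lam' (fun j => (z' j).1) (fun q => g i q)
    rw [← hτdef] at hres
    simp only [smul_eq_mul] at hres
    rw [hres]
    calc ∑ j, lam' j * g i ((z' j).1) ≤ ∑ j, lam' j * (z' j).2 i :=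
          Finset.sum_le_sum fun j _ =>
            mul_le_mul_of_nonneg_left ((hz'D' j).2 i).1 (hl0' j)
      _ = δ := hsndτ i
  have hcard : τ.support.card ≤ Fintype.card Θ + Fintype.card ι := by
    have h1 : τ.support ⊆ Finset.image (fun j => (z' j).1) Finset.univ := by
      intro q hq
      obtain ⟨j, hj⟩ := hsupp_im q hq
      exact Finset.mem_image.mpr ⟨j, Finset.mem_univ j, hj⟩
    calc τ.support.card ≤ (Finset.image (fun j => (z' j).1) Finset.univ).card :=
          Finset.card_le_card h1
      _ ≤ (Finset.univ : Finset (Fin n')).card := Finset.card_image_le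
      _ = n' := by simp
      _ ≤ _ := hn'small
  have hvalτ : schemeValue V τ = ys := by
    rw [schemeValue]
    have hres := resum lam' (fun j => (z' j).1) (fun q => V q)
    rw [← hτdef] at hres
    simp only [smul_eq_mul] at hres
    rw [hres]
    exact hyv'.symm
  have hfeas : ∀ τ2 : (Θ → ℝ) →₀ ℝ,
      (IsScheme μ τ2 ∧ ∀ i, (∑ q ∈ τ2.support, τ2 q * g i q) ≤ δ) →
      schemeValue V τ2 ∈ SS := by
    rintro τ2 ⟨⟨hmem2, hsum2, hbar2⟩, hcon2⟩
    set n1 := τ2.support.card with hn1def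
    set e : Fin n1 ≃ τ2.support := τ2.support.equivFin.symm with hedef
    have htransR : ∀ F : (Θ → ℝ) → ℝ,
        ∑ j : Fin n1, F ((e j : Θ → ℝ)) = ∑ q ∈ τ2.support, F q := by
      intro F
      rw [Equiv.sum_comp e (fun x : τ2.support => F (x : Θ → ℝ))]
      exact Finset.sum_coe_sort τ2.support F
    have htransV : ∀ F : (Θ → ℝ) → (Θ → ℝ),
        ∑ j : Fin n1, F ((e j : Θ → ℝ)) = ∑ q ∈ τ2.support, F q := by
      intro F
      rw [Equiv.sum_comp e (fun x : τ2.support => F (x : Θ → ℝ))]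
      exact Finset.sum_coe_sort τ2.support F
    refine ⟨n1, fun j => (((e j : Θ → ℝ)),
        fun i => g i (e j : Θ → ℝ) + (δ - ∑ q ∈ τ2.support, τ2 q * g i q)),
      fun j => τ2 (e j : Θ → ℝ), ?_, ?_, ?_, ?_, ?_⟩
    · intro j
      refine ⟨(hmem2 _ (e j).2).2, fun i => ?_⟩
      have h1 : 0 ≤ δ - ∑ q ∈ τ2.support, τ2 q * g i q := by
        have := hcon2 i
        linarith
      dsimp only
      linarith
    · exact fun j => (hmem2 _ (e j).2).1.le
    · exact Eq.trans (htransR (fun q => τ2 q)) hsum2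
    · apply Prod.ext
      · rw [fst_sum']
        have h1 : ∀ j : Fin n1,
            ((fun j => τ2 (e j : Θ → ℝ)) j • ((fun j => (((e j : Θ → ℝ)),
              fun i => g i (e j : Θ → ℝ) + (δ - ∑ q ∈ τ2.support, τ2 q * g i q))) j)).1
            = τ2 (e j : Θ → ℝ) • (e j : Θ → ℝ) := fun j => rfl
        rw [Finset.sum_congr rfl fun j _ => h1 j,
          htransV (fun q => τ2 q • q)]
        exact hbar2
      · rw [snd_sum']
        funext i
        have hx2 : x0.2 i = δ := rfl
        rw [hx2]
        simp only [Prod.smul_snd, Finset.sum_apply, Pi.smul_apply, smul_eq_mul]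
        have h1 : ∀ j : Fin n1,
            τ2 (e j : Θ → ℝ) * (g i (e j : Θ → ℝ) + (δ - ∑ q ∈ τ2.support, τ2 q * g i q))
            = τ2 (e j : Θ → ℝ) * g i (e j : Θ → ℝ)
              + τ2 (e j : Θ → ℝ) * (δ - ∑ q ∈ τ2.support, τ2 q * g i q) :=
          fun j => mul_add _ _ _
        rw [Finset.sum_congr rfl fun j _ => h1 j, Finset.sum_add_distrib,
          htransR (fun q => τ2 q * g i q), ← Finset.sum_mul,
          htransR (fun q => τ2 q), hsum2, one_mul]
        ring
    · rw [schemeValue, ← htransR (fun q => τ2 q * V q)]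
  refine ⟨τ, ⟨⟨hsupp_pos, hw1, hbary⟩, hcon⟩, hcard, ?_, ?_⟩
  · intro τ2 h2
    have := le_csSup hSSbdd (hfeas τ2 h2)
    rw [hsup] at this
    rw [hvalτ]
    exact this
  · rw [hvalτ, hgoalchull, hsup]

/-- Theorem 4.6 (characterization for `(ε,δ)`-differential privacy): there is an
`(ε,δ)`-feasible optimal scheme with support of size at most `k + m`, and its value is
the concave hull, at `(μ, δ·𝟙_m)`, of the modified function `V^g(q,γ) = V(q)` on
`{(q,γ) : g_{(θ,θ′)}(q) ≤ γ_{(θ,θ′)} ∀(θ,θ′) ∈ A}` (and `−∞` off this region). -/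
theorem stmt13 {Θ : Type*} [Fintype Θ]
    (μ : Θ → ℝ) (hμpos : ∀ θ, 0 < μ θ) (hμsum : ∑ θ, μ θ = 1)
    (A : Finset (Θ × Θ)) (ε δ : ℝ) (hε : 0 < ε) (hδ : 0 < δ)
    (V : (Θ → ℝ) → ℝ) (hV : UpperSemicontinuousOn V (simplex Θ)) :
    ∃ τ : (Θ → ℝ) →₀ ℝ,
      (IsScheme μ τ ∧ ∀ p ∈ A, (∑ q ∈ τ.support, τ q * gDP μ ε p q) ≤ δ) ∧
      τ.support.card ≤ Fintype.card Θ + A.card ∧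
      (∀ τ' : (Θ → ℝ) →₀ ℝ,
        (IsScheme μ τ' ∧ ∀ p ∈ A, (∑ q ∈ τ'.support, τ' q * gDP μ ε p q) ≤ δ) →
        schemeValue V τ' ≤ schemeValue V τ) ∧
      schemeValue V τ =
        concaveHullOn (fun x : (Θ → ℝ) × ({p // p ∈ A} → ℝ) => V x.1)
          {x : (Θ → ℝ) × ({p // p ∈ A} → ℝ) | x.1 ∈ simplex Θ ∧
            ∀ p : {p // p ∈ A}, gDP μ ε p.1 x.1 ≤ x.2 p}
          (μ, fun _ => δ) := by
  classical
  have hgc : ∀ i : {p // p ∈ A}, Continuous (gDP μ ε i.1) := by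
    intro i
    unfold gDP
    exact continuous_const.max (by fun_prop)
  have hg0 : ∀ (i : {p // p ∈ A}) (q : Θ → ℝ), 0 ≤ gDP μ ε i.1 q :=
    fun i q => le_max_left _ _
  have hgbd : ∀ i : {p // p ∈ A}, ∀ q ∈ simplex Θ, gDP μ ε i.1 q ≤ (μ i.1.1)⁻¹ := by
    intro i q hq
    have hμ1 : 0 < μ i.1.1 := hμpos _
    have hq1 : q i.1.1 ≤ 1 := by
      rw [← hq.2]
      exact Finset.single_le_sum (fun θ _ => hq.1 θ) (Finset.mem_univ i.1.1)
    have h2 : 0 ≤ Real.exp ε * (q i.1.2 / μ i.1.2) :=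
      mul_nonneg (Real.exp_nonneg ε) (div_nonneg (hq.1 _) (hμpos _).le)
    have h3 : q i.1.1 / μ i.1.1 ≤ (μ i.1.1)⁻¹ := by
      rw [← one_div, div_le_div_iff₀ hμ1 hμ1] at *
      nlinarith
    refine max_le (by positivity) (by unfold gDP at *; linarith)
  have hgμ : ∀ i : {p // p ∈ A}, gDP μ ε i.1 μ ≤ δ := by
    intro i
    unfold gDP
    rw [div_self (hμpos i.1.1).ne', div_self (hμpos i.1.2).ne', mul_one]
    have h1 : 1 ≤ Real.exp ε := Real.one_le_exp hε.le
    have : max 0 (1 - Real.exp ε) = 0 := max_eq_left (by linarith)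
    rw [this]
    exact hδ.le
  obtain ⟨τ, ⟨hsch, hcon⟩, hcard, hopt, hval⟩ :=
    aux_main μ hμpos hμsum (fun i : {p // p ∈ A} => gDP μ ε i.1) hgc hg0
      (fun i => (μ i.1.1)⁻¹) hgbd δ hδ hgμ V hV
  refine ⟨τ, ⟨hsch, fun p hp => hcon ⟨p, hp⟩⟩, ?_, ?_, ?_⟩
  · rwa [Fintype.card_coe] at hcard
  · intro τ' ⟨h1, h2⟩
    exact hopt τ' ⟨h1, fun i => h2 i.1 i.2⟩
  · exact hval
end

section
/- Projection preserves differential privacy (key step of Lemma 5.2): Let Θ = {0,1}^n, let μ be a prior on Θ with μ(θ) > 0 for all θ that is exchangeable, i.e., μ(θ) depends only on |θ| = Σᵢ θᵢ, let S be a finite signal set, and let π : Θ → Δ(S) satisfy (ε,δ)-differential privacy: Σ_{s∈W} π(s|θ) ≤ e^ε Σ_{s∈W} π(s|θ′) + δ for every W ⊆ S and every pair θ, θ′ ∈ Θ differing in exactly one coordinate. Define μ̄(ω) = Σ_{θ : |θ| = ω} μ(θ) and the projected scheme π′(s|ω) = (1/μ̄(ω)) Σ_{θ : |θ| = ω} π(s|θ)μ(θ)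 for ω ∈ {0,1,…,n}. Then for every W ⊆ S and every ω ∈ {0,1,…,n−1}, both Σ_{s∈W} π′(s|ω) ≤ e^ε Σ_{s∈W} π′(s|ω+1) + δ and Σ_{s∈W} π′(s|ω+1) ≤ e^ε Σ_{s∈W} π′(s|ω) + δ hold. -/
/-- The number of ones `|θ|` in a database state `θ ∈ {0,1}^n`. -/
def cnt {n : ℕ} (θ : Fin n → Bool) : ℕ :=
  (Finset.univ.filter fun i => θ i = true).card

/-- The set of states with exactly `ω` ones. -/
def classSet (n ω : ℕ) : Finset (Fin n → Bool) :=
  Finset.univ.filter fun θ => cnt θ = ω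

/-- Two states are adjacent if they differ in exactly one coordinate. -/
def Adjacent {n : ℕ} (θ θ' : Fin n → Bool) : Prop :=
  ∃ i, θ i ≠ θ' i ∧ ∀ j, j ≠ i → θ j = θ' j

/-- The projected (oblivious) scheme
`π′(s|ω) = (1/μ̄(ω)) Σ_{θ : |θ| = ω} π(s|θ)μ(θ)`, where `μ̄(ω) = Σ_{θ : |θ| = ω} μ(θ)`. -/
noncomputable def projScheme {n : ℕ} {S : Type*} [Fintype S]
    (π : (Fin n → Bool) → S → ℝ) (μ : (Fin n → Bool) → ℝ) (ω : ℕ) (s : S) : ℝ :=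
  (∑ θ ∈ classSet n ω, π θ s * μ θ) / (∑ θ ∈ classSet n ω, μ θ)

open Finset

lemma aux_mem_classSet {n ω : ℕ} {θ : Fin n → Bool} : θ ∈ classSet n ω ↔ cnt θ = ω := by
  simp [classSet]

lemma aux_cnt_update_true {n : ℕ} {θ : Fin n → Bool} {i : Fin n} (h : θ i = false) :
    cnt (Function.update θ i true) = cnt θ + 1 := by
  unfold cnt
  have hset : (univ.filter fun j => Function.update θ i true j = true)
      = insert i (univ.filter fun j => θ j = true) := by
    ext j
    by_cases hj : j = i
    · subst hj; simp
    · simp [Function.update_of_ne hj, hj]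
  rw [hset, card_insert_of_notMem (by simp [h])]

lemma aux_update_true_eq {n : ℕ} {θ : Fin n → Bool} {i : Fin n} (h : θ i = true) :
    Function.update θ i true = θ := by
  conv_lhs => rw [← h]
  exact Function.update_eq_self i θ

lemma aux_update_false_eq {n : ℕ} {θ : Fin n → Bool} {i : Fin n} (h : θ i = false) :
    Function.update θ i false = θ := by
  conv_lhs => rw [← h]
  exact Function.update_eq_self i θ

lemma aux_adj_update {n : ℕ} {θ : Fin n → Bool} {i : Fin n} (h : θ i = false) :
    Adjacent θ (Function.update θ i true) ∧ Adjacent (Function.update θ i true) θ := by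
  constructor
  · exact ⟨i, by simp [h], fun j hj => (Function.update_of_ne hj _ _).symm⟩
  · exact ⟨i, by simp [h], fun j hj => Function.update_of_ne hj _ _⟩

lemma aux_classSet_nonempty {n ω : ℕ} (h : ω ≤ n) : (classSet n ω).Nonempty := by
  refine ⟨fun i => decide ((i : ℕ) < ω), ?_⟩
  rw [aux_mem_classSet]
  unfold cnt
  have h1 : (univ.filter fun i : Fin n => (decide ((i:ℕ) < ω)) = true)
      = univ.filter fun i : Fin n => (i:ℕ) < ω := by
    apply filter_congr; intro i _; simp
  rw [h1, Finset.card_filter, Fin.sum_univ_eq_sum_range (fun k => if k < ω then 1 else 0),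
    ← Finset.card_filter]
  have : (Finset.range n).filter (fun k => k < ω) = Finset.range ω := by
    ext k; simp [Finset.mem_range]; omega
  rw [this, Finset.card_range]

/-- key counting: number of `false` coordinates -/
lemma aux_card_false {n ω : ℕ} {θ : Fin n → Bool} (h : θ ∈ classSet n ω) :
    (univ.filter fun i => θ i = false).card = n - ω := by
  rw [aux_mem_classSet] at h
  have heq : (univ.filter fun i => θ i = false) = univ.filter (fun i => ¬ θ i = true) := by
    apply filter_congr; intro i _; cases θ i <;> simp
  have h2 : (univ.filter fun i => θ i = true).card
      + (univ.filter fun i => θ i = false).card = n := by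
    rw [heq]
    have := Finset.card_filter_add_card_filter_not
      (s := (univ : Finset (Fin n))) (p := fun i => θ i = true)
    simp only [Finset.card_univ, Fintype.card_fin] at this
    exact this
  have h3 : cnt θ = ω := h
  unfold cnt at h3
  omega

section Main

variable {n : ℕ} {S : Type*} [Fintype S]

/-- The reindexing bijection between pairs. -/
lemma aux_reindex {n ω : ℕ} (g : ((Fin n → Bool) × Fin n) → ℝ) :
    ∑ p ∈ ((classSet n ω) ×ˢ univ).filter (fun p => p.1 p.2 = false), g p
      = ∑ p ∈ ((classSet n (ω+1)) ×ˢ univ).filter (fun p => p.1 p.2 = true),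
          g (Function.update p.1 p.2 false, p.2) := by
  apply Finset.sum_nbij' (i := fun p => (Function.update p.1 p.2 true, p.2))
    (j := fun p => (Function.update p.1 p.2 false, p.2))
  · intro p hp
    simp only [Finset.mem_filter, Finset.mem_product, Finset.mem_univ, and_true] at hp ⊢
    obtain ⟨hp1, hp2⟩ := hp
    refine ⟨?_, by simp⟩
    rw [aux_mem_classSet] at hp1 ⊢
    rw [aux_cnt_update_true hp2, hp1]
  · intro p hp
    simp only [Finset.mem_filter, Finset.mem_product, Finset.mem_univ, and_true] at hp ⊢
    obtain ⟨hp1, hp2⟩ := hp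
    refine ⟨?_, by simp⟩
    rw [aux_mem_classSet] at hp1 ⊢
    have : cnt (Function.update (Function.update p.1 p.2 false) p.2 true) = cnt (Function.update p.1 p.2 false) + 1 := aux_cnt_update_true (by simp)
    rw [Function.update_idem, aux_update_true_eq hp2, hp1] at this
    omega
  · intro p hp
    simp only [Finset.mem_filter, Finset.mem_product, Finset.mem_univ, and_true] at hp
    simp [Function.update_idem, aux_update_false_eq hp.2]
  · intro p hp
    simp only [Finset.mem_filter, Finset.mem_product, Finset.mem_univ, and_true] at hp
    simp [Function.update_idem, aux_update_true_eq hp.2]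
  · intro p hp
    simp only [Finset.mem_filter, Finset.mem_product, Finset.mem_univ, and_true] at hp
    simp [Function.update_idem, aux_update_false_eq hp.2]

/-- Sum over the false-pair set of a function of the first coordinate. -/
lemma aux_sum_pairs_false {n ω : ℕ} (g : (Fin n → Bool) → ℝ) :
    ∑ p ∈ ((classSet n ω) ×ˢ univ).filter (fun p => p.1 p.2 = false), g p.1
      = ((n - ω : ℕ) : ℝ) * ∑ θ ∈ classSet n ω, g θ := by
  rw [Finset.sum_filter, Finset.sum_product, Finset.mul_sum]
  apply Finset.sum_congr rfl
  intro θ hθ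
  simp only [Finset.sum_const, nsmul_eq_mul]
  rw [← Finset.sum_filter (fun i => θ i = false) (fun _ => g θ), Finset.sum_const,
    nsmul_eq_mul, aux_card_false hθ]

lemma aux_sum_pairs_true {n ω : ℕ} (g : (Fin n → Bool) → ℝ) :
    ∑ p ∈ ((classSet n (ω+1)) ×ˢ univ).filter (fun p => p.1 p.2 = true), g p.1
      = ((ω + 1 : ℕ) : ℝ) * ∑ θ ∈ classSet n (ω+1), g θ := by
  rw [Finset.sum_filter, Finset.sum_product, Finset.mul_sum]
  apply Finset.sum_congr rfl
  intro θ hθ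
  simp only [Finset.sum_const, nsmul_eq_mul]
  rw [← Finset.sum_filter (fun i => θ i = true) (fun _ => g θ), Finset.sum_const,
    nsmul_eq_mul]
  rw [aux_mem_classSet] at hθ
  unfold cnt at hθ
  rw [hθ]


lemma aux_adj_update' {n : ℕ} {θ : Fin n → Bool} {i : Fin n} (h : θ i = true) :
    Adjacent θ (Function.update θ i false) :=
  ⟨i, by simp [h], fun j hj => (Function.update_of_ne hj _ _).symm⟩

lemma aux_proj_sum {n ω : ℕ} {S : Type*} [Fintype S]
    (π : (Fin n → Bool) → S → ℝ) (μ : (Fin n → Bool) → ℝ) (hμpos : ∀ θ, 0 < μ θ)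
    (hμex : ∀ θ θ', cnt θ = cnt θ' → μ θ = μ θ') (W : Finset S) (h : ω ≤ n) :
    ∑ s ∈ W, projScheme π μ ω s
      = (∑ θ ∈ classSet n ω, ∑ s ∈ W, π θ s) / ((classSet n ω).card : ℝ) := by
  obtain ⟨θ0, hθ0⟩ := aux_classSet_nonempty (n := n) h
  have hc : ∀ θ ∈ classSet n ω, μ θ = μ θ0 := by
    intro θ hθ
    rw [aux_mem_classSet] at hθ hθ0
    exact hμex _ _ (hθ.trans hθ0.symm)
  unfold projScheme
  rw [← Finset.sum_div]
  have hnum : ∑ s ∈ W, ∑ θ ∈ classSet n ω, π θ s * μ θ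
      = (∑ θ ∈ classSet n ω, ∑ s ∈ W, π θ s) * μ θ0 := by
    rw [Finset.sum_comm, Finset.sum_mul]
    apply Finset.sum_congr rfl
    intro θ hθ
    rw [← Finset.sum_mul, hc θ hθ]
  have hden : ∑ θ ∈ classSet n ω, μ θ = ((classSet n ω).card : ℝ) * μ θ0 := by
    rw [Finset.sum_congr rfl hc, Finset.sum_const, nsmul_eq_mul]
  rw [hnum, hden, mul_comm ((classSet n ω).card : ℝ) (μ θ0), mul_comm, mul_div_mul_left]
  exact (hμpos θ0).ne'

end Main

/-- Projection preserves differential privacy (key step of Lemma 5.2): if the prior is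
exchangeable and positive and `π` is `(ε,δ)`-differentially private with respect to
single-bit changes, then the projected scheme `π′` is `(ε,δ)`-differentially private
with respect to adjacent counts `ω, ω+1`. -/
theorem stmt18 {n : ℕ} {S : Type*} [Fintype S] (ε δ : ℝ)
    (μ : (Fin n → Bool) → ℝ) (hμpos : ∀ θ, 0 < μ θ)
    (hμex : ∀ θ θ', cnt θ = cnt θ' → μ θ = μ θ')
    (π : (Fin n → Bool) → S → ℝ)
    (hπ0 : ∀ θ s, 0 ≤ π θ s) (hπ1 : ∀ θ, ∑ s, π θ s = 1)
    (hDP : ∀ W : Finset S, ∀ θ θ', Adjacent θ θ' →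
      (∑ s ∈ W, π θ s) ≤ Real.exp ε * (∑ s ∈ W, π θ' s) + δ) :
    ∀ W : Finset S, ∀ ω : ℕ, ω < n →
      (∑ s ∈ W, projScheme π μ ω s) ≤
          Real.exp ε * (∑ s ∈ W, projScheme π μ (ω + 1) s) + δ ∧
      (∑ s ∈ W, projScheme π μ (ω + 1) s) ≤
          Real.exp ε * (∑ s ∈ W, projScheme π μ ω s) + δ := by
  intro W ω hω
  set F : (Fin n → Bool) → ℝ := fun θ => ∑ s ∈ W, π θ s with hFdef
  set A : ℝ := ∑ θ ∈ classSet n ω, F θ with hAdef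
  set B : ℝ := ∑ θ ∈ classSet n (ω+1), F θ with hBdef
  set a : ℝ := ((classSet n ω).card : ℝ) with hadef
  set b : ℝ := ((classSet n (ω+1)).card : ℝ) with hbdef
  set k : ℝ := ((n - ω : ℕ) : ℝ) with hkdef
  set m : ℝ := ((ω + 1 : ℕ) : ℝ) with hmdef
  set P1 := ((classSet n ω) ×ˢ univ).filter (fun p : (Fin n → Bool) × Fin n => p.1 p.2 = false)
    with hP1def
  set P2 := ((classSet n (ω+1)) ×ˢ univ).filter
    (fun p : (Fin n → Bool) × Fin n => p.1 p.2 = true) with hP2def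
  have hEε : (0:ℝ) < Real.exp ε := Real.exp_pos ε
  have ha : (0:ℝ) < a := by
    have := aux_classSet_nonempty (n := n) (ω := ω) hω.le
    simpa [hadef, Nat.cast_pos, Finset.card_pos] using this
  have hb : (0:ℝ) < b := by
    have := aux_classSet_nonempty (n := n) (ω := ω+1) hω
    simpa [hbdef, Nat.cast_pos, Finset.card_pos] using this
  have hk : (0:ℝ) < k := by
    rw [hkdef]; exact_mod_cast Nat.sub_pos_of_lt hω
  have hm : (0:ℝ) < m := by positivity
  -- the card identity k * a = m * b
  have hka : k * a = m * b := by
    have h1 := aux_sum_pairs_false (n := n) (ω := ω) (fun _ => (1:ℝ))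
    have h2 := aux_sum_pairs_true (n := n) (ω := ω) (fun _ => (1:ℝ))
    have h3 := aux_reindex (n := n) (ω := ω) (fun _ => (1:ℝ))
    simp only [Finset.sum_const, nsmul_eq_mul, mul_one] at h1 h2 h3
    rw [h3, h2] at h1
    rw [← h1]
  -- sums over P1 and P2
  have e1 : ∑ p ∈ P1, F p.1 = k * A := aux_sum_pairs_false F
  have e2 : ∑ p ∈ P1, F (Function.update p.1 p.2 true) = m * B := by
    rw [aux_reindex (fun p => F (Function.update p.1 p.2 true))]
    have : ∀ p ∈ P2, F (Function.update (Function.update p.1 p.2 false, p.2).1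
        (Function.update p.1 p.2 false, p.2).2 true) = F p.1 := by
      intro p hp
      simp only [hP2def, Finset.mem_filter, Finset.mem_product, Finset.mem_univ, and_true] at hp
      simp only [Function.update_idem, aux_update_true_eq hp.2]
    rw [Finset.sum_congr rfl this]
    exact aux_sum_pairs_true F
  have e4 : ∑ p ∈ P2, F (Function.update p.1 p.2 false) = k * A := by
    rw [← aux_reindex (fun p => F p.1)]
    exact e1
  have e3 : ∑ _p ∈ P1, δ = k * (a * δ) := by
    have := aux_sum_pairs_false (n := n) (ω := ω) (fun _ => δ)
    simpa only [Finset.sum_const, nsmul_eq_mul, hadef] using this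
  have e5 : ∑ _p ∈ P2, δ = m * (b * δ) := by
    have := aux_sum_pairs_true (n := n) (ω := ω) (fun _ => δ)
    simpa only [Finset.sum_const, nsmul_eq_mul, hbdef] using this
  -- DP inequalities on pairs
  have ineq1 : k * A ≤ Real.exp ε * (m * B) + k * (a * δ) := by
    rw [← e1, ← e2, ← e3, Finset.mul_sum, ← Finset.sum_add_distrib]
    apply Finset.sum_le_sum
    intro p hp
    simp only [hP1def, Finset.mem_filter, Finset.mem_product, Finset.mem_univ, and_true] at hp
    exact hDP W p.1 (Function.update p.1 p.2 true) (aux_adj_update hp.2).1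
  have ineq2 : m * B ≤ Real.exp ε * (k * A) + m * (b * δ) := by
    rw [← aux_sum_pairs_true F, ← e4, ← e5, Finset.mul_sum, ← Finset.sum_add_distrib]
    apply Finset.sum_le_sum
    intro p hp
    simp only [hP2def, Finset.mem_filter, Finset.mem_product, Finset.mem_univ, and_true] at hp
    exact hDP W p.1 (Function.update p.1 p.2 false) (aux_adj_update' hp.2)
  -- rewrite the projected sums
  rw [aux_proj_sum π μ hμpos hμex W hω.le, aux_proj_sum π μ hμpos hμex W hω]
  constructor
  · rw [div_le_iff₀ ha, ← mul_le_mul_iff_right₀ hk]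
    calc k * A ≤ Real.exp ε * (m * B) + k * (a * δ) := ineq1
      _ = k * ((Real.exp ε * (B / b) + δ) * a) := by
          field_simp
          linear_combination (-(Real.exp ε * B)) * hka
  · rw [div_le_iff₀ hb, ← mul_le_mul_iff_right₀ hm]
    calc m * B ≤ Real.exp ε * (k * A) + m * (b * δ) := ineq2
      _ = m * ((Real.exp ε * (A / a) + δ) * b) := by
          field_simp
          linear_combination (Real.exp ε * A) * hka
end
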